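/- arXiv:1007.0611 — 6 statements merged into one kernel-verified Lean document; each statement's English description precedes it below -/
import Mathlib

section
/- Let a and b be noncrossing matchings of type (n-k,k) such that in the one-manifold aw(b) (formed by reflecting b and gluing it to a) every line segment has one endpoint pointing up and one pointing down. Enumerating the rays of a from left to right as i_1,…,i_{n-2k} and the rays of b as j_1,…,j_{n-2k}, each line segment of aw(b) contains the rays i_t and j_t for some common index t. -/
/-!
Let `C` be the segment of `a w(b)` joining the `a`-ray `i` to the `b`-ray `j`. For a vertex `v`
off `C`, the parity of the number of `a`-arcs of `C` passing over `v`, plus `[i < v]`, tells on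
which side of `C` the vertex `v` lies (a discrete Jordan curve argument). Counting the endpoints of
arcs of `C` left of `v` vertex by vertex (every vertex of `C` has degree two except `i` and `j`)
shows that the same parity is obtained from the `b`-arcs of `C` and `[j < v]`. Arcs of one matching
do not cross and no ray lies under an arc, so the `a`-version is unchanged along `a`-arcs off `C`
and the `b`-version along `b`-arcs; hence every other segment lies wholly on one side of `C`. The
same degree count shows that every ray lies on a segment, so joining rays along segments is an
order-preserving bijection from the rays of `a` to the rays of `b`.
-/

/-- A noncrossing matching of type `(n-k, k)`: `k` pairwise-noncrossing arcs above a
horizontal line of `n` vertices (labelled `1,…,n`); the remaining `n-2k` vertices carry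
rays, and no ray lies beneath an arc (every vertex strictly between the endpoints of an
arc is an endpoint of some arc). -/
structure NCMatching (n k : ℕ) where
  arcs : Finset (ℕ × ℕ)
  card_arcs : arcs.card = k
  mem_range : ∀ p ∈ arcs, 1 ≤ p.1 ∧ p.1 < p.2 ∧ p.2 ≤ n
  endpoints_distinct : ∀ p ∈ arcs, ∀ q ∈ arcs, p ≠ q →
    p.1 ≠ q.1 ∧ p.1 ≠ q.2 ∧ p.2 ≠ q.1 ∧ p.2 ≠ q.2
  noncross : ∀ p ∈ arcs, ∀ q ∈ arcs, ¬ (p.1 < q.1 ∧ q.1 < p.2 ∧ p.2 < q.2)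
  no_ray_under : ∀ p ∈ arcs, ∀ r, p.1 < r → r < p.2 → ∃ q ∈ arcs, r = q.1 ∨ r = q.2

/-- Vertex `i` carries a ray of the matching `m`. -/
def NCMatching.IsRay {n k : ℕ} (m : NCMatching n k) (i : ℕ) : Prop :=
  1 ≤ i ∧ i ≤ n ∧ ∀ p ∈ m.arcs, p.1 ≠ i ∧ p.2 ≠ i

/-- The adjacency relation on vertices coming from the glued one-manifold `a w(b)`:
two vertices are related if an arc of `a` or an arc of (the reflection of) `b` joins them. -/
def glueRel {n k : ℕ} (a b : NCMatching n k) (i j : ℕ) : Prop :=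
  (i, j) ∈ a.arcs ∨ (j, i) ∈ a.arcs ∨ (i, j) ∈ b.arcs ∨ (j, i) ∈ b.arcs

/-- Two vertices lie on the same connected component of `a w(b)`. -/
def Conn {n k : ℕ} (a b : NCMatching n k) : ℕ → ℕ → Prop :=
  Relation.ReflTransGen (glueRel a b)

/-- `b ∈ B_a^{n-k,k}`: every line segment of `a w(b)` has endpoints pointing in opposite
directions, i.e. no component of `a w(b)` contains two distinct rays of `a`, nor two
distinct rays of `b`. -/
def InBa {n k : ℕ} (a b : NCMatching n k) : Prop :=
  (∀ i j, a.IsRay i → a.IsRay j → i ≠ j → ¬ Conn a b i j) ∧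
  (∀ i j, b.IsRay i → b.IsRay j → i ≠ j → ¬ Conn a b i j)

open Finset
open scoped Classical

section ArcSets

noncomputable def arcDegree (E : Finset (ℕ × ℕ)) (u : ℕ) : ZMod 2 :=
  ∑ p ∈ E, ((if p.1 = u then 1 else 0) + if p.2 = u then 1 else 0)

noncomputable def spanParity (E : Finset (ℕ × ℕ)) (C : Set ℕ) (v : ℕ) : ZMod 2 :=
  ∑ p ∈ E with p.1 ∈ C, if p.1 < v ∧ v < p.2 then 1 else 0

noncomputable def sideParity (E : Finset (ℕ × ℕ)) (C : Set ℕ) (r v : ℕ) : ZMod 2 :=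
  spanParity E C v + if r < v then 1 else 0

lemma sum_arcDegree (E : Finset (ℕ × ℕ)) (S : Finset ℕ) :
    ∑ u ∈ S, arcDegree E u =
      ∑ p ∈ E, ((if p.1 ∈ S then 1 else 0) + if p.2 ∈ S then 1 else 0) := by
  simp only [arcDegree]
  rw [Finset.sum_comm]
  exact sum_congr rfl fun p _ => by rw [sum_add_distrib, sum_ite_eq, sum_ite_eq]

lemma spanParity_eq_sum_arcDegree {E : Finset (ℕ × ℕ)} (hE : ∀ p ∈ E, p.1 < p.2)
    {C : Set ℕ} (hC : ∀ p ∈ E, p.1 ∈ C ↔ p.2 ∈ C) {v : ℕ} (hv : v ∉ C) :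
    spanParity E C v = ∑ u ∈ range v with u ∈ C, arcDegree E u := by
  rw [sum_arcDegree, spanParity, sum_filter]
  refine sum_congr rfl fun p hp => ?_
  by_cases h1 : p.1 ∈ C
  · have h2 : p.2 ∈ C := (hC p hp).1 h1
    have : p.1 < p.2 := hE p hp
    have : p.2 ≠ v := fun h => hv (h ▸ h2)
    simp only [mem_filter, mem_range, h1, h2, and_true, if_true]
    split_ifs <;> first | rfl | omega
  · have h2 : p.2 ∉ C := fun h => h1 ((hC p hp).2 h)
    simp [h1, h2]

lemma sum_ite_eq_ite_mem {S : Finset ℕ} {P : ℕ → Prop} [DecidablePred P] {x : ℕ}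
    (h : ∀ u ∈ S, P u ↔ u = x) :
    ∑ u ∈ S, (if P u then 1 else 0 : ZMod 2) = if x ∈ S then 1 else 0 := by
  rw [sum_congr rfl fun u hu => if_congr (h u hu) rfl rfl, sum_ite_eq']

lemma ite_one_zero_inj {P Q : Prop} [Decidable P] [Decidable Q]
    (h : (if P then 1 else 0 : ZMod 2) = if Q then 1 else 0) : P ↔ Q := by
  by_cases hP : P <;> by_cases hQ : Q <;> simp_all

end ArcSets

namespace NCMatching

variable {n k : ℕ}

lemma fst_lt_snd (m : NCMatching n k) {p : ℕ × ℕ} (hp : p ∈ m.arcs) : p.1 < p.2 :=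
  (m.mem_range p hp).2.1

lemma snd_le (m : NCMatching n k) {p : ℕ × ℕ} (hp : p ∈ m.arcs) : p.2 ≤ n :=
  (m.mem_range p hp).2.2

lemma IsRay.not_under_arc {m : NCMatching n k} {r : ℕ} (hr : m.IsRay r) {p : ℕ × ℕ}
    (hp : p ∈ m.arcs) : ¬ (p.1 < r ∧ r < p.2) := by
  rintro ⟨h1, h2⟩
  obtain ⟨q, hq, hrq⟩ := m.no_ray_under p hp r h1 h2
  have := hr.2.2 q hq
  omega

lemma spans_fst_iff_spans_snd (m : NCMatching n k) {p q : ℕ × ℕ} (hp : p ∈ m.arcs)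
    (hq : q ∈ m.arcs) (hpq : p ≠ q) :
    (p.1 < q.1 ∧ q.1 < p.2) ↔ (p.1 < q.2 ∧ q.2 < p.2) := by
  have := m.endpoints_distinct p hp q hq hpq
  have := m.fst_lt_snd hp
  have := m.fst_lt_snd hq
  have := m.noncross p hp q hq
  have := m.noncross q hq p hp
  omega

lemma arcDegree_add_ite_isRay (m : NCMatching n k) (u : ℕ) :
    arcDegree m.arcs u + (if m.IsRay u then 1 else 0) = if 1 ≤ u ∧ u ≤ n then 1 else 0 := by
  by_cases h : ∃ q ∈ m.arcs, q.1 = u ∨ q.2 = u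
  · obtain ⟨q, hq, hqu⟩ := h
    have hq_lt := m.fst_lt_snd hq
    have hdeg : arcDegree m.arcs u = 1 := by
      rw [arcDegree, sum_eq_single q]
      · rcases hqu with rfl | rfl <;> simp <;> omega
      · intro p hp hpq
        have := m.endpoints_distinct p hp q hq hpq
        rw [if_neg (by omega), if_neg (by omega), add_zero]
      · exact fun hq' => absurd hq hq'
    have hnr : ¬ m.IsRay u := fun hr => by have := hr.2.2 q hq; omega
    have := m.mem_range q hq
    rw [hdeg, if_neg hnr, if_pos (by omega), add_zero]
  · push Not at h
    have hdeg : arcDegree m.arcs u = 0 :=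
      sum_eq_zero fun p hp => by simp [(h p hp).1, (h p hp).2]
    rw [hdeg, zero_add]
    exact if_congr ⟨fun hr => ⟨hr.1, hr.2.1⟩, fun hu => ⟨hu.1, hu.2, h⟩⟩ rfl rfl

lemma arcDegree_add_arcDegree {k' : ℕ} (a : NCMatching n k) (b : NCMatching n k') (u : ℕ) :
    arcDegree a.arcs u + arcDegree b.arcs u =
      (if a.IsRay u then 1 else 0) + if b.IsRay u then 1 else 0 := by
  have ha := a.arcDegree_add_ite_isRay u
  have hb := b.arcDegree_add_ite_isRay u
  grind

lemma spanParity_add_spanParity {k' : ℕ} (a : NCMatching n k) (b : NCMatching n k')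
    {C : Set ℕ} (ha : ∀ p ∈ a.arcs, p.1 ∈ C ↔ p.2 ∈ C)
    (hb : ∀ p ∈ b.arcs, p.1 ∈ C ↔ p.2 ∈ C)
    {v : ℕ} (hv : v ∉ C) :
    spanParity a.arcs C v + spanParity b.arcs C v =
      ∑ u ∈ range v with u ∈ C,
        ((if a.IsRay u then 1 else 0) + if b.IsRay u then 1 else 0) := by
  rw [spanParity_eq_sum_arcDegree (fun _ => a.fst_lt_snd) ha hv,
    spanParity_eq_sum_arcDegree (fun _ => b.fst_lt_snd) hb hv, ← sum_add_distrib]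
  exact sum_congr rfl fun u _ => arcDegree_add_arcDegree a b u

lemma sideParity_fst_eq_snd (m : NCMatching n k) {C : Set ℕ} {r : ℕ} (hr : m.IsRay r)
    {q : ℕ × ℕ} (hq : q ∈ m.arcs) (hq1 : q.1 ∉ C) :
    sideParity m.arcs C r q.1 = sideParity m.arcs C r q.2 := by
  unfold sideParity spanParity
  congr 1
  · refine sum_congr rfl fun p hp => ?_
    obtain ⟨hpm, hpC⟩ := mem_filter.1 hp
    exact if_congr (m.spans_fst_iff_spans_snd hpm hq (by rintro rfl; exact hq1 hpC)) rfl rfl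
  · have := hr.not_under_arc hq
    have := hr.2.2 q hq
    have := m.fst_lt_snd hq
    exact if_congr (by omega) rfl rfl

lemma sideParity_of_isRay (m : NCMatching n k) {C : Set ℕ} {r v : ℕ} (hv : m.IsRay v) :
    sideParity m.arcs C r v = if r < v then 1 else 0 := by
  rw [sideParity, spanParity, sum_eq_zero, zero_add]
  exact fun p hp => if_neg (hv.not_under_arc (mem_filter.1 hp).1)

end NCMatching

section Components

variable {n k : ℕ} {a b : NCMatching n k} {u v w : ℕ}

lemma glueRel_symm (h : glueRel a b u v) : glueRel a b v u := by
  unfold glueRel at *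
  tauto

lemma Conn.trans (huv : Conn a b u v) (hvw : Conn a b v w) : Conn a b u w :=
  Relation.ReflTransGen.trans huv hvw

lemma Conn.symm (h : Conn a b u v) : Conn a b v u := by
  induction h with
  | refl => exact .refl
  | tail _ hvw ih => exact Relation.ReflTransGen.head (glueRel_symm hvw) ih

lemma Conn.swap (h : Conn a b u v) : Conn b a u v :=
  Relation.ReflTransGen.mono (fun _ _ h => by unfold glueRel at *; tauto) _ _ h

lemma conn_of_mem_left {p : ℕ × ℕ} (hp : p ∈ a.arcs) : Conn a b p.1 p.2 :=
  .single (Or.inl hp)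

lemma conn_of_mem_right {p : ℕ × ℕ} (hp : p ∈ b.arcs) : Conn a b p.1 p.2 :=
  .single (Or.inr (Or.inr (Or.inl hp)))

def glueComponent (a b : NCMatching n k) (u : ℕ) : Set ℕ := {v | Conn a b u v}

lemma fst_mem_glueComponent_iff_left {p : ℕ × ℕ} (hp : p ∈ a.arcs) :
    p.1 ∈ glueComponent a b u ↔ p.2 ∈ glueComponent a b u :=
  ⟨fun h => Conn.trans h (conn_of_mem_left hp),
    fun h => Conn.trans h (conn_of_mem_left hp).symm⟩

lemma fst_mem_glueComponent_iff_right {p : ℕ × ℕ} (hp : p ∈ b.arcs) :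
    p.1 ∈ glueComponent a b u ↔ p.2 ∈ glueComponent a b u :=
  ⟨fun h => Conn.trans h (conn_of_mem_right hp),
    fun h => Conn.trans h (conn_of_mem_right hp).symm⟩

lemma Conn.le (h : Conn a b u v) (hu : u ≤ n) : v ≤ n := by
  induction h with
  | refl => exact hu
  | tail _ hvw _ =>
    rcases hvw with h | h | h | h
    · exact a.snd_le h
    · exact (a.fst_lt_snd h).le.trans (a.snd_le h)
    · exact b.snd_le h
    · exact (b.fst_lt_snd h).le.trans (b.snd_le h)

lemma InBa.symm (hab : InBa a b) : InBa b a :=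
  ⟨fun i j hi hj hij h => hab.2 i j hi hj hij h.swap,
    fun i j hi hj hij h => hab.1 i j hi hj hij h.swap⟩

lemma InBa.eq_of_conn_left (hab : InBa a b) (hu : a.IsRay u) (hv : a.IsRay v)
    (h : Conn a b u v) : u = v :=
  by_contra fun huv => hab.1 u v hu hv huv h

lemma InBa.eq_of_conn_right (hab : InBa a b) (hu : b.IsRay u) (hv : b.IsRay v)
    (h : Conn a b u v) : u = v :=
  by_contra fun huv => hab.2 u v hu hv huv h

end Components

namespace InBa

variable {n k : ℕ} {a b : NCMatching n k} {i j : ℕ}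

lemma spanParity_add_spanParity (hab : InBa a b) (hi : a.IsRay i) {v : ℕ}
    (hv : v ∉ glueComponent a b i) :
    spanParity a.arcs (glueComponent a b i) v + spanParity b.arcs (glueComponent a b i) v =
      (if i < v then 1 else 0) +
        ∑ u ∈ range v with u ∈ glueComponent a b i, if b.IsRay u then 1 else 0 := by
  have hrays : ∀ u ∈ {u ∈ range v | u ∈ glueComponent a b i}, a.IsRay u ↔ u = i :=
    fun u hu => ⟨fun hu' => (hab.eq_of_conn_left hi hu' (mem_filter.1 hu).2).symm,
      fun h => h ▸ hi⟩
  have hi_mem : i ∈ {u ∈ range v | u ∈ glueComponent a b i} ↔ i < v := by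
    simp only [mem_filter, mem_range]
    exact ⟨And.left, fun h => ⟨h, .refl⟩⟩
  rw [NCMatching.spanParity_add_spanParity a b (fun _ => fst_mem_glueComponent_iff_left)
    (fun _ => fst_mem_glueComponent_iff_right) hv, sum_add_distrib, sum_ite_eq_ite_mem hrays,
    if_congr hi_mem rfl rfl]

lemma exists_partner (hab : InBa a b) (hi : a.IsRay i) : ∃ j, b.IsRay j ∧ Conn a b i j := by
  by_contra! hno
  have hout : n + 1 ∉ glueComponent a b i := fun h => by
    have := Conn.le h hi.2.1
    omega
  have hspan (m : NCMatching n k) : spanParity m.arcs (glueComponent a b i) (n + 1) = 0 :=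
    sum_eq_zero fun p hp => if_neg fun h => by
      have := m.snd_le (mem_filter.1 hp).1
      omega
  have hno_rays : ∀ u ∈ {u ∈ range (n + 1) | u ∈ glueComponent a b i},
      (if b.IsRay u then 1 else 0 : ZMod 2) = 0 :=
    fun u hu => if_neg fun hu' => hno u hu' (mem_filter.1 hu).2
  have hparity := hab.spanParity_add_spanParity hi hout
  rw [hspan, hspan, sum_eq_zero hno_rays, if_pos (by have := hi.2.1; omega)] at hparity
  simp at hparity

lemma sideParity_left_eq_right (hab : InBa a b) (hi : a.IsRay i) (hj : b.IsRay j)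
    (hij : Conn a b i j) {v : ℕ} (hv : v ∉ glueComponent a b i) :
    sideParity a.arcs (glueComponent a b i) i v = sideParity b.arcs (glueComponent a b i) j v := by
  have hrays : ∀ u ∈ {u ∈ range v | u ∈ glueComponent a b i}, b.IsRay u ↔ u = j :=
    fun u hu => ⟨fun hu' =>
      hab.eq_of_conn_right hu' hj (Conn.trans (Conn.symm (mem_filter.1 hu).2) hij),
      fun h => h ▸ hj⟩
  have hj_mem : j ∈ {u ∈ range v | u ∈ glueComponent a b i} ↔ j < v := by
    simp only [mem_filter, mem_range]
    exact ⟨And.left, fun h => ⟨h, hij⟩⟩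
  have hparity := hab.spanParity_add_spanParity hi hv
  rw [sum_ite_eq_ite_mem hrays, if_congr hj_mem rfl rfl] at hparity
  unfold sideParity
  grind

lemma sideParity_eq_of_conn (hab : InBa a b) (hi : a.IsRay i) (hj : b.IsRay j)
    (hij : Conn a b i j) {v w : ℕ} (hvw : Conn a b v w) (hv : v ∉ glueComponent a b i) :
    sideParity a.arcs (glueComponent a b i) i v = sideParity a.arcs (glueComponent a b i) i w := by
  induction hvw with
  | refl => rfl
  | @tail u w hvu huw ih =>
    have hu : u ∉ glueComponent a b i := fun h => hv (Conn.trans h (Conn.symm hvu))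
    have hw : w ∉ glueComponent a b i :=
      fun h => hu (Conn.trans h (Relation.ReflTransGen.single (glueRel_symm huw)))
    rw [ih]
    rcases huw with h | h | h | h
    · exact a.sideParity_fst_eq_snd hi h hu
    · exact (a.sideParity_fst_eq_snd hi h hw).symm
    · rw [hab.sideParity_left_eq_right hi hj hij hu, hab.sideParity_left_eq_right hi hj hij hw]
      exact b.sideParity_fst_eq_snd hj h hu
    · rw [hab.sideParity_left_eq_right hi hj hij hu, hab.sideParity_left_eq_right hi hj hij hw]
      exact (b.sideParity_fst_eq_snd hj h hw).symm

lemma lt_iff_lt_of_not_conn (hab : InBa a b) (hi : a.IsRay i) (hj : b.IsRay j)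
    (hij : Conn a b i j) {i' j' : ℕ} (hi' : a.IsRay i') (hj' : b.IsRay j')
    (hij' : Conn a b i' j') (hii' : ¬ Conn a b i i') : i < i' ↔ j < j' := by
  have hside := hab.sideParity_eq_of_conn hi hj hij hij' hii'
  rw [a.sideParity_of_isRay hi',
    hab.sideParity_left_eq_right hi hj hij fun h => hii' (h.trans hij'.symm),
    b.sideParity_of_isRay hj'] at hside
  exact ite_one_zero_inj hside

lemma le_iff_le (hab : InBa a b) (hi : a.IsRay i) (hj : b.IsRay j) (hij : Conn a b i j)
    {i' j' : ℕ} (hi' : a.IsRay i') (hj' : b.IsRay j') (hij' : Conn a b i' j') :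
    i' ≤ i ↔ j' ≤ j := by
  by_cases hii' : Conn a b i i'
  · obtain rfl := hab.eq_of_conn_left hi hi' hii'
    obtain rfl := hab.eq_of_conn_right hj hj' (hij.symm.trans hij')
    exact ⟨fun _ => le_rfl, fun _ => le_rfl⟩
  · have : i ≠ i' := by rintro rfl; exact hii' .refl
    have : j ≠ j' := by rintro rfl; exact hii' (hij.trans hij'.symm)
    have := hab.lt_iff_lt_of_not_conn hi hj hij hi' hj' hij' hii'
    omega

end InBa

/-- If every line segment of `a w(b)` has endpoints pointing in opposite directions, then
rays glued into the same segment have the same left-to-right index: a ray of `a` at `i`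
and a ray of `b` at `j` lying on the same component satisfy
`#{rays of a ≤ i} = #{rays of b ≤ j}`. -/
theorem ray_indices_match (n k : ℕ) (a b : NCMatching n k) (hab : InBa a b)
    (i j : ℕ) (hi : a.IsRay i) (hj : b.IsRay j) (hconn : Conn a b i j) :
    {v : ℕ | a.IsRay v ∧ v ≤ i}.ncard = {v : ℕ | b.IsRay v ∧ v ≤ j}.ncard := by
  choose! partner hpartner hconn_partner using fun v (hv : a.IsRay v) => hab.exists_partner hv
  refine Set.BijOn.ncard_eq (f := partner) ⟨?_, ?_, ?_⟩
  · rintro v ⟨hv, hvi⟩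
    exact ⟨hpartner v hv,
      (hab.le_iff_le hi hj hconn hv (hpartner v hv) (hconn_partner v hv)).1 hvi⟩
  · rintro v ⟨hv, -⟩ w ⟨hw, -⟩ hvw
    exact hab.eq_of_conn_left hv hw
      ((hconn_partner v hv).trans (hvw ▸ (hconn_partner w hw).symm))
  · rintro w ⟨hw, hwj⟩
    obtain ⟨u, hu, hwu⟩ := hab.symm.exists_partner hw
    have huw : Conn a b u w := hwu.swap.symm
    refine ⟨u, ⟨hu, (hab.le_iff_le hi hj hconn hu hw huw).2 hwj⟩, ?_⟩
    exact hab.eq_of_conn_right (hpartner u hu) hw ((hconn_partner u hu).symm.trans huw)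
end

section
/- Let a, b be noncrossing matchings of type (n-k,k) with b ∈ B_a (every line in aw(b) has endpoints in opposite directions). If a sequence a = a_0, a_1, …, a_m = b with each consecutive pair related by → or ← satisfies |a_i w(b)| = |a_{i+1} w(b)| − 1 for all i, then the sequence has minimal length among all such sequences from a to b; in particular m = |bw(b)| − |aw(b)|. -/
/-- The glue relation transported to `Fin n` (the vertex `i : Fin n` has label `i+1`). -/
def glueRelF {n k : ℕ} (a b : NCMatching n k) (i j : Fin n) : Prop :=
  glueRel a b ((i : ℕ) + 1) ((j : ℕ) + 1)

/-- `comps a b = |a w(b)|`, the number of connected components (circles and line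
segments) of the glued one-manifold `a w(b)`. -/
noncomputable def comps {n k : ℕ} (a b : NCMatching n k) : ℕ :=
  Nat.card (Quot (glueRelF a b))

/-- The elementary move `a → b`: either two unnested arcs `(i,j), (l,m)` of `a` are replaced
by the nested arcs `(i,m), (j,l)` on the same four vertices, or an arc-ray pair
`(i), (j,l)` with `i<j<l` is replaced by `(i,j), (l)`; the matchings agree elsewhere. -/
def Move {n k : ℕ} (a b : NCMatching n k) : Prop :=
  (∃ i j l m : ℕ, i < j ∧ j < l ∧ l < m ∧ (i, j) ∈ a.arcs ∧ (l, m) ∈ a.arcs ∧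
    b.arcs = insert (i, m) (insert (j, l) ((a.arcs.erase (i, j)).erase (l, m)))) ∨
  (∃ i j l : ℕ, i < j ∧ j < l ∧ a.IsRay i ∧ (j, l) ∈ a.arcs ∧
    b.arcs = insert (i, j) (a.arcs.erase (j, l)))

/-- A sequence of matchings in which each consecutive pair is related by `→` or `←`. -/
def IsMoveSeq {n k d : ℕ} (f : Fin (d + 1) → NCMatching n k) : Prop :=
  ∀ i : Fin d, Move (f i.castSucc) (f i.succ) ∨ Move (f i.succ) (f i.castSucc)

/-- The distance `d(a,b)`: the minimal number of moves `→` or `←` needed to go from `a` to `b`. -/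
noncomputable def mdist {n k : ℕ} (a b : NCMatching n k) : ℕ :=
  sInf {d : ℕ | ∃ f : Fin (d + 1) → NCMatching n k,
    f 0 = a ∧ f (Fin.last d) = b ∧ IsMoveSeq f}

section AuxLemmas

open Relation

/-- Decomposition of the equivalence closure of a relation augmented by one pair. -/
lemma eqvGen_pair_cases {α : Type*} {r : α → α → Prop} {p q x y : α}
    (h : EqvGen (fun s t => r s t ∨ (s = p ∧ t = q)) x y) :
    EqvGen r x y ∨
      ((EqvGen r x p ∨ EqvGen r x q) ∧ (EqvGen r y p ∨ EqvGen r y q)) := by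
  induction h with
  | rel s t hst =>
    rcases hst with h | ⟨rfl, rfl⟩
    · exact Or.inl (EqvGen.rel _ _ h)
    · exact Or.inr ⟨Or.inl (EqvGen.refl _), Or.inr (EqvGen.refl _)⟩
  | refl => exact Or.inl (EqvGen.refl _)
  | symm s t _ ih =>
    rcases ih with h | ⟨h1, h2⟩
    · exact Or.inl (EqvGen.symm _ _ h)
    · exact Or.inr ⟨h2, h1⟩
  | trans s t u _ _ ih1 ih2 =>
    rcases ih1 with h1 | ⟨h1a, h1b⟩
    · rcases ih2 with h2 | ⟨h2a, h2b⟩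
      · exact Or.inl (EqvGen.trans _ _ _ h1 h2)
      · refine Or.inr ⟨?_, h2b⟩
        rcases h2a with h | h
        · exact Or.inl (EqvGen.trans _ _ _ h1 h)
        · exact Or.inr (EqvGen.trans _ _ _ h1 h)
    · rcases ih2 with h2 | ⟨h2a, h2b⟩
      · refine Or.inr ⟨h1a, ?_⟩
        rcases h1b with h | h
        · exact Or.inl (EqvGen.trans _ _ _ (EqvGen.symm _ _ h2) h)
        · exact Or.inr (EqvGen.trans _ _ _ (EqvGen.symm _ _ h2) h)
      · exact Or.inr ⟨h1a, h2b⟩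

lemma quotCard_le {α : Type*} [Finite α] {r s : α → α → Prop}
    (h : ∀ x y, r x y → EqvGen s x y) :
    Nat.card (Quot s) ≤ Nat.card (Quot r) := by
  have hφ : ∀ x y, r x y → Quot.mk s x = Quot.mk s y := fun x y hxy =>
    Quot.eqvGen_sound (h x y hxy)
  have hs : Function.Surjective (Quot.lift (Quot.mk s) hφ : Quot r → Quot s) := by
    intro u
    obtain ⟨x, rfl⟩ := Quot.exists_rep u
    exact ⟨Quot.mk r x, rfl⟩
  exact Nat.card_le_card_of_surjective _ hs

lemma quotCard_le_add_one {α : Type*} [Finite α] (r : α → α → Prop) (p q : α) :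
    Nat.card (Quot r) ≤
      Nat.card (Quot (fun x y => r x y ∨ (x = p ∧ y = q))) + 1 := by
  classical
  set r' : α → α → Prop := fun x y => r x y ∨ (x = p ∧ y = q) with hr'
  have hφw : ∀ x y, r x y → Quot.mk r' x = Quot.mk r' y := fun x y hxy =>
    Quot.sound (Or.inl hxy)
  set φ : Quot r → Quot r' := Quot.lift (Quot.mk r') hφw with hφ
  set Q : Quot r := Quot.mk r q with hQ
  have key : ∀ u v : Quot r, u ≠ Q → v ≠ Q → φ u = φ v → u = v := by
    intro u v hu hv huv
    obtain ⟨x, rfl⟩ := Quot.exists_rep u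
    obtain ⟨y, rfl⟩ := Quot.exists_rep v
    have hxy : EqvGen r' x y := Quot.eqvGen_exact huv
    rcases eqvGen_pair_cases hxy with h | ⟨h1, h2⟩
    · exact Quot.eqvGen_sound h
    · have hx : EqvGen r x p := by
        rcases h1 with h | h
        · exact h
        · exact absurd (Quot.eqvGen_sound h) hu
      have hy : EqvGen r y p := by
        rcases h2 with h | h
        · exact h
        · exact absurd (Quot.eqvGen_sound h) hv
      exact Quot.eqvGen_sound (EqvGen.trans _ _ _ hx (EqvGen.symm _ _ hy))
  have hinj : Function.Injective
      (fun u : Quot r => if u = Q then (none : Option (Quot r')) else some (φ u)) := by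
    intro u v huv
    by_cases hu : u = Q <;> by_cases hv : v = Q
    · exact hu.trans hv.symm
    · simp [hu, hv] at huv
    · simp [hu, hv] at huv
    · simp only [hu, hv, if_neg, ite_false, Option.some.injEq] at huv
      exact key u v hu hv huv
  haveI : Finite (Quot r') := Quot.finite r'
  haveI := Fintype.ofFinite (Quot r')
  calc Nat.card (Quot r) ≤ Nat.card (Option (Quot r')) :=
        Nat.card_le_card_of_injective _ hinj
    _ = Nat.card (Quot r') + 1 := Finite.card_option

lemma comps_le_step {n k : ℕ} (x y b : NCMatching n k) (p q : Fin n)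
    (h : ∀ s t : Fin n, glueRelF y b s t →
      EqvGen (fun s t => glueRelF x b s t ∨ (s = p ∧ t = q)) s t) :
    comps x b ≤ comps y b + 1 := by
  unfold comps
  calc Nat.card (Quot (glueRelF x b))
      ≤ Nat.card (Quot (fun s t => glueRelF x b s t ∨ (s = p ∧ t = q))) + 1 :=
        quotCard_le_add_one _ p q
    _ ≤ Nat.card (Quot (glueRelF y b)) + 1 := Nat.add_le_add_right (quotCard_le h) 1

/-- Reduce checking the closure condition to checking it on the arcs of `y` only. -/
lemma glue_to_eqv {n k : ℕ} (x y b : NCMatching n k) (r' : Fin n → Fin n → Prop)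
    (hr : ∀ u v : Fin n, glueRelF x b u v → r' u v)
    (h : ∀ u v : Fin n, ((u : ℕ) + 1, (v : ℕ) + 1) ∈ y.arcs → EqvGen r' u v) :
    ∀ u v : Fin n, glueRelF y b u v → EqvGen r' u v := by
  intro u v huv
  have huv' : ((u : ℕ) + 1, (v : ℕ) + 1) ∈ y.arcs ∨ ((v : ℕ) + 1, (u : ℕ) + 1) ∈ y.arcs ∨
      ((u : ℕ) + 1, (v : ℕ) + 1) ∈ b.arcs ∨ ((v : ℕ) + 1, (u : ℕ) + 1) ∈ b.arcs := huv
  rcases huv' with h1 | h1 | h1 | h1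
  · exact h u v h1
  · exact EqvGen.symm _ _ (h v u h1)
  · exact EqvGen.rel _ _ (hr u v (Or.inr (Or.inr (Or.inl h1))))
  · exact EqvGen.rel _ _ (hr u v (Or.inr (Or.inr (Or.inr h1))))

lemma move_comps {n k : ℕ} {x y : NCMatching n k} (b : NCMatching n k) (hxy : Move x y) :
    comps x b ≤ comps y b + 1 ∧ comps y b ≤ comps x b + 1 := by
  classical
  rcases hxy with ⟨i, j, l, m, hij, hjl, hlm, hm1, hm2, hy⟩ |
    ⟨i, j, l, hij, hjl, hray, hm1, hy⟩
  · -- unnesting move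
    obtain ⟨hi1, _, hjn⟩ := x.mem_range _ hm1
    obtain ⟨hl1, _, hmn⟩ := x.mem_range _ hm2
    have hn : 0 < n := by omega
    set vtx : ℕ → Fin n := fun s => ⟨(s - 1) % n, Nat.mod_lt _ hn⟩ with hvtxdef
    have hvtx : ∀ s : ℕ, 1 ≤ s → s ≤ n → ((vtx s : ℕ) + 1 = s) := by
      intro s h1 h2
      simp only [hvtxdef]
      rw [Nat.mod_eq_of_lt (by omega)]
      omega
    have harc : ∀ (z : NCMatching n k) (s t : ℕ), (s, t) ∈ z.arcs →
        glueRelF z b (vtx s) (vtx t) := by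
      intro z s t hst
      obtain ⟨h1, h2, h3⟩ := z.mem_range _ hst
      show glueRel z b _ _
      rw [hvtx s h1 (by omega), hvtx t (by omega) h3]
      exact Or.inl hst
    have hyim : (i, m) ∈ y.arcs := by rw [hy]; exact Finset.mem_insert_self _ _
    have hyjl : (j, l) ∈ y.arcs := by
      rw [hy]; exact Finset.mem_insert_of_mem (Finset.mem_insert_self _ _)
    rw [and_comm]
    constructor
    · -- comps y ≤ comps x + 1 using pair (vtx i, vtx j)
      refine comps_le_step y x b (vtx i) (vtx j) (glue_to_eqv y x b _ ?_ ?_)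
      · intro u v huv; exact Or.inl huv
      · intro u v huv
        by_cases h1 : ((u : ℕ) + 1, (v : ℕ) + 1) = (i, j)
        · have h1' : (u : ℕ) + 1 = i ∧ (v : ℕ) + 1 = j := Prod.ext_iff.1 h1
          have hu : u = vtx i := Fin.ext (by have := hvtx i hi1 (by omega); omega)
          have hv : v = vtx j := Fin.ext (by have := hvtx j (by omega) hjn; omega)
          exact EqvGen.rel _ _ (Or.inr ⟨hu, hv⟩)
        · by_cases h2 : ((u : ℕ) + 1, (v : ℕ) + 1) = (l, m)
          · have h2' : (u : ℕ) + 1 = l ∧ (v : ℕ) + 1 = m := Prod.mk.injEq .. ▸ h2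
            have hu : u = vtx l := Fin.ext (by have := hvtx l hl1 (by omega); omega)
            have hv : v = vtx m := Fin.ext (by have := hvtx m (by omega) hmn; omega)
            rw [hu, hv]
            have e1 : EqvGen (fun s t => glueRelF y b s t ∨ (s = vtx i ∧ t = vtx j))
                (vtx l) (vtx j) :=
              EqvGen.symm _ _ (EqvGen.rel _ _ (Or.inl (harc y j l hyjl)))
            have e2 : EqvGen (fun s t => glueRelF y b s t ∨ (s = vtx i ∧ t = vtx j))
                (vtx j) (vtx i) :=
              EqvGen.symm _ _ (EqvGen.rel _ _ (Or.inr ⟨rfl, rfl⟩))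
            have e3 : EqvGen (fun s t => glueRelF y b s t ∨ (s = vtx i ∧ t = vtx j))
                (vtx i) (vtx m) :=
              EqvGen.rel _ _ (Or.inl (harc y i m hyim))
            exact EqvGen.trans _ _ _ (EqvGen.trans _ _ _ e1 e2) e3
          · have hmem : ((u : ℕ) + 1, (v : ℕ) + 1) ∈ y.arcs := by
              rw [hy]
              exact Finset.mem_insert_of_mem (Finset.mem_insert_of_mem
                (Finset.mem_erase.2 ⟨h2, Finset.mem_erase.2 ⟨h1, huv⟩⟩))
            exact EqvGen.rel _ _ (Or.inl (Or.inl hmem))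
    · -- comps x ≤ comps y + 1 using pair (vtx i, vtx m)
      refine comps_le_step x y b (vtx i) (vtx m) (glue_to_eqv x y b _ ?_ ?_)
      · intro u v huv; exact Or.inl huv
      · intro u v huv
        rw [hy] at huv
        rcases Finset.mem_insert.1 huv with h1 | huv
        · have h1' : (u : ℕ) + 1 = i ∧ (v : ℕ) + 1 = m := Prod.ext_iff.1 h1
          have hu : u = vtx i := Fin.ext (by have := hvtx i hi1 (by omega); omega)
          have hv : v = vtx m := Fin.ext (by have := hvtx m (by omega) hmn; omega)
          exact EqvGen.rel _ _ (Or.inr ⟨hu, hv⟩)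
        rcases Finset.mem_insert.1 huv with h1 | huv
        · have h1' : (u : ℕ) + 1 = j ∧ (v : ℕ) + 1 = l := Prod.ext_iff.1 h1
          have hu : u = vtx j := Fin.ext (by have := hvtx j (by omega) hjn; omega)
          have hv : v = vtx l := Fin.ext (by have := hvtx l hl1 (by omega); omega)
          rw [hu, hv]
          have e1 : EqvGen (fun s t => glueRelF x b s t ∨ (s = vtx i ∧ t = vtx m))
              (vtx j) (vtx i) :=
            EqvGen.symm _ _ (EqvGen.rel _ _ (Or.inl (harc x i j hm1)))
          have e2 : EqvGen (fun s t => glueRelF x b s t ∨ (s = vtx i ∧ t = vtx m))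
              (vtx i) (vtx m) :=
            EqvGen.rel _ _ (Or.inr ⟨rfl, rfl⟩)
          have e3 : EqvGen (fun s t => glueRelF x b s t ∨ (s = vtx i ∧ t = vtx m))
              (vtx m) (vtx l) :=
            EqvGen.symm _ _ (EqvGen.rel _ _ (Or.inl (harc x l m hm2)))
          exact EqvGen.trans _ _ _ (EqvGen.trans _ _ _ e1 e2) e3
        · have hmem : ((u : ℕ) + 1, (v : ℕ) + 1) ∈ x.arcs :=
            Finset.mem_of_mem_erase (Finset.mem_of_mem_erase huv)
          exact EqvGen.rel _ _ (Or.inl (Or.inl hmem))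
  · -- ray move
    obtain ⟨hi1, hin, _⟩ := hray
    obtain ⟨hj1, _, hln⟩ := x.mem_range _ hm1
    have hn : 0 < n := by omega
    set vtx : ℕ → Fin n := fun s => ⟨(s - 1) % n, Nat.mod_lt _ hn⟩ with hvtxdef
    have hvtx : ∀ s : ℕ, 1 ≤ s → s ≤ n → ((vtx s : ℕ) + 1 = s) := by
      intro s h1 h2
      simp only [hvtxdef]
      rw [Nat.mod_eq_of_lt (by omega)]
      omega
    rw [and_comm]
    constructor
    · -- comps y ≤ comps x + 1 using pair (vtx j, vtx l)
      refine comps_le_step y x b (vtx j) (vtx l) (glue_to_eqv y x b _ ?_ ?_)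
      · intro u v huv; exact Or.inl huv
      · intro u v huv
        by_cases h1 : ((u : ℕ) + 1, (v : ℕ) + 1) = (j, l)
        · have h1' : (u : ℕ) + 1 = j ∧ (v : ℕ) + 1 = l := Prod.ext_iff.1 h1
          have hu : u = vtx j := Fin.ext (by have := hvtx j hj1 (by omega); omega)
          have hv : v = vtx l := Fin.ext (by have := hvtx l (by omega) hln; omega)
          exact EqvGen.rel _ _ (Or.inr ⟨hu, hv⟩)
        · have hmem : ((u : ℕ) + 1, (v : ℕ) + 1) ∈ y.arcs := by
            rw [hy]
            exact Finset.mem_insert_of_mem (Finset.mem_erase.2 ⟨h1, huv⟩)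
          exact EqvGen.rel _ _ (Or.inl (Or.inl hmem))
    · -- comps x ≤ comps y + 1 using pair (vtx i, vtx j)
      refine comps_le_step x y b (vtx i) (vtx j) (glue_to_eqv x y b _ ?_ ?_)
      · intro u v huv; exact Or.inl huv
      · intro u v huv
        rw [hy] at huv
        rcases Finset.mem_insert.1 huv with h1 | huv
        · have h1' : (u : ℕ) + 1 = i ∧ (v : ℕ) + 1 = j := Prod.ext_iff.1 h1
          have hu : u = vtx i := Fin.ext (by have := hvtx i hi1 hin; omega)
          have hv : v = vtx j := Fin.ext (by have := hvtx j hj1 (by omega); omega)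
          exact EqvGen.rel _ _ (Or.inr ⟨hu, hv⟩)
        · have hmem : ((u : ℕ) + 1, (v : ℕ) + 1) ∈ x.arcs := Finset.mem_of_mem_erase huv
          exact EqvGen.rel _ _ (Or.inl (Or.inl hmem))

end AuxLemmas

/-- Let `b ∈ B_a^{n-k,k}`.  A move sequence from `a` to `b` in which every step increases
`|· w(b)|` by exactly one is minimal among all move sequences from `a` to `b`; in
particular its length is `|b w(b)| - |a w(b)|`. -/
theorem increasing_sequence_is_minimal (n k : ℕ) (a b : NCMatching n k) (hab : InBa a b)
    (d : ℕ) (f : Fin (d + 1) → NCMatching n k)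
    (hf0 : f 0 = a) (hfd : f (Fin.last d) = b) (hseq : IsMoveSeq f)
    (hincr : ∀ i : Fin d, comps (f i.castSucc) b + 1 = comps (f i.succ) b) :
    (∀ d' : ℕ, ∀ g : Fin (d' + 1) → NCMatching n k,
      g 0 = a → g (Fin.last d') = b → IsMoveSeq g → d ≤ d') ∧
    d + comps a b = comps b b := by
  have key2 : ∀ (m : ℕ) (hm : m < d + 1), comps (f ⟨m, hm⟩) b = comps a b + m := by
    intro m
    induction m with
    | zero =>
      intro hm
      have h0 : (⟨0, hm⟩ : Fin (d + 1)) = 0 := by ext; simp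
      rw [h0, hf0]; omega
    | succ m ih =>
      intro hm
      have hmd : m < d := by omega
      have h1 := hincr ⟨m, hmd⟩
      have e1 : (Fin.castSucc ⟨m, hmd⟩ : Fin (d + 1)) = ⟨m, by omega⟩ := rfl
      have e2 : (Fin.succ ⟨m, hmd⟩ : Fin (d + 1)) = ⟨m + 1, hm⟩ := rfl
      rw [e1, e2] at h1
      rw [← h1, ih (by omega)]
      omega
  have hdb : comps b b = comps a b + d := by
    have := key2 d (by omega)
    rwa [show (⟨d, by omega⟩ : Fin (d + 1)) = Fin.last d from rfl, hfd] at this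
  constructor
  · intro d' g hg0 hgd hgseq
    have bound : ∀ (m : ℕ) (hm : m < d' + 1),
        comps (g ⟨m, hm⟩) b ≤ comps a b + m := by
      intro m
      induction m with
      | zero =>
        intro hm
        have h0 : (⟨0, hm⟩ : Fin (d' + 1)) = 0 := by ext; simp
        rw [h0, hg0]; omega
      | succ m ih =>
        intro hm
        have hmd : m < d' := by omega
        have e1 : (Fin.castSucc ⟨m, hmd⟩ : Fin (d' + 1)) = ⟨m, by omega⟩ := rfl
        have e2 : (Fin.succ ⟨m, hmd⟩ : Fin (d' + 1)) = ⟨m + 1, hm⟩ := rfl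
        have hstep : comps (g ⟨m + 1, hm⟩) b ≤ comps (g ⟨m, by omega⟩) b + 1 := by
          rcases hgseq ⟨m, hmd⟩ with h | h
          · have := (move_comps b h).2
            rwa [e1, e2] at this
          · have := (move_comps b h).1
            rwa [e1, e2] at this
        have := ih (by omega)
        omega
    have hfin : comps b b ≤ comps a b + d' := by
      have := bound d' (by omega)
      rwa [show (⟨d', by omega⟩ : Fin (d' + 1)) = Fin.last d' from rfl, hgd] at this
    omega
  · omega
end

section
/- The completion map φ from noncrossing matchings of type (n-k,k) to noncrossing matchings of type (n-k,n-k), which adds n-2k new vertices to the left and connects the t-th new vertex from the right to the t-th ray from the left, is a bijection onto the set of noncrossing perfect matchings on 2(n-k) points having no arc with both endpoints among the first n-2k vertices. -/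
/-- The left-to-right index of the ray at vertex `v`: the number of rays at positions `≤ v`. -/
noncomputable def rayIdx {n k : ℕ} (m : NCMatching n k) (v : ℕ) : ℕ :=
  {w : ℕ | m.IsRay w ∧ w ≤ v}.ncard

open Finset Classical

theorem NCMatching.ext' {n k : ℕ} {a b : NCMatching n k} (h : a.arcs = b.arcs) : a = b := by
  cases a; cases b; simp_all

/-- endpoint finset -/
def NCMatching.ends {n k : ℕ} (a : NCMatching n k) : Finset ℕ :=
  a.arcs.biUnion fun p => {p.1, p.2}

lemma mem_ends {n k : ℕ} {a : NCMatching n k} {v : ℕ} :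
    v ∈ a.ends ↔ ∃ p ∈ a.arcs, v = p.1 ∨ v = p.2 := by
  simp [NCMatching.ends]

lemma card_ends {n k : ℕ} (a : NCMatching n k) : a.ends.card = 2 * k := by
  have h2 : ∀ p ∈ a.arcs, ({p.1, p.2} : Finset ℕ).card = 2 := by
    intro p hp
    have := (a.mem_range p hp).2.1
    rw [Finset.card_insert_of_notMem (by simp; omega), Finset.card_singleton]
  rw [NCMatching.ends, Finset.card_biUnion, Finset.sum_congr rfl h2, Finset.sum_const,
    smul_eq_mul, a.card_arcs, mul_comm]
  · intro p hp q hq hpq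
    have h := a.endpoints_distinct p hp q hq hpq
    simp [Finset.disjoint_left]
    omega

lemma ends_subset {n k : ℕ} (a : NCMatching n k) : a.ends ⊆ Finset.Icc 1 n := by
  intro v hv
  rw [mem_ends] at hv
  obtain ⟨p, hp, h⟩ := hv
  have := a.mem_range p hp
  simp only [Finset.mem_Icc]
  omega

/-- finset of rays -/
noncomputable def raysF {n k : ℕ} (a : NCMatching n k) : Finset ℕ :=
  Finset.Icc 1 n \ a.ends

lemma mem_raysF {n k : ℕ} {a : NCMatching n k} {v : ℕ} :
    v ∈ raysF a ↔ a.IsRay v := by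
  simp only [raysF, Finset.mem_sdiff, Finset.mem_Icc, mem_ends, NCMatching.IsRay]
  constructor
  · rintro ⟨⟨h1, h2⟩, h3⟩
    refine ⟨h1, h2, fun p hp => ?_⟩
    constructor <;> (intro h; exact h3 ⟨p, hp, by omega⟩)
  · rintro ⟨h1, h2, h3⟩
    refine ⟨⟨h1, h2⟩, ?_⟩
    rintro ⟨p, hp, h⟩
    have := h3 p hp
    omega

lemma card_raysF {n k : ℕ} (a : NCMatching n k) (hk : 2 * k ≤ n) :
    (raysF a).card = n - 2 * k := by
  rw [raysF, Finset.card_sdiff_of_subset (ends_subset a), card_ends, Nat.card_Icc]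
  omega

lemma rayIdx_eq {n k : ℕ} (a : NCMatching n k) (v : ℕ) :
    rayIdx a v = ((raysF a).filter (· ≤ v)).card := by
  rw [rayIdx, ← Set.ncard_coe_finset]
  congr 1
  ext w
  simp [mem_raysF]

lemma rayIdx_strictMono {n k : ℕ} (a : NCMatching n k) {v w : ℕ}
    (hw : w ∈ raysF a) (hvw : v < w) : rayIdx a v < rayIdx a w := by
  rw [rayIdx_eq, rayIdx_eq]
  apply Finset.card_lt_card
  constructor
  · intro x hx
    simp only [Finset.mem_filter] at hx ⊢
    exact ⟨hx.1, hx.2.trans hvw.le⟩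
  · intro hsub
    have := hsub (Finset.mem_filter.2 ⟨hw, le_refl w⟩)
    simp at this
    omega

lemma rayIdx_pos {n k : ℕ} (a : NCMatching n k) {v : ℕ} (hv : v ∈ raysF a) :
    1 ≤ rayIdx a v := by
  rw [rayIdx_eq]
  have : v ∈ (raysF a).filter (· ≤ v) := Finset.mem_filter.2 ⟨hv, le_refl v⟩
  exact Finset.card_pos.2 ⟨v, this⟩

lemma rayIdx_le {n k : ℕ} (a : NCMatching n k) (hk : 2 * k ≤ n) (v : ℕ) :
    rayIdx a v ≤ n - 2 * k := by
  rw [rayIdx_eq, ← card_raysF a hk]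
  exact Finset.card_filter_le _ _

lemma rayIdx_injOn {n k : ℕ} (a : NCMatching n k) :
    Set.InjOn (rayIdx a) (raysF a) := by
  intro v hv w hw h
  rcases lt_trichotomy v w with h1 | h1 | h1
  · have := rayIdx_strictMono a hw h1; omega
  · exact h1
  · have := rayIdx_strictMono a hv h1; omega

lemma rayIdx_image {n k : ℕ} (a : NCMatching n k) (hk : 2 * k ≤ n) :
    (raysF a).image (rayIdx a) = Finset.Icc 1 (n - 2 * k) := by
  apply Finset.eq_of_subset_of_card_le
  · intro s hs
    simp only [Finset.mem_image] at hs
    obtain ⟨v, hv, rfl⟩ := hs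
    exact Finset.mem_Icc.2 ⟨rayIdx_pos a hv, rayIdx_le a hk v⟩
  · rw [Finset.card_image_of_injOn (rayIdx_injOn a), card_raysF a hk, Nat.card_Icc]
    omega

lemma raysF_bounds {n k : ℕ} {a : NCMatching n k} {v : ℕ} (hv : v ∈ raysF a) :
    1 ≤ v ∧ v ≤ n := by
  have := (mem_raysF.1 hv)
  exact ⟨this.1, this.2.1⟩

lemma raysF_ne {n k : ℕ} {a : NCMatching n k} {v : ℕ} (hv : v ∈ raysF a)
    {p : ℕ × ℕ} (hp : p ∈ a.arcs) : p.1 ≠ v ∧ p.2 ≠ v :=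
  (mem_raysF.1 hv).2.2 p hp

noncomputable def phiArcs {n k : ℕ} (a : NCMatching n k) : Finset (ℕ × ℕ) :=
  a.arcs.image (fun p => (p.1 + (n - 2 * k), p.2 + (n - 2 * k))) ∪
  (raysF a).image (fun v => (n - 2 * k - rayIdx a v + 1, v + (n - 2 * k)))

lemma mem_phiArcs {n k : ℕ} {a : NCMatching n k} {p : ℕ × ℕ} :
    p ∈ phiArcs a ↔
      ((∃ q ∈ a.arcs, p = (q.1 + (n - 2 * k), q.2 + (n - 2 * k))) ∨
       (∃ v : ℕ, a.IsRay v ∧ p = (n - 2 * k - rayIdx a v + 1, v + (n - 2 * k)))) := by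
  simp only [phiArcs, Finset.mem_union, Finset.mem_image]
  constructor
  · rintro (⟨q, hq, rfl⟩ | ⟨v, hv, rfl⟩)
    · exact Or.inl ⟨q, hq, rfl⟩
    · exact Or.inr ⟨v, mem_raysF.1 hv, rfl⟩
  · rintro (⟨q, hq, rfl⟩ | ⟨v, hv, rfl⟩)
    · exact Or.inl ⟨q, hq, rfl⟩
    · exact Or.inr ⟨v, mem_raysF.2 hv, rfl⟩

noncomputable def phi {n k : ℕ} (hk : 2 * k ≤ n) (a : NCMatching n k) :
    NCMatching (2 * (n - k)) (n - k) where
  arcs := phiArcs a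
  card_arcs := by
    rw [phiArcs, Finset.card_union_of_disjoint, Finset.card_image_of_injective,
      Finset.card_image_of_injOn, a.card_arcs, card_raysF a hk]
    · omega
    · intro v hv w hw h
      simp only [Prod.mk.injEq] at h
      omega
    · intro p q h
      simp only [Prod.mk.injEq] at h
      have h1 : p.1 = q.1 := by omega
      have h2 : p.2 = q.2 := by omega
      exact Prod.ext h1 h2
    · rw [Finset.disjoint_left]
      rintro p hp hq
      simp only [Finset.mem_image] at hp hq
      obtain ⟨q, hqa, rfl⟩ := hp
      obtain ⟨v, hv, hveq⟩ := hq
      have h1 := (a.mem_range q hqa).1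
      have h2 := rayIdx_pos a hv
      have h3 := rayIdx_le a hk v
      simp only [Prod.mk.injEq] at hveq
      omega
  mem_range := by
    intro p hp
    rcases mem_phiArcs.1 hp with ⟨q, hq, rfl⟩ | ⟨v, hv, rfl⟩
    · have := a.mem_range q hq
      simp only
      omega
    · have h1 := hv.1
      have h2 := hv.2.1
      have h3 := rayIdx_le a hk v
      have h4 := rayIdx_pos a (mem_raysF.2 hv)
      simp only
      omega
  endpoints_distinct := by
    intro p hp q hq hpq
    rcases mem_phiArcs.1 hp with ⟨p', hp', rfl⟩ | ⟨v, hv, rfl⟩ <;>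
      rcases mem_phiArcs.1 hq with ⟨q', hq', rfl⟩ | ⟨w, hw, rfl⟩
    · have hne : p' ≠ q' := by
        rintro rfl; exact hpq rfl
      have := a.endpoints_distinct p' hp' q' hq' hne
      simp only
      omega
    · have h1 := (raysF_ne (mem_raysF.2 hw) hp')
      have h2 := (a.mem_range p' hp').1
      have h3 := rayIdx_le a hk w
      have h4 := rayIdx_pos a (mem_raysF.2 hw)
      have h5 := (a.mem_range p' hp').2.1
      simp only
      omega
    · have h1 := (raysF_ne (mem_raysF.2 hv) hq')
      have h2 := (a.mem_range q' hq').1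
      have h3 := rayIdx_le a hk v
      have h4 := rayIdx_pos a (mem_raysF.2 hv)
      have h5 := (a.mem_range q' hq').2.1
      simp only
      omega
    · have hvw : v ≠ w := by
        rintro rfl; exact hpq rfl
      have h1 : rayIdx a v ≠ rayIdx a w := fun h =>
        hvw (rayIdx_injOn a (mem_raysF.2 hv) (mem_raysF.2 hw) h)
      have h2 := rayIdx_le a hk v
      have h3 := rayIdx_le a hk w
      have h4 := rayIdx_pos a (mem_raysF.2 hv)
      have h5 := rayIdx_pos a (mem_raysF.2 hw)
      have h6 : 1 ≤ v := hv.1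
      have h7 : 1 ≤ w := hw.1
      simp only
      omega
  noncross := by
    intro p hp q hq
    rcases mem_phiArcs.1 hp with ⟨p', hp', rfl⟩ | ⟨v, hv, rfl⟩ <;>
      rcases mem_phiArcs.1 hq with ⟨q', hq', rfl⟩ | ⟨w, hw, rfl⟩
    · have := a.noncross p' hp' q' hq'
      simp only
      omega
    · have h1 := rayIdx_le a hk w
      have h2 := (a.mem_range p' hp').1
      simp only
      omega
    · -- p ray arc, q shifted: impossible to have v strictly inside q'
      simp only
      rintro ⟨h1, h2, h3⟩
      have hv1 : q'.1 < v := by omega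
      have hv2 : v < q'.2 := by omega
      obtain ⟨r, hr, hr2⟩ := a.no_ray_under q' hq' v hv1 hv2
      have := raysF_ne (mem_raysF.2 hv) hr
      omega
    · simp only
      rintro ⟨h1, h2, h3⟩
      have hvw : v < w := by omega
      have := rayIdx_strictMono a (mem_raysF.2 hw) hvw
      have h4 := rayIdx_le a hk w
      omega
  no_ray_under := by
    intro p hp r hr1 hr2
    have hub : ∀ q ∈ phiArcs a, q.2 ≤ n + (n - 2 * k) := by
      intro q hq
      rcases mem_phiArcs.1 hq with ⟨q', hq', rfl⟩ | ⟨v, hv, rfl⟩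
      · have := a.mem_range q' hq'
        simp only
        omega
      · have := hv.2.1
        simp only
        omega
    have hrub : r ≤ n + (n - 2 * k) := by
      have := hub p hp
      omega
    by_cases hcase : r ≤ n - 2 * k
    · -- r among the new vertices
      have hr0 : 1 ≤ r := by
        rcases mem_phiArcs.1 hp with ⟨q', hq', rfl⟩ | ⟨v, hv, rfl⟩ <;> omega
      have hs : (n - 2 * k - r + 1) ∈ Finset.Icc 1 (n - 2 * k) := by
        simp only [Finset.mem_Icc]
        omega
      rw [← rayIdx_image a hk] at hs
      obtain ⟨v, hv, hvs⟩ := Finset.mem_image.1 hs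
      refine ⟨(n - 2 * k - rayIdx a v + 1, v + (n - 2 * k)), ?_, Or.inl ?_⟩
      · exact mem_phiArcs.2 (Or.inr ⟨v, mem_raysF.1 hv, rfl⟩)
      · simp only
        omega
    · -- r = v + (n - 2k) with 1 ≤ v ≤ n
      push_neg at hcase
      set v := r - (n - 2 * k) with hvdef
      have hv1 : 1 ≤ v := by omega
      have hv2 : v ≤ n := by omega
      by_cases hve : v ∈ a.ends
      · obtain ⟨q, hq, hq2⟩ := mem_ends.1 hve
        refine ⟨(q.1 + (n - 2 * k), q.2 + (n - 2 * k)),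
          mem_phiArcs.2 (Or.inl ⟨q, hq, rfl⟩), ?_⟩
        simp only
        omega
      · have hvr : v ∈ raysF a := by
          rw [raysF, Finset.mem_sdiff, Finset.mem_Icc]
          exact ⟨⟨hv1, hv2⟩, hve⟩
        refine ⟨(n - 2 * k - rayIdx a v + 1, v + (n - 2 * k)),
          mem_phiArcs.2 (Or.inr ⟨v, mem_raysF.1 hvr, rfl⟩), Or.inr ?_⟩
        simp only
        omega

lemma phi_no_left_arc {n k : ℕ} (hk : 2 * k ≤ n) (a : NCMatching n k) :
    ∀ p ∈ (phi hk a).arcs, ¬ (p.1 ≤ n - 2 * k ∧ p.2 ≤ n - 2 * k) := by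
  intro p hp
  rcases mem_phiArcs.1 hp with ⟨q, hq, rfl⟩ | ⟨v, hv, rfl⟩
  · have := (a.mem_range q hq).1
    simp only
    omega
  · have := hv.1
    simp only
    omega

section Psi

variable {n k : ℕ}

lemma ends_eq {N K : ℕ} (b : NCMatching N K) (h : N = 2 * K) :
    b.ends = Finset.Icc 1 N := by
  refine Finset.eq_of_subset_of_card_le (ends_subset b) ?_
  rw [card_ends, Nat.card_Icc]
  omega

lemma perfect {K : ℕ} (b : NCMatching (2 * K) K) {v : ℕ} (h1 : 1 ≤ v)
    (h2 : v ≤ 2 * K) : ∃ q ∈ b.arcs, v = q.1 ∨ v = q.2 := by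
  have : v ∈ b.ends := by
    rw [ends_eq b rfl]
    exact Finset.mem_Icc.2 ⟨h1, h2⟩
  exact mem_ends.1 this

variable (hk : 2 * k ≤ n) (b : NCMatching (2 * (n - k)) (n - k))
  (hb : ∀ p ∈ b.arcs, ¬ (p.1 ≤ n - 2 * k ∧ p.2 ≤ n - 2 * k))

include hk hb in
lemma left_arc {t : ℕ} (ht1 : 1 ≤ t) (ht2 : t ≤ n - 2 * k) :
    ∃ q ∈ b.arcs, q.1 = t := by
  have h2 : t ≤ 2 * (n - k) := by omega
  obtain ⟨q, hq, hq2⟩ := perfect b ht1 h2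
  rcases hq2 with h | h
  · exact ⟨q, hq, h.symm⟩
  · exfalso
    have := b.mem_range q hq
    exact hb q hq ⟨by omega, by omega⟩

include hb in
lemma right_gt {p : ℕ × ℕ} (hp : p ∈ b.arcs) (h1 : p.1 ≤ n - 2 * k) :
    n - 2 * k < p.2 := by
  by_contra h
  exact hb p hp ⟨h1, by omega⟩

include hk hb in
lemma image_L :
    (b.arcs.filter (fun p => p.1 ≤ n - 2 * k)).image (fun p => p.1) =
      Finset.Icc 1 (n - 2 * k) := by
  apply Finset.Subset.antisymm
  · intro t ht
    simp only [Finset.mem_image, Finset.mem_filter] at ht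
    obtain ⟨p, ⟨hp, hp1⟩, rfl⟩ := ht
    have := (b.mem_range p hp).1
    exact Finset.mem_Icc.2 ⟨this, hp1⟩
  · intro t ht
    rw [Finset.mem_Icc] at ht
    obtain ⟨q, hq, hq1⟩ := left_arc hk b hb ht.1 ht.2
    exact Finset.mem_image.2 ⟨q, Finset.mem_filter.2 ⟨hq, by omega⟩, hq1⟩

lemma fst_injOn : Set.InjOn (fun p : ℕ × ℕ => p.1)
    (b.arcs.filter (fun p => p.1 ≤ n - 2 * k)) := by
  intro p hp q hq h
  simp only [Finset.coe_filter, Set.mem_setOf_eq] at hp hq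
  by_contra hne
  have := b.endpoints_distinct p hp.1 q hq.1 hne
  simp only at h
  omega

include hk hb in
lemma card_L : (b.arcs.filter (fun p => p.1 ≤ n - 2 * k)).card = n - 2 * k := by
  rw [← Finset.card_image_of_injOn (fst_injOn b), image_L hk b hb, Nat.card_Icc]
  omega

include hk hb in
lemma card_R : (b.arcs.filter (fun p => n - 2 * k < p.1)).card = k := by
  have h1 := Finset.card_filter_add_card_filter_not
    (s := b.arcs) (p := fun p => p.1 ≤ n - 2 * k)
  have h2 := card_L hk b hb
  have h3 : b.arcs.filter (fun p => ¬ p.1 ≤ n - 2 * k) =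
      b.arcs.filter (fun p => n - 2 * k < p.1) := by
    apply Finset.filter_congr
    intro p _
    simp only [not_le]
  rw [h3] at h1
  rw [b.card_arcs] at h1
  omega

include hb in
lemma anti_mono {p q : ℕ × ℕ} (hp : p ∈ b.arcs) (hq : q ∈ b.arcs)
    (hp1 : p.1 ≤ n - 2 * k) (hq1 : q.1 ≤ n - 2 * k) (h : p.1 < q.1) :
    q.2 < p.2 := by
  have hnc := b.noncross p hp q hq
  have hp2 := right_gt b hb hp hp1
  have hne : p ≠ q := fun e => by rw [e] at h; omega
  have := b.endpoints_distinct p hp q hq hne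
  omega

/-- the restriction map -/
noncomputable def psi : NCMatching n k where
  arcs := (b.arcs.filter (fun p => n - 2 * k < p.1)).image
    (fun p => (p.1 - (n - 2 * k), p.2 - (n - 2 * k)))
  card_arcs := by
    rw [Finset.card_image_of_injOn, card_R hk b hb]
    intro p hp q hq h
    simp only [Finset.coe_filter, Set.mem_setOf_eq] at hp hq
    have hp2 := (b.mem_range p hp.1).2.1
    have hq2 := (b.mem_range q hq.1).2.1
    simp only [Prod.mk.injEq] at h
    have h1 : p.1 = q.1 := by omega
    have h2 : p.2 = q.2 := by omega
    exact Prod.ext h1 h2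
  mem_range := by
    intro p hp
    simp only [Finset.mem_image, Finset.mem_filter] at hp
    obtain ⟨q, ⟨hq, hq1⟩, rfl⟩ := hp
    have := b.mem_range q hq
    simp only
    omega
  endpoints_distinct := by
    intro p hp q hq hpq
    simp only [Finset.mem_image, Finset.mem_filter] at hp hq
    obtain ⟨p', ⟨hp', hp1⟩, rfl⟩ := hp
    obtain ⟨q', ⟨hq', hq1⟩, rfl⟩ := hq
    have hne : p' ≠ q' := by
      rintro rfl; exact hpq rfl
    have h1 := b.endpoints_distinct p' hp' q' hq' hne
    have h2 := (b.mem_range p' hp').2.1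
    have h3 := (b.mem_range q' hq').2.1
    simp only
    omega
  noncross := by
    intro p hp q hq
    simp only [Finset.mem_image, Finset.mem_filter] at hp hq
    obtain ⟨p', ⟨hp', hp1⟩, rfl⟩ := hp
    obtain ⟨q', ⟨hq', hq1⟩, rfl⟩ := hq
    have h1 := b.noncross p' hp' q' hq'
    have h2 := (b.mem_range p' hp').2.1
    have h3 := (b.mem_range q' hq').2.1
    simp only
    omega
  no_ray_under := by
    intro p hp r hr1 hr2
    simp only [Finset.mem_image, Finset.mem_filter] at hp
    obtain ⟨p', ⟨hp', hp1⟩, rfl⟩ := hp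
    have hpr := b.mem_range p' hp'
    simp only at hr1 hr2
    -- the vertex r + (n - 2k) lies strictly inside p'
    have hi1 : p'.1 < r + (n - 2 * k) := by omega
    have hi2 : r + (n - 2 * k) < p'.2 := by omega
    obtain ⟨q, hq, hq2⟩ := perfect b (v := r + (n - 2 * k)) (by omega) (by omega)
    have hqr := b.mem_range q hq
    rcases hq2 with h | h
    · refine ⟨(q.1 - (n - 2 * k), q.2 - (n - 2 * k)),
        Finset.mem_image.2 ⟨q, Finset.mem_filter.2 ⟨hq, by omega⟩, rfl⟩, Or.inl (by omega)⟩
    · by_cases hcase : n - 2 * k < q.1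
      · exact ⟨(q.1 - (n - 2 * k), q.2 - (n - 2 * k)),
          Finset.mem_image.2 ⟨q, Finset.mem_filter.2 ⟨hq, hcase⟩, rfl⟩, Or.inr (by omega)⟩
      · exfalso
        exact b.noncross q hq p' hp' ⟨by omega, by omega, by omega⟩

end Psi

section Psi2

variable {n k : ℕ} (hk : 2 * k ≤ n) (b : NCMatching (2 * (n - k)) (n - k))
  (hb : ∀ p ∈ b.arcs, ¬ (p.1 ≤ n - 2 * k ∧ p.2 ≤ n - 2 * k))

lemma mem_psi_arcs {p : ℕ × ℕ} :
    p ∈ (psi hk b hb).arcs ↔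
      ∃ q ∈ b.arcs, n - 2 * k < q.1 ∧ p = (q.1 - (n - 2 * k), q.2 - (n - 2 * k)) := by
  simp only [psi, Finset.mem_image, Finset.mem_filter]
  constructor
  · rintro ⟨q, ⟨hq, hq1⟩, rfl⟩
    exact ⟨q, hq, hq1, rfl⟩
  · rintro ⟨q, hq, hq1, rfl⟩
    exact ⟨q, ⟨hq, hq1⟩, rfl⟩

include hk in
lemma mem_raysF_psi {v : ℕ} :
    v ∈ raysF (psi hk b hb) ↔ ∃ q ∈ b.arcs, q.1 ≤ n - 2 * k ∧ q.2 = v + (n - 2 * k) := by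
  rw [mem_raysF]
  constructor
  · rintro ⟨h1, h2, h3⟩
    obtain ⟨q, hq, hq2⟩ := perfect b (v := v + (n - 2 * k)) (by omega) (by omega)
    have hqr := b.mem_range q hq
    rcases hq2 with h | h
    · exfalso
      have hmem : (q.1 - (n - 2 * k), q.2 - (n - 2 * k)) ∈ (psi hk b hb).arcs :=
        (mem_psi_arcs hk b hb).2 ⟨q, hq, by omega, rfl⟩
      have := h3 _ hmem
      simp only at this
      omega
    · by_cases hcase : n - 2 * k < q.1
      · exfalso
        have hmem : (q.1 - (n - 2 * k), q.2 - (n - 2 * k)) ∈ (psi hk b hb).arcs :=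
          (mem_psi_arcs hk b hb).2 ⟨q, hq, hcase, rfl⟩
        have := h3 _ hmem
        simp only at this
        omega
      · exact ⟨q, hq, by omega, h.symm⟩
  · rintro ⟨q, hq, hq1, hq2⟩
    have hqr := b.mem_range q hq
    have hq2' := right_gt b hb hq hq1
    refine ⟨by omega, by omega, ?_⟩
    intro p hp
    obtain ⟨p', hp', hpg, rfl⟩ := (mem_psi_arcs hk b hb).1 hp
    have hpr := b.mem_range p' hp'
    have hne : p' ≠ q := by
      rintro rfl; omega
    have := b.endpoints_distinct p' hp' q hq hne
    simp only
    omega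

include hk in
lemma rayIdx_psi {q : ℕ × ℕ} (hq : q ∈ b.arcs) (hq1 : q.1 ≤ n - 2 * k) :
    rayIdx (psi hk b hb) (q.2 - (n - 2 * k)) = n - 2 * k - q.1 + 1 := by
  have hqr := b.mem_range q hq
  have hq2 := right_gt b hb hq hq1
  rw [rayIdx_eq]
  have hA : (raysF (psi hk b hb)).filter (· ≤ q.2 - (n - 2 * k)) =
      (b.arcs.filter (fun p => p.1 ≤ n - 2 * k ∧ q.1 ≤ p.1)).image
        (fun p => p.2 - (n - 2 * k)) := by
    ext w
    simp only [Finset.mem_filter, Finset.mem_image]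
    constructor
    · rintro ⟨hw, hwle⟩
      obtain ⟨p, hp, hp1, hp2⟩ := (mem_raysF_psi hk b hb).1 hw
      have hpr := b.mem_range p hp
      have hple : p.2 ≤ q.2 := by omega
      have hq1p : q.1 ≤ p.1 := by
        by_contra hc
        have := anti_mono b hb hp hq hp1 hq1 (by omega)
        omega
      exact ⟨p, ⟨hp, hp1, hq1p⟩, by omega⟩
    · rintro ⟨p, ⟨hp, hp1, hp2⟩, rfl⟩
      have hpr := b.mem_range p hp
      have hpg := right_gt b hb hp hp1
      have hple : p.2 ≤ q.2 := by
        rcases eq_or_lt_of_le hp2 with h | h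
        · have : p = q := by
            by_contra hne
            have := b.endpoints_distinct p hp q hq hne
            omega
          rw [this]
        · have := anti_mono b hb hq hp hq1 hp1 h
          omega
      refine ⟨(mem_raysF_psi hk b hb).2 ⟨p, hp, hp1, by omega⟩, by omega⟩
  rw [hA, Finset.card_image_of_injOn]
  · have hB : (b.arcs.filter (fun p => p.1 ≤ n - 2 * k ∧ q.1 ≤ p.1)).image
        (fun p : ℕ × ℕ => p.1) = Finset.Icc q.1 (n - 2 * k) := by
      apply Finset.Subset.antisymm
      · intro t ht
        simp only [Finset.mem_image, Finset.mem_filter] at ht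
        obtain ⟨p, ⟨hp, hp1, hp2⟩, rfl⟩ := ht
        exact Finset.mem_Icc.2 ⟨hp2, hp1⟩
      · intro t ht
        rw [Finset.mem_Icc] at ht
        obtain ⟨p, hp, hp1⟩ := left_arc hk b hb (t := t) (by omega) ht.2
        exact Finset.mem_image.2 ⟨p, Finset.mem_filter.2 ⟨hp, by omega, by omega⟩, hp1⟩
    have hinj : Set.InjOn (fun p : ℕ × ℕ => p.1)
        (b.arcs.filter (fun p => p.1 ≤ n - 2 * k ∧ q.1 ≤ p.1)) := by
      intro p hp q' hq' h
      simp only [Finset.coe_filter, Set.mem_setOf_eq] at hp hq'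
      by_contra hne
      have := b.endpoints_distinct p hp.1 q' hq'.1 hne
      simp only at h
      omega
    rw [← Finset.card_image_of_injOn hinj, hB, Nat.card_Icc]
    omega
  · intro p hp p' hp' h
    simp only [Finset.coe_filter, Set.mem_setOf_eq] at hp hp'
    have h1 := right_gt b hb hp.1 hp.2.1
    have h2 := right_gt b hb hp'.1 hp'.2.1
    have hpp : p.2 = p'.2 := by
      simp only at h
      omega
    by_contra hne
    have := b.endpoints_distinct p hp.1 p' hp'.1 hne
    omega

end Psi2

section Main

variable {n k : ℕ} (hk : 2 * k ≤ n)

include hk in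
lemma phi_psi (b : NCMatching (2 * (n - k)) (n - k))
    (hb : ∀ p ∈ b.arcs, ¬ (p.1 ≤ n - 2 * k ∧ p.2 ≤ n - 2 * k)) :
    phi hk (psi hk b hb) = b := by
  apply NCMatching.ext'
  show phiArcs (psi hk b hb) = b.arcs
  apply Finset.Subset.antisymm
  · intro p hp
    rcases mem_phiArcs.1 hp with ⟨q, hq, rfl⟩ | ⟨v, hv, rfl⟩
    · obtain ⟨q', hq', hg, rfl⟩ := (mem_psi_arcs hk b hb).1 hq
      have hqr := b.mem_range q' hq'
      have heq : (q'.1 - (n - 2 * k) + (n - 2 * k), q'.2 - (n - 2 * k) + (n - 2 * k)) = q' :=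
        Prod.ext (by omega) (by omega)
      rwa [heq]
    · obtain ⟨q, hq, hq1, hq2⟩ := (mem_raysF_psi hk b hb).1 (mem_raysF.2 hv)
      have hqr := b.mem_range q hq
      have hqg := right_gt b hb hq hq1
      have hv2 : v = q.2 - (n - 2 * k) := by omega
      have hx : n - 2 * k - rayIdx (psi hk b hb) v + 1 = q.1 := by
        rw [hv2, rayIdx_psi hk b hb hq hq1]
        omega
      have hy : v + (n - 2 * k) = q.2 := by omega
      rw [hx, hy]
      rwa [Prod.mk.eta]
  · intro q hq
    have hqr := b.mem_range q hq
    by_cases hcase : n - 2 * k < q.1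
    · apply mem_phiArcs.2
      refine Or.inl ⟨(q.1 - (n - 2 * k), q.2 - (n - 2 * k)),
        (mem_psi_arcs hk b hb).2 ⟨q, hq, hcase, rfl⟩, ?_⟩
      exact (Prod.ext (by simp; omega) (by simp; omega)).symm
    · push_neg at hcase
      have hqg := right_gt b hb hq hcase
      have hvr : (q.2 - (n - 2 * k)) ∈ raysF (psi hk b hb) :=
        (mem_raysF_psi hk b hb).2 ⟨q, hq, hcase, by omega⟩
      apply mem_phiArcs.2
      refine Or.inr ⟨q.2 - (n - 2 * k), mem_raysF.1 hvr, ?_⟩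
      rw [rayIdx_psi hk b hb hq hcase]
      exact (Prod.ext (by simp; omega) (by simp; omega)).symm

include hk in
lemma psi_phi (a : NCMatching n k) :
    psi hk (phi hk a) (phi_no_left_arc hk a) = a := by
  apply NCMatching.ext'
  ext p
  rw [mem_psi_arcs]
  constructor
  · rintro ⟨q, hq, hg, rfl⟩
    rcases mem_phiArcs.1 hq with ⟨q', hq', rfl⟩ | ⟨v, hv, rfl⟩
    · have heq : ((q'.1 + (n - 2 * k)) - (n - 2 * k), (q'.2 + (n - 2 * k)) - (n - 2 * k)) = q' :=
        Prod.ext (by simp) (by simp)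
      rwa [heq]
    · exfalso
      have := rayIdx_pos a (mem_raysF.2 hv)
      have := rayIdx_le a hk v
      simp only at hg
      omega
  · intro hp
    have := a.mem_range p hp
    refine ⟨(p.1 + (n - 2 * k), p.2 + (n - 2 * k)),
      mem_phiArcs.2 (Or.inl ⟨p, hp, rfl⟩), by simp; omega, ?_⟩
    exact (Prod.ext (by simp) (by simp)).symm

end Main


/-- The completion map `φ`, which adds `n-2k` new vertices on the left and joins the
`t`-th new vertex from the right to the `t`-th ray from the left, is a bijection from
noncrossing matchings of type `(n-k,k)` onto the noncrossing perfect matchings on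
`2(n-k)` points having no arc with both endpoints among the first `n-2k` vertices. -/
theorem completion_bijective (n k : ℕ) (hk : 2 * k ≤ n) :
    ∃ Φ : NCMatching n k →
      {m : NCMatching (2 * (n - k)) (n - k) //
        ∀ p ∈ m.arcs, ¬ (p.1 ≤ n - 2 * k ∧ p.2 ≤ n - 2 * k)},
      Function.Bijective Φ ∧
      ∀ a : NCMatching n k, ∀ p : ℕ × ℕ,
        p ∈ (Φ a).1.arcs ↔
          ((∃ q ∈ a.arcs, p = (q.1 + (n - 2 * k), q.2 + (n - 2 * k))) ∨
           (∃ v : ℕ, a.IsRay v ∧ p = (n - 2 * k - rayIdx a v + 1, v + (n - 2 * k)))) := by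
  refine ⟨fun a => ⟨phi hk a, phi_no_left_arc hk a⟩, ⟨?_, ?_⟩, ?_⟩
  · intro a b h
    have h' : phi hk a = phi hk b := congrArg Subtype.val h
    have ha := psi_phi hk a
    have hb := psi_phi hk b
    rw [← ha, ← hb]
    congr 1
  · rintro ⟨b, hb⟩
    exact ⟨psi hk b hb, Subtype.ext (phi_psi hk b hb)⟩
  · intro a p
    exact mem_phiArcs
end

section
/- The (3,1) Springer variety, realized as X_{3,1} = S_a ∪ S_b ∪ S_c ⊆ (S²)^4 with S_a = {(x,x,−p,p)}, S_b = {(−p,x,x,p)}, S_c = {(−p,p,x,x)} for x ∈ S², is homotopy equivalent to a wedge of three 2-spheres; in particular S_a ∩ S_b = {(−p,−p,−p,p)}, S_b ∩ S_c = {(−p,p,p,p)}, and S_a ∩ S_c = ∅. -/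
/-- The north pole `p = (0,0,1)` of the unit two-sphere in `ℝ³`. -/
noncomputable def np : EuclideanSpace ℝ (Fin 3) := WithLp.toLp 2 ![0, 0, 1]

/-- The component `S_a = {(x,x,-p,p)}` of `X_{3,1}`. -/
def Sa : Set (Fin 4 → EuclideanSpace ℝ (Fin 3)) :=
  {y | (∀ i, ‖y i‖ = 1) ∧ y 0 = y 1 ∧ y 2 = -np ∧ y 3 = np}

/-- The component `S_b = {(-p,x,x,p)}` of `X_{3,1}`. -/
def Sb : Set (Fin 4 → EuclideanSpace ℝ (Fin 3)) :=
  {y | (∀ i, ‖y i‖ = 1) ∧ y 0 = -np ∧ y 1 = y 2 ∧ y 3 = np}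

/-- The component `S_c = {(-p,p,x,x)}` of `X_{3,1}`. -/
def Sc : Set (Fin 4 → EuclideanSpace ℝ (Fin 3)) :=
  {y | (∀ i, ‖y i‖ = 1) ∧ y 0 = -np ∧ y 1 = np ∧ y 2 = y 3}

/-- The `(3,1)` Springer variety realized inside `(S²)^4`. -/
def X31 : Set (Fin 4 → EuclideanSpace ℝ (Fin 3)) := Sa ∪ Sb ∪ Sc

/-- The relation collapsing the three basepoints (north poles) of three disjoint
copies of the two-sphere; its quotient is the wedge of three 2-spheres. -/
def wedgeRel (x y : Fin 3 × ↥(Metric.sphere (0 : EuclideanSpace ℝ (Fin 3)) 1)) : Prop :=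
  (x.2 : EuclideanSpace ℝ (Fin 3)) = np ∧ (y.2 : EuclideanSpace ℝ (Fin 3)) = np

/-- The wedge of three 2-spheres. -/
def WedgeThreeSpheres : Type := Quot wedgeRel

noncomputable instance : TopologicalSpace WedgeThreeSpheres :=
  instTopologicalSpaceQuot

/-!
`X31` is a chain of three spheres: `Sa` and `Sc` are attached to the middle sphere `Sb` at its two
poles `∓p`. Both poles lie on the closed hemisphere of `Sb` centred at `e = (1, 0, 0)`, and
collapsing a closed hemisphere of a sphere to a point gives a sphere again; doing so on `Sb` gives
`toWedge : X31 → S² ∨ S² ∨ S²`. The homotopy inverse `ofWedge` sends the wedge point to `e` and the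
middle sphere onto `Sb`; it wraps the first and last sphere around `Sa` resp. `Sc` by collapsing the
hemisphere around the wedge point, which it spreads instead as a "tongue" along an arc of `Sb` from
the attaching point `∓p` to `e`. Both composites are, after retracting the tongues, induced by
self-maps of the spheres that are nowhere antipodal to the identity, hence homotopic to it along
great circles. As `X31` and the wedge are both quotients of three disjoint spheres, all maps and
homotopies are defined on those and descend.
-/

open Metric Set Function Topology AffineMap ContinuousMap
open scoped RealInnerProductSpace unitInterval

section SphereLineMap

variable {E : Type*} [NormedAddCommGroup E] {u v : sphere (0 : E) 1}

theorem coe_ne_neg_coe (huv : u ≠ -v) : (u : E) ≠ -(v : E) :=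
  fun h => huv (Subtype.ext h)

variable [NormedSpace ℝ E]

theorem lineMap_ne_zero_of_ne_neg {x y : E} (hx : ‖x‖ = 1) (hy : ‖y‖ = 1) (hxy : x ≠ -y)
    (t : ℝ) : lineMap x y t ≠ 0 := by
  intro h
  rw [lineMap_apply_module] at h
  have hnorm := congrArg norm (eq_neg_of_add_eq_zero_left h)
  rw [norm_neg, norm_smul, norm_smul, hx, hy, mul_one, mul_one, Real.norm_eq_abs,
    Real.norm_eq_abs] at hnorm
  obtain rfl : t = 1 / 2 := by rcases abs_eq_abs.1 hnorm with h' | h' <;> linarith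
  rw [show (1 : ℝ) - 1 / 2 = 1 / 2 by norm_num, ← smul_add, smul_eq_zero] at h
  exact hxy (eq_neg_of_add_eq_zero_left (h.resolve_left (by norm_num)))

noncomputable def sphereLineMap (u v : sphere (0 : E) 1) (huv : u ≠ -v) (t : ℝ) :
    sphere (0 : E) 1 :=
  ⟨‖lineMap (u : E) v t‖⁻¹ • lineMap (u : E) v t, by
    simpa using norm_smul_inv_norm (𝕜 := ℝ)
      (lineMap_ne_zero_of_ne_neg (norm_eq_of_mem_sphere u) (norm_eq_of_mem_sphere v)
        (coe_ne_neg_coe huv) t)⟩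

theorem coe_sphereLineMap (huv : u ≠ -v) (t : ℝ) :
    (sphereLineMap u v huv t : E) = ‖lineMap (u : E) v t‖⁻¹ • lineMap (u : E) v t := rfl

theorem Continuous.sphereLineMap {X : Type*} [TopologicalSpace X] {f g : X → sphere (0 : E) 1}
    {τ : X → ℝ} (hf : Continuous f) (hg : Continuous g) (hτ : Continuous τ)
    (hfg : ∀ x, f x ≠ -g x) :
    Continuous fun x => _root_.sphereLineMap (f x) (g x) (hfg x) (τ x) := by
  have hl : Continuous fun x => AffineMap.lineMap (f x : E) (g x) (τ x) :=
    (continuous_subtype_val.comp hf).lineMap (continuous_subtype_val.comp hg) hτ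
  refine Continuous.subtype_mk ((hl.norm.inv₀ fun x => ?_).smul hl) _
  exact norm_ne_zero_iff.2 (lineMap_ne_zero_of_ne_neg (norm_eq_of_mem_sphere _)
    (norm_eq_of_mem_sphere _) (coe_ne_neg_coe (hfg x)) _)

theorem sphereLineMap_congr {u' v' : sphere (0 : E) 1} (hu : u = u') (hv : v = v')
    (huv : u ≠ -v) (t : ℝ) :
    sphereLineMap u v huv t = sphereLineMap u' v' (hu ▸ hv ▸ huv) t := by
  subst hu hv
  rfl

theorem sphereLineMap_of_lineMap_eq {huv : u ≠ -v} {t : ℝ} {w : sphere (0 : E) 1}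
    (h : lineMap (u : E) v t = w) : sphereLineMap u v huv t = w := by
  ext1
  rw [coe_sphereLineMap, h, norm_eq_of_mem_sphere, inv_one, one_smul]

@[simp]
theorem sphereLineMap_zero (huv : u ≠ -v) : sphereLineMap u v huv 0 = u :=
  sphereLineMap_of_lineMap_eq (lineMap_apply_zero _ _)

@[simp]
theorem sphereLineMap_one (huv : u ≠ -v) : sphereLineMap u v huv 1 = v :=
  sphereLineMap_of_lineMap_eq (lineMap_apply_one _ _)

theorem sphereLineMap_of_eq (h : u = v) (huv : u ≠ -v) (t : ℝ) :
    sphereLineMap u v huv t = v := by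
  subst h
  exact sphereLineMap_of_lineMap_eq (lineMap_same_apply _ _)

theorem sphereLineMap_one_sub (huv : u ≠ -v) (hvu : v ≠ -u) (t : ℝ) :
    sphereLineMap u v huv (1 - t) = sphereLineMap v u hvu t := by
  ext1
  simp only [coe_sphereLineMap, lineMap_apply_one_sub]

end SphereLineMap

section HemisphereCollapse

variable {E : Type*} [NormedAddCommGroup E] [InnerProductSpace ℝ E]

theorem sphere_ne_neg_of_inner_eq_zero {u v : sphere (0 : E) 1} (h : ⟪(u : E), v⟫ = 0) :
    u ≠ -v := by
  rintro rfl
  simp at h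

/-- Collapses the closed hemisphere `0 ≤ ⟪x, a⟫` to `a`; on the opposite hemisphere it doubles
the angle to `-a`, so that it wraps it once around the sphere. -/
noncomputable def hemisphereCollapse (a : sphere (0 : E) 1) :
    C(sphere (0 : E) 1, sphere (0 : E) 1) where
  toFun x := ⟨a - (2 * min ⟪(x : E), a⟫ 0) • (x : E), by
    have ha := norm_eq_of_mem_sphere a
    have hx := norm_eq_of_mem_sphere x
    rw [mem_sphere_zero_iff_norm, ← pow_eq_one_iff_of_nonneg (norm_nonneg _) two_ne_zero,
      norm_sub_sq_real, norm_smul, Real.norm_eq_abs, mul_pow, sq_abs, inner_smul_right,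
      real_inner_comm, ha, hx]
    rcases min_cases ⟪(a : E), x⟫ 0 with ⟨h, -⟩ | ⟨h, -⟩ <;> rw [h] <;> ring⟩
  continuous_toFun := by fun_prop

variable {a x : sphere (0 : E) 1}

theorem coe_hemisphereCollapse :
    (hemisphereCollapse a x : E) = a - (2 * min ⟪(x : E), a⟫ 0) • (x : E) := rfl

theorem hemisphereCollapse_of_nonneg (hx : 0 ≤ ⟪(x : E), a⟫) : hemisphereCollapse a x = a := by
  ext1
  rw [coe_hemisphereCollapse, min_eq_right hx, mul_zero, zero_smul, sub_zero]

theorem hemisphereCollapse_self (a : sphere (0 : E) 1) : hemisphereCollapse a a = a :=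
  hemisphereCollapse_of_nonneg (by simp)

theorem hemisphereCollapse_ne_neg (a x : sphere (0 : E) 1) : hemisphereCollapse a x ≠ -x := by
  intro h
  have hx := norm_eq_of_mem_sphere x
  have hinner : ⟪(hemisphereCollapse a x : E), x⟫ = ⟪-(x : E), x⟫ := by
    rw [h, coe_neg_sphere]
  rw [coe_hemisphereCollapse, inner_sub_left, inner_smul_left, inner_neg_left,
    real_inner_self_eq_norm_sq, hx] at hinner
  rcases min_cases ⟪(x : E), a⟫ 0 with ⟨hm, hle⟩ | ⟨hm, hlt⟩ <;>
    simp only [hm, real_inner_comm (x : E), RCLike.conj_to_real] at hinner <;> linarith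

theorem hemisphereCollapse_sphereLineMap {u v : sphere (0 : E) 1} (huv : u ≠ -v)
    (h : ⟪(u : E), v⟫ = 0) {s : ℝ} (hs : 0 ≤ s) :
    hemisphereCollapse v (sphereLineMap u v huv s) = v := by
  refine hemisphereCollapse_of_nonneg ?_
  rw [coe_sphereLineMap, real_inner_smul_left, lineMap_apply_module, inner_add_left,
    real_inner_smul_left, real_inner_smul_left, h, real_inner_self_eq_norm_sq,
    norm_eq_of_mem_sphere]
  simpa using mul_nonneg (inv_nonneg.2 (norm_nonneg _)) hs

end HemisphereCollapse

section CollapseAlong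

variable {E Y : Type*} [NormedAddCommGroup E] [InnerProductSpace ℝ E] [TopologicalSpace Y]
variable {a : sphere (0 : E) 1} {φ : C(sphere (0 : E) 1, Y)} {β : C(ℝ, Y)}

/-- `φ ∘ hemisphereCollapse a`, except that at time `s` the collapsed hemisphere is spread along
the path `β` up to time `s`. -/
noncomputable def collapseAlong (a : sphere (0 : E) 1) (φ : C(sphere (0 : E) 1, Y))
    (β : C(ℝ, Y)) (hβ : β 0 = φ a) : C(ℝ × sphere (0 : E) 1, Y) where
  toFun p :=
    if 0 ≤ ⟪(p.2 : E), a⟫ then β (p.1 * ⟪(p.2 : E), a⟫) else φ (hemisphereCollapse a p.2)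
  continuous_toFun := by
    refine Continuous.if_le (by fun_prop) (by fun_prop) continuous_const (by fun_prop) ?_
    intro p hp
    rw [← hp, mul_zero, hβ, hemisphereCollapse_of_nonneg hp.le]

theorem collapseAlong_zero (hβ : β 0 = φ a) (x : sphere (0 : E) 1) :
    collapseAlong a φ β hβ (0, x) = φ (hemisphereCollapse a x) := by
  change ite _ _ _ = _
  split_ifs with hx
  · rw [zero_mul, hβ, hemisphereCollapse_of_nonneg hx]
  · rfl

theorem collapseAlong_self (hβ : β 0 = φ a) (s : ℝ) : collapseAlong a φ β hβ (s, a) = β s := by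
  change ite _ _ _ = _
  rw [if_pos (by simp), real_inner_self_eq_norm_sq, norm_eq_of_mem_sphere, one_pow, mul_one]

theorem map_collapseAlong {Z : Type*} (hβ : β 0 = φ a) (g : Y → Z)
    (hg : ∀ s, 0 ≤ s → g (β s) = g (φ a)) {s : ℝ} (hs : 0 ≤ s) (x : sphere (0 : E) 1) :
    g (collapseAlong a φ β hβ (s, x)) = g (φ (hemisphereCollapse a x)) := by
  change g (ite _ _ _) = _
  split_ifs with hx
  · rw [hg _ (mul_nonneg hs hx), hemisphereCollapse_of_nonneg hx]
  · rfl

end CollapseAlong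

section Descent

variable {Z X Y : Type*} [TopologicalSpace Z] [TopologicalSpace X] [TopologicalSpace Y]

theorem continuous_prod_prod_of_discrete_middle {T ι : Type*} [TopologicalSpace T]
    [TopologicalSpace ι] [DiscreteTopology ι] {f : T × (ι × Z) → Y}
    (hf : ∀ i, Continuous fun p : T × Z => f (p.1, (i, p.2))) : Continuous f :=
  (continuous_prod_of_discrete_left.2 hf :
      Continuous fun q : ι × (T × Z) => f (q.2.1, (q.1, q.2.2))).comp
    (continuous_snd.fst.prodMk (continuous_fst.prodMk continuous_snd.snd))

theorem Topology.IsQuotientMap.lift_comp_apply {q : C(Z, X)} (hq : IsQuotientMap q)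
    (g : C(Z, Y)) (h : FactorsThrough g q) (z : Z) : hq.lift g h (q z) = g z :=
  DFunLike.congr_fun (hq.lift_comp g h) z

theorem ContinuousMap.Homotopic.of_isQuotientMap {q : C(Z, X)} (hq : IsQuotientMap q)
    {f₀ f₁ : C(X, Y)} {H : I × Z → Y} (hH : Continuous H) (h₀ : ∀ z, H (0, z) = f₀ (q z))
    (h₁ : ∀ z, H (1, z) = f₁ (q z)) (hfac : ∀ t, FactorsThrough (fun z => H (t, z)) q) :
    f₀.Homotopic f₁ := by
  have hsec : ∀ t z, H (t, surjInv hq.surjective (q z)) = H (t, z) :=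
    fun t z => hfac t (surjInv_eq hq.surjective (q z))
  refine ⟨{ toFun := fun p => H (p.1, surjInv hq.surjective p.2)
            continuous_toFun := hq.continuous_lift_prod_right ?_
            map_zero_left := fun x => ?_
            map_one_left := fun x => ?_ }⟩
  · exact hH.congr fun p => (hsec p.1 p.2).symm
  · simp [h₀, surjInv_eq hq.surjective x]
  · simp [h₁, surjInv_eq hq.surjective x]

theorem homotopic_id_of_ne_neg {E ι : Type*} [NormedAddCommGroup E] [NormedSpace ℝ E]
    [TopologicalSpace ι] {q : C(ι × sphere (0 : E) 1, X)} (hq : IsQuotientMap q) {f : C(X, X)}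
    (c : C(ι × sphere (0 : E) 1, sphere (0 : E) 1)) (hc : ∀ z, c z ≠ -z.2)
    (hf : ∀ z, f (q z) = q (z.1, c z))
    (hfac : ∀ t : I, FactorsThrough (fun z => q (z.1, sphereLineMap (c z) z.2 (hc z) t)) q) :
    f.Homotopic (ContinuousMap.id X) := by
  refine Homotopic.of_isQuotientMap hq (H := fun p => q (p.2.1,
    sphereLineMap (c p.2) p.2.2 (hc p.2) p.1)) ?_ (fun z => ?_) (fun z => ?_) hfac
  · exact q.continuous.comp (continuous_snd.fst.prodMk
      ((c.continuous.comp continuous_snd).sphereLineMap continuous_snd.snd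
        continuous_subtype_val.fst' _))
  · simp [hf]
  · simp

end Descent

local notation "𝕊²" => sphere (0 : EuclideanSpace ℝ (Fin 3)) 1

noncomputable section

namespace X31

theorem np_eq_single : np = EuclideanSpace.single 2 1 := by
  ext i
  fin_cases i <;> simp [np]

def north : 𝕊² := ⟨np, by simp [np_eq_single]⟩

def east : 𝕊² := ⟨EuclideanSpace.single 0 1, by simp⟩

theorem coe_north : (north : EuclideanSpace ℝ (Fin 3)) = np := rfl

theorem norm_np : ‖np‖ = 1 := norm_eq_of_mem_sphere north

theorem north_ne_neg_north : north ≠ -north := ne_neg_of_mem_sphere ℝ one_ne_zero north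

theorem np_ne_neg_np : np ≠ -np := fun h => north_ne_neg_north (Subtype.ext h)

theorem Sa_inter_Sb : Sa ∩ Sb = {fun i => if i = 3 then np else -np} := by
  ext y
  simp only [Sa, Sb, mem_inter_iff, mem_ofPred_eq, mem_singleton_iff]
  constructor
  · rintro ⟨⟨-, h01, h2, h3⟩, -, h0, -, -⟩
    funext k
    fin_cases k <;> simp [h0, ← h01, h2, h3]
  · rintro rfl
    have hnorm (i : Fin 4) : ‖if i = 3 then np else -np‖ = 1 := by split_ifs <;> simp [norm_np]
    simp [hnorm]

theorem Sb_inter_Sc : Sb ∩ Sc = {fun i => if i = 0 then -np else np} := by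
  ext y
  simp only [Sb, Sc, mem_inter_iff, mem_ofPred_eq, mem_singleton_iff]
  constructor
  · rintro ⟨⟨-, h0, h12, h3⟩, -, -, h1, -⟩
    funext k
    fin_cases k <;> simp [h0, h1, ← h12, h3]
  · rintro rfl
    have hnorm (i : Fin 4) : ‖if i = 0 then -np else np‖ = 1 := by split_ifs <;> simp [norm_np]
    simp [hnorm]

theorem Sa_inter_Sc : Sa ∩ Sc = ∅ := by
  refine eq_empty_of_forall_notMem ?_
  rintro y ⟨⟨-, h01, -, -⟩, -, h0, h1, -⟩
  exact np_ne_neg_np (h1.symm.trans (h01.symm.trans h0))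

theorem inner_north_east : ⟪(north : EuclideanSpace ℝ (Fin 3)), east⟫ = 0 := by
  simp [north, east, np_eq_single, EuclideanSpace.inner_single_left]

theorem north_ne_neg_east : north ≠ -east := sphere_ne_neg_of_inner_eq_zero inner_north_east

theorem neg_north_ne_neg_east : -north ≠ -east :=
  sphere_ne_neg_of_inner_eq_zero (by simp [inner_north_east])

theorem hemisphereCollapse_east_north : hemisphereCollapse east north = east :=
  hemisphereCollapse_of_nonneg (by rw [inner_north_east])

theorem hemisphereCollapse_east_neg_north : hemisphereCollapse east (-north) = east :=
  hemisphereCollapse_of_nonneg (by simp [inner_north_east])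

def reflect : C(𝕊², 𝕊²) where
  toFun x := ⟨(ℝ ∙ ((east : EuclideanSpace ℝ (Fin 3)) - north))ᗮ.reflection x, by simp⟩
  continuous_toFun := by fun_prop

theorem reflect_reflect (x : 𝕊²) : reflect (reflect x) = x :=
  Subtype.ext (Submodule.reflection_reflection _ _)

theorem reflect_east : reflect east = north :=
  Subtype.ext (Submodule.reflection_sub (by simp [norm_eq_of_mem_sphere]))

theorem reflect_north : reflect north = east := by
  rw [← reflect_east, reflect_reflect]

theorem reflect_neg (x : 𝕊²) : reflect (-x) = -reflect x :=
  Subtype.ext (map_neg _ _)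

theorem reflect_hemisphereCollapse_reflect_ne_neg (x : 𝕊²) :
    reflect (hemisphereCollapse east (reflect x)) ≠ -x := by
  intro h
  apply hemisphereCollapse_ne_neg east (reflect x)
  rw [← reflect_neg, ← h, reflect_reflect]

/-- `Sa`, `Sb`, `Sc` parametrised by the sphere; `Sa` through the antipodal map, so that `Sa` and
`Sc` are attached at their parameter `north`, to the points `-north` and `north` of `Sb`. -/
def chainPoint : Fin 3 → EuclideanSpace ℝ (Fin 3) → Fin 4 → EuclideanSpace ℝ (Fin 3) :=
  ![fun x => ![-x, -x, -np, np], fun x => ![-np, x, x, np], fun x => ![-np, np, x, x]]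

theorem chainPoint_mem (i : Fin 3) (x : 𝕊²) : chainPoint i x ∈ X31 := by
  have hx := norm_eq_of_mem_sphere x
  fin_cases i
  · exact Or.inl (Or.inl ⟨by simp [chainPoint, Fin.forall_fin_succ, hx, norm_np], rfl, rfl, rfl⟩)
  · exact Or.inl (Or.inr ⟨by simp [chainPoint, Fin.forall_fin_succ, hx, norm_np], rfl, rfl, rfl⟩)
  · exact Or.inr ⟨by simp [chainPoint, Fin.forall_fin_succ, hx, norm_np], rfl, rfl, rfl⟩

def chain : C(Fin 3 × 𝕊², X31) where
  toFun z := ⟨chainPoint z.1 z.2, chainPoint_mem z.1 z.2⟩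
  continuous_toFun := by
    refine Continuous.subtype_mk (continuous_prod_of_discrete_left.2 fun i => ?_) _
    refine continuous_pi fun k => ?_
    fin_cases i <;> fin_cases k <;> simp [chainPoint] <;> fun_prop

theorem chain_surjective : Surjective chain := by
  rintro ⟨y, (hy | hy) | hy⟩
  · refine ⟨(0, -⟨y 0, mem_sphere_zero_iff_norm.2 (hy.1 0)⟩), Subtype.ext ?_⟩
    ext1 k
    fin_cases k <;> simp [chain, chainPoint, hy.2.1, hy.2.2.1, hy.2.2.2]
  · refine ⟨(1, ⟨y 1, mem_sphere_zero_iff_norm.2 (hy.1 1)⟩), Subtype.ext ?_⟩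
    ext1 k
    fin_cases k <;> simp [chain, chainPoint, hy.2.1, hy.2.2.1, hy.2.2.2]
  · refine ⟨(2, ⟨y 2, mem_sphere_zero_iff_norm.2 (hy.1 2)⟩), Subtype.ext ?_⟩
    ext1 k
    fin_cases k <;> simp [chain, chainPoint, hy.2.1, hy.2.2.1, hy.2.2.2]

theorem isQuotientMap_chain : IsQuotientMap chain :=
  chain.continuous.isClosedMap.isQuotientMap chain.continuous chain_surjective

theorem chain_zero_north : chain (0, north) = chain (1, -north) := by
  ext1
  ext1 k
  fin_cases k <;> simp [chain, chainPoint, coe_north]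

theorem chain_two_north : chain (2, north) = chain (1, north) := by
  ext1
  ext1 k
  fin_cases k <;> simp [chain, chainPoint, coe_north]

theorem chain_factorsThrough {Y : Type*} {g : Fin 3 × 𝕊² → Y}
    (h₀₁ : g (0, north) = g (1, -north)) (h₁₂ : g (1, north) = g (2, north)) :
    FactorsThrough g chain := by
  rintro ⟨i, x⟩ ⟨j, y⟩ hxy
  have h := fun k => congrFun (congrArg Subtype.val hxy) k
  have h0 := h 0
  have h1 := h 1
  have h2 := h 2
  fin_cases i <;> fin_cases j <;>
    simp [chain, chainPoint, ← coe_neg_sphere, ← coe_north, SetCoe.ext_iff, neg_eq_iff_eq_neg]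
      at h0 h1 h2 ⊢
  · rw [h0]
  · rw [h0, ← neg_eq_iff_eq_neg.2 h2, h₀₁]
  · exact absurd (h0.symm.trans h1) north_ne_neg_north
  · rw [h2, ← h0, h₀₁]
  · rw [h1]
  · rw [← h2, h1, h₁₂]
  · rw [← h0] at h1
    exact absurd h1 north_ne_neg_north
  · rw [h2, ← h1, h₁₂]
  · rw [h2]

def wedge : C(Fin 3 × 𝕊², WedgeThreeSpheres) := ⟨Quot.mk _, continuous_quot_mk⟩

theorem isQuotientMap_wedge : IsQuotientMap wedge := isQuotientMap_quot_mk

theorem wedge_north (i j : Fin 3) : wedge (i, north) = wedge (j, north) :=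
  Quot.sound ⟨rfl, rfl⟩

theorem wedge_factorsThrough {Y : Type*} {g : Fin 3 × 𝕊² → Y}
    (hg : ∀ i j, g (i, north) = g (j, north)) : FactorsThrough g wedge := by
  have hresp : ∀ a b, wedgeRel a b → g a = g b := by
    rintro ⟨i, x⟩ ⟨j, y⟩ ⟨hx, hy⟩
    obtain rfl : x = north := Subtype.ext hx
    obtain rfl : y = north := Subtype.ext hy
    exact hg i j
  intro a b hab
  exact congrArg (Quot.lift g hresp) hab

def collapseSb : C(Fin 3 × 𝕊², 𝕊²) :=
  ContinuousMap.uncurry ⟨![ContinuousMap.id 𝕊², reflect.comp (hemisphereCollapse east),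
    ContinuousMap.id 𝕊²], continuous_of_discreteTopology⟩

def toWedge : C(X31, WedgeThreeSpheres) :=
  isQuotientMap_chain.lift (wedge.comp (ContinuousMap.fst.prodMk collapseSb))
    (chain_factorsThrough
      (by simp [collapseSb, hemisphereCollapse_east_neg_north, reflect_east, wedge_north 0 1])
      (by simp [collapseSb, hemisphereCollapse_east_north, reflect_east, wedge_north 1 2]))

theorem toWedge_chain (z : Fin 3 × 𝕊²) : toWedge (chain z) = wedge (z.1, collapseSb z) :=
  isQuotientMap_chain.lift_comp_apply _ _ z

def chainArc (u : 𝕊²) (hu : u ≠ -east) : C(ℝ, X31) :=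
  ⟨fun s => chain (1, sphereLineMap u east hu s),
    chain.continuous.comp (continuous_const.prodMk
      (continuous_const.sphereLineMap continuous_const continuous_id _))⟩

theorem chainArc_zero (u : 𝕊²) (hu : u ≠ -east) : chainArc u hu 0 = chain (1, u) := by
  simp [chainArc]

theorem toWedge_chainArc {u : 𝕊²} (hu : u ≠ -east)
    (hue : ⟪(u : EuclideanSpace ℝ (Fin 3)), east⟫ = 0) {s : ℝ} (hs : 0 ≤ s) :
    toWedge (chainArc u hu s) = wedge (1, north) := by
  simp [chainArc, toWedge_chain, collapseSb, hemisphereCollapse_sphereLineMap hu hue hs,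
    reflect_east]

/-- The component `i` of `X31`, with the hemisphere around `north` spread at time `s` along the
arc of `Sb` from its attaching point `u` towards `east`. -/
def tongue (i : Fin 3) (u : 𝕊²) (hu : u ≠ -east) (h : chain (1, u) = chain (i, north)) :
    C(ℝ × 𝕊², X31) :=
  collapseAlong north (chain.curry i) (chainArc u hu) (by simpa [chainArc] using h)

theorem toWedge_tongue {i : Fin 3} {u : 𝕊²} {hu : u ≠ -east} {h : chain (1, u) = chain (i, north)}
    (hue : ⟪(u : EuclideanSpace ℝ (Fin 3)), east⟫ = 0) {s : ℝ} (hs : 0 ≤ s) (x : 𝕊²) :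
    toWedge (tongue i u hu h (s, x)) = toWedge (chain (i, hemisphereCollapse north x)) :=
  map_collapseAlong _ toWedge (fun s hs => by
    rw [toWedge_chainArc hu hue hs, ContinuousMap.curry_apply, ← h, ← chainArc_zero u hu,
      toWedge_chainArc hu hue le_rfl]) hs x

def tongue₀ : C(ℝ × 𝕊², X31) := tongue 0 (-north) neg_north_ne_neg_east chain_zero_north.symm

def tongue₂ : C(ℝ × 𝕊², X31) := tongue 2 north north_ne_neg_east chain_two_north.symm

def ofWedge : C(WedgeThreeSpheres, X31) :=
  isQuotientMap_wedge.lift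
    (ContinuousMap.uncurry ⟨![tongue₀.curry 1, (chain.curry 1).comp reflect, tongue₂.curry 1],
      continuous_of_discreteTopology⟩)
    (wedge_factorsThrough fun i j => by
      fin_cases i <;> fin_cases j <;>
        simp [tongue₀, tongue₂, tongue, collapseAlong_self, chainArc, reflect_north])

theorem ofWedge_wedge (z : Fin 3 × 𝕊²) :
    ofWedge (wedge z) = ![tongue₀.curry 1, (chain.curry 1).comp reflect, tongue₂.curry 1] z.1 z.2 :=
  isQuotientMap_wedge.lift_comp_apply _ _ z

def wedgeCollapse : C(Fin 3 × 𝕊², 𝕊²) :=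
  ContinuousMap.uncurry ⟨![hemisphereCollapse north,
    reflect.comp ((hemisphereCollapse east).comp reflect), hemisphereCollapse north],
    continuous_of_discreteTopology⟩

theorem wedgeCollapse_ne_neg (z : Fin 3 × 𝕊²) : wedgeCollapse z ≠ -z.2 := by
  obtain ⟨i, x⟩ := z
  fin_cases i
  · exact hemisphereCollapse_ne_neg north x
  · exact reflect_hemisphereCollapse_reflect_ne_neg x
  · exact hemisphereCollapse_ne_neg north x

theorem wedgeCollapse_north (i : Fin 3) : wedgeCollapse (i, north) = north := by
  fin_cases i <;> simp [wedgeCollapse, hemisphereCollapse_self, reflect_north, reflect_east]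

theorem toWedge_ofWedge_wedge (z : Fin 3 × 𝕊²) :
    toWedge (ofWedge (wedge z)) = wedge (z.1, wedgeCollapse z) := by
  obtain ⟨i, x⟩ := z
  rw [ofWedge_wedge]
  fin_cases i
  · change toWedge (tongue₀ (1, x)) = wedge (0, hemisphereCollapse north x)
    exact (toWedge_tongue (by simp [inner_north_east]) zero_le_one x).trans (toWedge_chain _)
  · simp [wedgeCollapse, toWedge_chain, collapseSb]
  · change toWedge (tongue₂ (1, x)) = wedge (2, hemisphereCollapse north x)
    exact (toWedge_tongue inner_north_east zero_le_one x).trans (toWedge_chain _)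

theorem toWedge_comp_ofWedge_homotopic :
    (toWedge.comp ofWedge).Homotopic (ContinuousMap.id WedgeThreeSpheres) :=
  homotopic_id_of_ne_neg isQuotientMap_wedge wedgeCollapse wedgeCollapse_ne_neg
    toWedge_ofWedge_wedge fun t => wedge_factorsThrough fun i j => by
      simp only [sphereLineMap_of_eq (wedgeCollapse_north _), wedge_north i j]

def chainCollapse : C(Fin 3 × 𝕊², 𝕊²) :=
  ContinuousMap.uncurry ⟨![hemisphereCollapse north, ContinuousMap.id 𝕊², hemisphereCollapse north],
    continuous_of_discreteTopology⟩

theorem chainCollapse_ne_neg (z : Fin 3 × 𝕊²) : chainCollapse z ≠ -z.2 := by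
  obtain ⟨i, x⟩ := z
  fin_cases i
  · exact hemisphereCollapse_ne_neg north x
  · exact ne_neg_of_mem_sphere ℝ one_ne_zero x
  · exact hemisphereCollapse_ne_neg north x

theorem chainCollapse_zero_north : chainCollapse (0, north) = north :=
  hemisphereCollapse_self north

theorem chainCollapse_one (x : 𝕊²) : chainCollapse (1, x) = x := rfl

theorem chainCollapse_two_north : chainCollapse (2, north) = north :=
  hemisphereCollapse_self north

def chainRetract : C(X31, X31) :=
  isQuotientMap_chain.lift (chain.comp (ContinuousMap.fst.prodMk chainCollapse))
    (chain_factorsThrough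
      (by simpa [chainCollapse_zero_north, chainCollapse_one] using chain_zero_north)
      (by simpa [chainCollapse_two_north, chainCollapse_one] using chain_two_north.symm))

theorem chainRetract_chain (z : Fin 3 × 𝕊²) :
    chainRetract (chain z) = chain (z.1, chainCollapse z) :=
  isQuotientMap_chain.lift_comp_apply _ _ z

theorem chainRetract_homotopic_id : chainRetract.Homotopic (ContinuousMap.id X31) :=
  homotopic_id_of_ne_neg isQuotientMap_chain chainCollapse chainCollapse_ne_neg
    chainRetract_chain fun t => chain_factorsThrough
      (by simp only [sphereLineMap_of_eq chainCollapse_zero_north,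
        sphereLineMap_of_eq (chainCollapse_one _), chain_zero_north])
      (by simp only [sphereLineMap_of_eq chainCollapse_two_north,
        sphereLineMap_of_eq (chainCollapse_one _), chain_two_north])

/-- The tongues shrink back to their attaching points while `Sb` is deformed from
`hemisphereCollapse east` to the identity. -/
def tongueRetraction : Fin 3 → I × 𝕊² → X31 :=
  ![fun p => tongue₀ (1 - p.1, p.2),
    fun p => chain (1, sphereLineMap (hemisphereCollapse east p.2) p.2
      (hemisphereCollapse_ne_neg east p.2) p.1),
    fun p => tongue₂ (1 - p.1, p.2)]

theorem continuous_tongueRetraction (i : Fin 3) : Continuous (tongueRetraction i) := by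
  have hs : Continuous fun p : I × 𝕊² => (1 - (p.1 : ℝ), p.2) :=
    (continuous_const.sub continuous_subtype_val.fst').prodMk continuous_snd
  fin_cases i
  · exact tongue₀.continuous.comp hs
  · exact chain.continuous.comp (continuous_const.prodMk
      (((hemisphereCollapse east).continuous.comp continuous_snd).sphereLineMap continuous_snd
        continuous_subtype_val.fst' _))
  · exact tongue₂.continuous.comp hs

theorem ofWedge_comp_toWedge_homotopic_chainRetract :
    (ofWedge.comp toWedge).Homotopic chainRetract := by
  refine Homotopic.of_isQuotientMap (H := fun p => tongueRetraction p.2.1 (p.1, p.2.2))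
    isQuotientMap_chain (continuous_prod_prod_of_discrete_middle continuous_tongueRetraction)
    (fun z => ?_) (fun z => ?_) (fun t => chain_factorsThrough ?_ ?_)
  · obtain ⟨i, x⟩ := z
    fin_cases i <;>
      simp [tongueRetraction, toWedge_chain, collapseSb, ofWedge_wedge, reflect_reflect]
  · obtain ⟨i, x⟩ := z
    fin_cases i <;>
      simp [tongueRetraction, chainRetract_chain, chainCollapse, tongue₀, tongue₂, tongue,
        collapseAlong_zero]
  · change tongue₀ (1 - t, north) =
      chain (1, sphereLineMap (hemisphereCollapse east (-north)) _ _ t)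
    rw [tongue₀, tongue, collapseAlong_self,
      sphereLineMap_congr hemisphereCollapse_east_neg_north rfl,
      ← sphereLineMap_one_sub neg_north_ne_neg_east]
    rfl
  · change chain (1, sphereLineMap (hemisphereCollapse east north) _ _ t) = tongue₂ (1 - t, north)
    rw [tongue₂, tongue, collapseAlong_self, sphereLineMap_congr hemisphereCollapse_east_north rfl,
      ← sphereLineMap_one_sub north_ne_neg_east]
    rfl

def homotopyEquivWedge : ContinuousMap.HomotopyEquiv X31 WedgeThreeSpheres where
  toFun := toWedge
  invFun := ofWedge
  left_inv := ofWedge_comp_toWedge_homotopic_chainRetract.trans chainRetract_homotopic_id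
  right_inv := toWedge_comp_ofWedge_homotopic

end X31

end

/-- `X_{3,1}` is homotopy equivalent to a wedge of three 2-spheres; in particular the
pairwise intersections of its components are the indicated points. -/
theorem X31_wedge_of_three_spheres :
    Sa ∩ Sb = {fun i => if i = 3 then np else -np} ∧
    Sb ∩ Sc = {fun i => if i = 0 then -np else np} ∧
    Sa ∩ Sc = ∅ ∧
    Nonempty (ContinuousMap.HomotopyEquiv (↥X31) WedgeThreeSpheres) :=
  ⟨X31.Sa_inter_Sb, X31.Sb_inter_Sc, X31.Sa_inter_Sc, ⟨X31.homotopyEquivWedge⟩⟩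
end

section
/- The standard dotted noncrossing matchings of type (n-k,k) with m undotted arcs are in bijection with standard Young tableaux of shape (n−m, m). Explicitly, sending M to the tableau whose bottom row consists of the right endpoints of the undotted arcs of M (in increasing order) and whose top row consists of all other numbers is a bijection. -/
/-- A dotted noncrossing matching of type `(n-k,k)`: a noncrossing matching together with
a chosen subset of dotted arcs (every ray is regarded as dotted). -/
structure DottedNCM (n k : ℕ) extends NCMatching n k where
  dotted : Finset (ℕ × ℕ)
  dotted_subset : dotted ⊆ arcs

/-- A dotted noncrossing matching is standard if no dotted arc is nested beneath any other
arc and no ray lies to the right of any dotted arc. -/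
def DottedNCM.IsStandard {n k : ℕ} (M : DottedNCM n k) : Prop :=
  (∀ d ∈ M.dotted, ∀ q ∈ M.arcs, ¬ (q.1 < d.1 ∧ d.2 < q.2)) ∧
  (∀ r : ℕ, M.toNCMatching.IsRay r → ∀ d ∈ M.dotted, ¬ d.2 < r)

/-- A standard Young tableau of two-row shape `(n-m, m)`: a filling of the two-row diagram
with the numbers `1,…,n`, strictly increasing along rows and down columns. -/
structure TwoRowSYT (n m : ℕ) where
  top : Fin (n - m) → ℕ
  bot : Fin m → ℕ
  top_mono : StrictMono top
  bot_mono : StrictMono bot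
  col_incr : ∀ i : Fin m, ∀ h : (i : ℕ) < n - m, top ⟨i, h⟩ < bot i
  rows_disjoint : ∀ i j, top i ≠ bot j
  range_top : ∀ i, 1 ≤ top i ∧ top i ≤ n
  range_bot : ∀ i, 1 ≤ bot i ∧ bot i ≤ n
  cover : ∀ v, 1 ≤ v → v ≤ n → (∃ i, top i = v) ∨ (∃ i, bot i = v)



/-!
Read the right endpoints `B` of the undotted arcs as closing brackets and all other vertices as
opening brackets. Since every closer has its opener to the left, `2 * #{x ∈ B | x ≤ b} ≤ b` for
`b ∈ B`, which is exactly the column condition of the two-row tableau with bottom row `B`; so the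
map lands in standard tableaux, and tableaux correspond to such ballot sets `B`.

Conversely, in a standard matching an undotted arc encloses only undotted arcs, so the undotted
arcs are recovered from `B` by matching brackets, i.e. by the walk stepping up at `B` and down
elsewhere. The remaining free vertices carry the rays, which come first, followed by the dotted
arcs, which neither nest nor enclose free vertices and hence join consecutive pairs. So the
matching is determined by `B`, and the same recipe builds a standard matching from any ballot set.
-/

open Finset

namespace Nat

variable {p : ℕ → Prop} [DecidablePred p] {x y i : ℕ}

lemma count_eq_count_add_one (hx : p x) (hxy : x < y) (hgap : ∀ z, x < z → z < y → ¬p z) :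
    count p y = count p x + 1 := by
  induction y, hxy using Nat.le_induction with
  | base => simp [count_succ, hx]
  | succ y hxy ih =>
    rw [count_succ, ih fun z h1 h2 ↦ hgap z h1 (by omega), if_neg (hgap y hxy (by omega))]

variable {s : Finset ℕ}

lemma count_mem_eq_card_filter_lt (x : ℕ) : count (· ∈ s) x = #{y ∈ s | y < x} := by
  rw [count_eq_card_filter_range]
  congr 1
  ext
  simp only [mem_filter, mem_range]
  tauto

lemma count_mem_lt_count_mem_iff (hx : x ∈ s) : count (· ∈ s) x < count (· ∈ s) y ↔ x < y :=
  ⟨lt_of_count_lt_count, count_strict_mono hx⟩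

lemma eq_of_count_mem_eq (hx : x ∈ s) (hy : y ∈ s) (h : count (· ∈ s) x = count (· ∈ s) y) :
    x = y :=
  count_injective hx hy h

lemma lt_card_toFinset_of_lt_card (hi : i < #s) :
    ∀ hf : (Set.ofPred (· ∈ s)).Finite, i < #hf.toFinset := fun hf ↦ by
  convert hi
  ext
  simp

lemma nth_mem_finset (hi : i < #s) : nth (· ∈ s) i ∈ s :=
  nth_mem (p := (· ∈ s)) i (lt_card_toFinset_of_lt_card hi)

lemma count_nth_finset (hi : i < #s) : count (· ∈ s) (nth (· ∈ s) i) = i :=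
  count_nth (lt_card_toFinset_of_lt_card hi)

lemma count_lt_card_finset (hx : x ∈ s) : count (· ∈ s) x < #s := by
  have hf : (Set.ofPred (· ∈ s)).Finite := s.finite_toSet
  convert count_lt_card hf hx
  ext
  simp

end Nat

lemma Finset.exists_orderEmbOfFin_eq_iff {α : Type*} [LinearOrder α] {s : Finset α} {k : ℕ}
    (h : #s = k) {x : α} :
    (∃ i, s.orderEmbOfFin h i = x) ↔ x ∈ s := by
  rw [← Set.mem_range, range_orderEmbOfFin, mem_coe]

/-! ## Ballot walks and bracket matching -/

/-- The height after the steps `0, …, x - 1` of the walk that steps up at the elements of `B`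
and down elsewhere. -/
def walkHeight (B : Finset ℕ) (x : ℕ) : ℤ := 2 * Nat.count (· ∈ B) x - x

def IsBallot (B : Finset ℕ) : Prop := ∀ b ∈ B, 2 * #{x ∈ B | x ≤ b} ≤ b

/-- Reading the elements of `B` as closing brackets and all other vertices as opening ones, the
opening bracket matched with `b ∈ B`. -/
def opener (B : Finset ℕ) (b : ℕ) : ℕ :=
  Nat.findGreatest (fun a ↦ walkHeight B (b + 1) ≤ walkHeight B a) b

section Walk

variable {B : Finset ℕ} {x y b b' : ℕ}

lemma walkHeight_succ_of_mem (h : x ∈ B) : walkHeight B (x + 1) = walkHeight B x + 1 := by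
  simp only [walkHeight, Nat.count_succ, h, if_true]
  push_cast
  ring

lemma walkHeight_succ_of_notMem (h : x ∉ B) : walkHeight B (x + 1) = walkHeight B x - 1 := by
  simp only [walkHeight, Nat.count_succ, h, if_false]
  push_cast
  ring

lemma IsBallot.pos (hB : IsBallot B) (hb : b ∈ B) : 0 < b := by
  have : 0 < #{x ∈ B | x ≤ b} := card_pos.2 ⟨b, mem_filter.2 ⟨hb, le_rfl⟩⟩
  have := hB b hb
  omega

lemma walkHeight_lt_of_opener_lt (hx : opener B b < x) (hxb : x ≤ b) :
    walkHeight B x < walkHeight B (b + 1) :=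
  lt_of_not_ge (Nat.findGreatest_is_greatest hx hxb)

lemma walkHeight_add_card_filter (hxy : x ≤ y) :
    walkHeight B x + #{z ∈ Ico x y | z ∈ B} = walkHeight B y + #{z ∈ Ico x y | z ∉ B} := by
  induction y, hxy using Nat.le_induction with
  | base => simp
  | succ y hxy ih =>
    rw [Nat.Ico_succ_right_eq_insert_Ico hxy, filter_insert, filter_insert]
    by_cases hy : y ∈ B
    · rw [if_pos hy, if_neg (not_not.2 hy), card_insert_of_notMem (by simp),
        walkHeight_succ_of_mem hy]
      push_cast
      linarith
    · rw [if_neg hy, if_pos hy, card_insert_of_notMem (by simp), walkHeight_succ_of_notMem hy]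
      push_cast
      linarith

namespace IsBallot

variable (hB : IsBallot B)
include hB

lemma walkHeight_succ_le_walkHeight_one (hb : b ∈ B) :
    walkHeight B (b + 1) ≤ walkHeight B 1 := by
  have h0 : 0 ∉ B := fun h0 ↦ (hB.pos h0).ne rfl
  have hcount : Nat.count (· ∈ B) (b + 1) = #{x ∈ B | x ≤ b} := by
    rw [Nat.count_mem_eq_card_filter_lt]
    simp only [Nat.lt_succ_iff]
  have := hB b hb
  simp only [walkHeight, hcount, Nat.count_one, h0, if_false]
  push_cast
  omega

lemma one_le_opener (hb : b ∈ B) : 1 ≤ opener B b :=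
  Nat.le_findGreatest (hB.pos hb) (hB.walkHeight_succ_le_walkHeight_one hb)

lemma walkHeight_succ_le_walkHeight_opener (hb : b ∈ B) :
    walkHeight B (b + 1) ≤ walkHeight B (opener B b) :=
  Nat.findGreatest_spec (P := fun a ↦ walkHeight B (b + 1) ≤ walkHeight B a) (hB.pos hb)
    (hB.walkHeight_succ_le_walkHeight_one hb)

lemma opener_lt (hb : b ∈ B) : opener B b < b := by
  refine lt_of_le_of_ne (Nat.findGreatest_le b) fun h ↦ ?_
  have := hB.walkHeight_succ_le_walkHeight_opener hb
  rw [h, walkHeight_succ_of_mem hb] at this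
  omega

lemma opener_notMem (hb : b ∈ B) : opener B b ∉ B := fun h ↦ by
  have := walkHeight_lt_of_opener_lt (Nat.lt_succ_self (opener B b)) (hB.opener_lt hb)
  have := hB.walkHeight_succ_le_walkHeight_opener hb
  rw [walkHeight_succ_of_mem h] at *
  omega

lemma walkHeight_opener (hb : b ∈ B) : walkHeight B (opener B b) = walkHeight B (b + 1) := by
  have := walkHeight_lt_of_opener_lt (Nat.lt_succ_self (opener B b)) (hB.opener_lt hb)
  have := hB.walkHeight_succ_le_walkHeight_opener hb
  rw [walkHeight_succ_of_notMem (hB.opener_notMem hb)] at *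
  omega

lemma opener_lt_opener (hb : b ∈ B) (hb' : b' ∈ B) (hbb' : b < b') (h : opener B b' < b) :
    opener B b' < opener B b := by
  have hlt : walkHeight B (b + 1) < walkHeight B (b' + 1) :=
    walkHeight_lt_of_opener_lt (by omega) hbb'
  have hb'_opener := hB.walkHeight_opener hb'
  by_contra! hle
  rcases hle.eq_or_lt with heq | hlt'
  · have := hB.walkHeight_opener hb
    rw [heq] at this
    omega
  · have := walkHeight_lt_of_opener_lt hlt' h.le
    omega

lemma opener_injOn : Set.InjOn (opener B) B := by
  intro b hb b' hb' heq
  by_contra hne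
  rcases Nat.lt_or_gt_of_ne hne with h | h
  · exact (hB.opener_lt_opener hb hb' h (heq ▸ hB.opener_lt hb)).ne heq.symm
  · exact (hB.opener_lt_opener hb' hb h (heq ▸ hB.opener_lt hb')).ne heq

lemma exists_opener_eq (hx : x ∉ B) (hbx : opener B b < x) (hxb : x < b) :
    ∃ b' ∈ B, opener B b' = x := by
  have hxb' : walkHeight B x < walkHeight B (b + 1) := walkHeight_lt_of_opener_lt hbx hxb.le
  have hP : ∃ y, x < y ∧ walkHeight B x ≤ walkHeight B y := ⟨b + 1, by omega, hxb'.le⟩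
  classical
  -- `y` is the first return of the walk to its height at `x`; the step into `y` closes `x`.
  obtain ⟨y, ⟨hxy, hy⟩, below⟩ : ∃ y, (x < y ∧ walkHeight B x ≤ walkHeight B y) ∧
      ∀ z, x < z → z < y → walkHeight B z < walkHeight B x :=
    ⟨Nat.find hP, Nat.find_spec hP, fun z hxz hzy ↦ lt_of_not_ge fun h ↦
      Nat.find_min hP hzy ⟨hxz, h⟩⟩
  have hxy' : x + 1 ≠ y := by
    rintro rfl
    rw [walkHeight_succ_of_notMem hx] at hy
    omega
  obtain ⟨b', rfl⟩ : ∃ b', y = b' + 1 := ⟨y - 1, by omega⟩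
  have hb'x := below b' (by omega) (by omega)
  have hb' : b' ∈ B := by
    by_contra h
    rw [walkHeight_succ_of_notMem h] at hy
    omega
  have hheight : walkHeight B (b' + 1) = walkHeight B x := by
    rw [walkHeight_succ_of_mem hb'] at hy ⊢
    omega
  refine ⟨b', hb', le_antisymm ?_ (Nat.le_findGreatest (by omega) hheight.le)⟩
  by_contra! h
  have := hB.walkHeight_succ_le_walkHeight_opener hb'
  have := below (opener B b') h (by have := hB.opener_lt hb'; omega)
  omega

end IsBallot

end Walk

/-! ## Ballot sets and two-row tableaux -/

@[ext]
structure BallotSet (n m : ℕ) where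
  carrier : Finset ℕ
  subset_Icc : carrier ⊆ Icc 1 n
  card_eq : #carrier = m
  isBallot : IsBallot carrier

section TwoRowFilling

variable {a c : ℕ} {top : Fin a → ℕ} {bot : Fin c → ℕ}

lemma card_filter_image_le_apply (hbot : StrictMono bot) (i : Fin c) :
    #{x ∈ univ.image bot | x ≤ bot i} = i + 1 := by
  rw [filter_image, card_image_of_injective _ hbot.injective]
  simp_rw [hbot.le_iff_le]
  rw [← Fin.card_Iic]
  congr 1
  ext
  simp

lemma two_mul_succ_le_of_top_lt_bot (htop : StrictMono top) (hbot : StrictMono bot)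
    (hdisj : ∀ i j, top i ≠ bot j) (htop1 : ∀ i, 1 ≤ top i) (hbot1 : ∀ j, 1 ≤ bot j)
    {i : Fin c} (hi : (i : ℕ) < a) (hlt : top ⟨i, hi⟩ < bot i) : 2 * (i + 1) ≤ bot i := by
  have hsub : (Iic i).image bot ∪ (Iic ⟨i, hi⟩).image top ⊆ Icc 1 (bot i) := by
    intro v hv
    simp only [mem_union, mem_image, mem_Iic] at hv
    rcases hv with ⟨j, hj, rfl⟩ | ⟨j, hj, rfl⟩
    · exact mem_Icc.2 ⟨hbot1 j, hbot.monotone hj⟩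
    · exact mem_Icc.2 ⟨htop1 j, (htop.monotone hj).trans hlt.le⟩
  have hdisj' : Disjoint ((Iic i).image bot) ((Iic ⟨i, hi⟩).image top) := by
    simp only [disjoint_left, mem_image]
    rintro _ ⟨j, -, rfl⟩ ⟨j', -, h⟩
    exact hdisj j' j h
  have := card_le_card hsub
  rw [card_union_of_disjoint hdisj', card_image_of_injective _ hbot.injective,
    card_image_of_injective _ htop.injective, Fin.card_Iic, Fin.card_Iic, Nat.card_Icc] at this
  simp only at this
  omega

lemma top_lt_bot_of_two_mul_succ_le (htop : StrictMono top) (hbot : StrictMono bot)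
    (hdisj : ∀ i j, top i ≠ bot j) {i : Fin c}
    (hcover : ∀ v, 1 ≤ v → v ≤ bot i → (∃ j, top j = v) ∨ ∃ j, bot j = v)
    (hi : (i : ℕ) < a) (h : 2 * (i + 1) ≤ bot i) : top ⟨i, hi⟩ < bot i := by
  by_contra! hle
  have hlt := lt_of_le_of_ne hle (hdisj _ _).symm
  have hsub : Icc 1 (bot i) ⊆ (Iic i).image bot ∪ (Iio ⟨i, hi⟩).image top := by
    intro v hv
    obtain ⟨hv1, hv2⟩ := mem_Icc.1 hv
    simp only [mem_union, mem_image, mem_Iic, mem_Iio]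
    rcases hcover v hv1 hv2 with ⟨j, rfl⟩ | ⟨j, rfl⟩
    · exact Or.inr ⟨j, htop.lt_iff_lt.1 (hv2.trans_lt hlt), rfl⟩
    · exact Or.inl ⟨j, hbot.le_iff_le.1 hv2, rfl⟩
  have := (card_le_card hsub).trans (card_union_le _ _)
  rw [card_image_of_injective _ hbot.injective, card_image_of_injective _ htop.injective,
    Fin.card_Iic, Fin.card_Iio, Nat.card_Icc] at this
  simp only at this
  omega

end TwoRowFilling

lemma TwoRowSYT.ext {n m : ℕ} {T T' : TwoRowSYT n m} (htop : T.top = T'.top)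
    (hbot : T.bot = T'.bot) : T = T' := by
  cases T
  cases T'
  subst htop hbot
  rfl

namespace BallotSet

variable {n m : ℕ} (G : BallotSet n m)

lemma card_Icc_sdiff : #(Icc 1 n \ G.carrier) = n - m := by
  rw [card_sdiff_of_subset G.subset_Icc, G.card_eq, Nat.card_Icc, Nat.add_sub_cancel]

def top : Fin (n - m) ↪o ℕ := (Icc 1 n \ G.carrier).orderEmbOfFin G.card_Icc_sdiff

def bot : Fin m ↪o ℕ := G.carrier.orderEmbOfFin G.card_eq

lemma top_ne_bot (i : Fin (n - m)) (j : Fin m) : G.top i ≠ G.bot j := fun h ↦ by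
  have := orderEmbOfFin_mem _ G.card_Icc_sdiff i
  rw [top] at h
  rw [h] at this
  exact (mem_sdiff.1 this).2 (orderEmbOfFin_mem _ _ j)

lemma exists_bot_eq_iff {v : ℕ} : (∃ i, G.bot i = v) ↔ v ∈ G.carrier :=
  exists_orderEmbOfFin_eq_iff _

lemma exists_top_or_bot_eq {v : ℕ} (h1 : 1 ≤ v) (hn : v ≤ n) :
    (∃ i, G.top i = v) ∨ ∃ i, G.bot i = v := by
  simp only [top, bot, exists_orderEmbOfFin_eq_iff, mem_sdiff, mem_Icc]
  tauto

lemma bot_mem_Icc (i : Fin m) : G.bot i ∈ Icc 1 n :=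
  G.subset_Icc (orderEmbOfFin_mem _ _ i)

lemma two_mul_succ_le_bot (i : Fin m) : 2 * (i + 1) ≤ G.bot i := by
  have h := G.isBallot _ (orderEmbOfFin_mem _ G.card_eq i)
  have hcard := card_filter_image_le_apply (orderEmbOfFin G.carrier G.card_eq).strictMono i
  rw [image_orderEmbOfFin_univ] at hcard
  rwa [hcard] at h

def toTwoRowSYT : TwoRowSYT n m where
  top := G.top
  bot := G.bot
  top_mono := G.top.strictMono
  bot_mono := G.bot.strictMono
  rows_disjoint := G.top_ne_bot
  range_top i := mem_Icc.1 (mem_sdiff.1 (orderEmbOfFin_mem _ _ i)).1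
  range_bot i := mem_Icc.1 (G.bot_mem_Icc i)
  cover _ := G.exists_top_or_bot_eq
  col_incr i hi := top_lt_bot_of_two_mul_succ_le G.top.strictMono G.bot.strictMono G.top_ne_bot
    (fun _ h1 h2 ↦ G.exists_top_or_bot_eq h1 (h2.trans (mem_Icc.1 (G.bot_mem_Icc i)).2)) hi
    (G.two_mul_succ_le_bot i)

end BallotSet

namespace TwoRowSYT

variable {n m : ℕ} (T : TwoRowSYT n m)

def toBallotSet (hmn : 2 * m ≤ n) : BallotSet n m where
  carrier := univ.image T.bot
  subset_Icc := by
    simp only [subset_iff, mem_image, mem_univ, true_and, mem_Icc, forall_exists_index]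
    rintro _ i rfl
    exact T.range_bot i
  card_eq := by rw [card_image_of_injective _ T.bot_mono.injective, card_univ, Fintype.card_fin]
  isBallot := by
    simp only [IsBallot, mem_image, mem_univ, true_and, forall_exists_index]
    rintro _ i rfl
    rw [card_filter_image_le_apply T.bot_mono]
    exact two_mul_succ_le_of_top_lt_bot T.top_mono T.bot_mono T.rows_disjoint
      (fun i ↦ (T.range_top i).1) (fun j ↦ (T.range_bot j).1) (by omega) (T.col_incr i _)

end TwoRowSYT

lemma BallotSet.toBallotSet_toTwoRowSYT {n m : ℕ} (hmn : 2 * m ≤ n) (G : BallotSet n m) :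
    G.toTwoRowSYT.toBallotSet hmn = G :=
  BallotSet.ext (image_orderEmbOfFin_univ _ _)

lemma TwoRowSYT.toTwoRowSYT_toBallotSet {n m : ℕ} (hmn : 2 * m ≤ n) (T : TwoRowSYT n m) :
    (T.toBallotSet hmn).toTwoRowSYT = T := by
  refine TwoRowSYT.ext ?_ ?_
  · refine (orderEmbOfFin_unique _ (fun i ↦ ?_) T.top_mono).symm
    refine mem_sdiff.2 ⟨mem_Icc.2 (T.range_top i), ?_⟩
    simp only [toBallotSet, mem_image, mem_univ, true_and, not_exists]
    exact fun j h ↦ T.rows_disjoint i j h.symm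
  · exact (orderEmbOfFin_unique _ (fun i ↦ mem_image_of_mem _ (mem_univ i)) T.bot_mono).symm

def ballotSetEquivTwoRowSYT {n m : ℕ} (hmn : 2 * m ≤ n) : BallotSet n m ≃ TwoRowSYT n m where
  toFun := BallotSet.toTwoRowSYT
  invFun T := T.toBallotSet hmn
  left_inv := BallotSet.toBallotSet_toTwoRowSYT hmn
  right_inv := TwoRowSYT.toTwoRowSYT_toBallotSet hmn

/-! ## Standard dotted matchings -/

namespace NCMatching

variable {n k : ℕ} (M : NCMatching n k) {p q : ℕ × ℕ} {x : ℕ}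

lemma fst_lt_snd_s13 (hp : p ∈ M.arcs) : p.1 < p.2 := (M.mem_range p hp).2.1

lemma fst_injOn : Set.InjOn Prod.fst (M.arcs : Set (ℕ × ℕ)) := fun p hp q hq h ↦
  by_contra fun hpq ↦ (M.endpoints_distinct p hp q hq hpq).1 h

lemma snd_injOn : Set.InjOn Prod.snd (M.arcs : Set (ℕ × ℕ)) := fun p hp q hq h ↦
  by_contra fun hpq ↦ (M.endpoints_distinct p hp q hq hpq).2.2.2 h

lemma card_image_fst {A : Finset (ℕ × ℕ)} (hA : A ⊆ M.arcs) : #(A.image Prod.fst) = #A :=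
  card_image_of_injOn (M.fst_injOn.mono hA)

lemma card_image_snd {A : Finset (ℕ × ℕ)} (hA : A ⊆ M.arcs) : #(A.image Prod.snd) = #A :=
  card_image_of_injOn (M.snd_injOn.mono hA)

lemma fst_ne_snd (hp : p ∈ M.arcs) (hq : q ∈ M.arcs) : p.1 ≠ q.2 := by
  by_cases hpq : p = q
  · subst hpq
    exact (M.fst_lt_snd_s13 hp).ne
  · exact (M.endpoints_distinct p hp q hq hpq).2.1

lemma snd_lt_of_fst_mem_Ioo (hp : p ∈ M.arcs) (hq : q ∈ M.arcs) (h1 : p.1 < q.1)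
    (h2 : q.1 < p.2) : q.2 < p.2 := by
  have hne : q.2 ≠ p.2 := fun h ↦ by
    rw [M.snd_injOn hq hp h] at h1
    exact h1.false
  have := M.noncross p hp q hq
  omega

lemma lt_fst_of_snd_mem_Ioo (hp : p ∈ M.arcs) (hq : q ∈ M.arcs) (h1 : p.1 < q.2)
    (h2 : q.2 < p.2) : p.1 < q.1 := by
  have hne : q.1 ≠ p.1 := fun h ↦ by
    rw [M.fst_injOn hq hp h] at h2
    exact h2.false
  have := M.noncross q hq p hp
  have := M.fst_lt_snd_s13 hq
  omega

lemma exists_nested_of_mem_Ioo (hp : p ∈ M.arcs) (h1 : p.1 < x) (h2 : x < p.2) :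
    ∃ q ∈ M.arcs, (x = q.1 ∨ x = q.2) ∧ p.1 < q.1 ∧ q.2 < p.2 := by
  obtain ⟨q, hq, hx⟩ := M.no_ray_under p hp x h1 h2
  refine ⟨q, hq, hx, ?_⟩
  rcases hx with rfl | rfl
  · exact ⟨h1, M.snd_lt_of_fst_mem_Ioo hp hq h1 h2⟩
  · exact ⟨M.lt_fst_of_snd_mem_Ioo hp hq h1 h2, h2⟩

end NCMatching

namespace DottedNCM

variable {n k m : ℕ} (M : DottedNCM n k) {p q d d' : ℕ × ℕ} {b x : ℕ}

lemma ext {M M' : DottedNCM n k} (harcs : M.arcs = M'.arcs)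
    (hdotted : M.dotted = M'.dotted) : M = M' := by
  obtain ⟨⟨arcs, _, _, _, _, _⟩, dotted, _⟩ := M
  obtain ⟨⟨arcs', _, _, _, _, _⟩, dotted', _⟩ := M'
  subst harcs hdotted
  rfl

def undotted : Finset (ℕ × ℕ) := M.arcs \ M.dotted

/-- The bottom row of the tableau of `M`. -/
def closers : Finset ℕ := M.undotted.image Prod.snd

lemma undotted_subset : M.undotted ⊆ M.arcs := sdiff_subset

lemma mem_closers : b ∈ M.closers ↔ ∃ q ∈ M.undotted, q.2 = b := mem_image

lemma fst_notMem_closers (hq : q ∈ M.arcs) : q.1 ∉ M.closers := fun h ↦ by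
  obtain ⟨p, hp, hpq⟩ := M.mem_closers.1 h
  exact M.fst_ne_snd hq (M.undotted_subset hp) hpq.symm

lemma closers_subset_Icc : M.closers ⊆ Icc 1 n := by
  simp only [subset_iff, mem_closers, mem_Icc]
  rintro _ ⟨q, hq, rfl⟩
  have := M.mem_range q (M.undotted_subset hq)
  omega

/-- Matching each closer `≤ b` with its left endpoint injects into the non-closers `≤ b`. -/
lemma isBallot_closers : IsBallot M.closers := by
  intro b _
  set A := {q ∈ M.undotted | q.2 ≤ b}
  have hA : A ⊆ M.arcs := (filter_subset _ _).trans M.undotted_subset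
  have hsnd : {x ∈ M.closers | x ≤ b} = A.image Prod.snd := by
    ext
    simp only [closers, mem_filter, mem_image, A]
    aesop
  have hsub : A.image Prod.snd ∪ A.image Prod.fst ⊆ Icc 1 b := by
    simp only [subset_iff, mem_union, mem_image, mem_filter, mem_Icc, A]
    rintro _ (⟨q, ⟨hq, hqb⟩, rfl⟩ | ⟨q, ⟨hq, hqb⟩, rfl⟩) <;>
      have := M.mem_range q (M.undotted_subset hq) <;> omega
  have hdisj : Disjoint (A.image Prod.snd) (A.image Prod.fst) := by
    simp only [disjoint_left, mem_image]
    rintro _ ⟨p, hp, rfl⟩ ⟨q, hq, hqp⟩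
    exact M.fst_ne_snd (hA hq) (hA hp) hqp
  have := card_le_card hsub
  rw [card_union_of_disjoint hdisj, M.card_image_snd hA, M.card_image_fst hA,
    Nat.card_Icc] at this
  rw [hsnd, M.card_image_snd hA]
  omega

lemma card_dotted (h : #M.undotted = m) : #M.dotted = k - m := by
  have := card_sdiff_add_card_eq_card M.dotted_subset
  rw [← undotted, h, M.card_arcs] at this
  omega

def toBallotSet (h : #M.undotted = m) : BallotSet n m where
  carrier := M.closers
  subset_Icc := M.closers_subset_Icc
  card_eq := by rw [closers, M.card_image_snd M.undotted_subset, h]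
  isBallot := M.isBallot_closers

variable {M}

lemma filter_mem_closers_subset (hp : p ∈ M.undotted) :
    {z ∈ Ico p.1 (p.2 + 1) | z ∈ M.closers} ⊆
      {q ∈ M.undotted | p.1 ≤ q.1 ∧ q.2 ≤ p.2}.image Prod.snd := by
  intro z hz
  simp only [mem_filter, mem_Ico] at hz
  obtain ⟨⟨hpz, hz⟩, hzB⟩ := hz
  obtain ⟨q, hq, rfl⟩ := M.mem_closers.1 hzB
  refine mem_image_of_mem _ (mem_filter.2 ⟨hq, ?_, by omega⟩)
  have hq' := M.undotted_subset hq
  have hp' := M.undotted_subset hp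
  rcases (Nat.lt_succ_iff.1 hz).lt_or_eq with hz | hz
  · rcases hpz.lt_or_eq with hpz | hpz
    · exact (M.lt_fst_of_snd_mem_Ioo hp' hq' hpz (by omega)).le
    · exact absurd (hpz ▸ M.mem_closers.2 ⟨q, hq, rfl⟩) (M.fst_notMem_closers hp')
  · rw [M.snd_injOn hq' hp' (by omega)]

namespace IsStandard

variable (hM : M.IsStandard)
include hM

lemma exists_undotted_nested (hp : p ∈ M.arcs) (h1 : p.1 < x) (h2 : x < p.2) :
    ∃ q ∈ M.undotted, (x = q.1 ∨ x = q.2) ∧ p.1 < q.1 ∧ q.2 < p.2 := by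
  obtain ⟨q, hq, hx, hnest⟩ := M.exists_nested_of_mem_Ioo hp h1 h2
  exact ⟨q, mem_sdiff.2 ⟨hq, fun hd ↦ hM.1 q hd p hp hnest⟩, hx, hnest⟩

lemma notMem_Ioo_of_dotted (hd : d ∈ M.arcs) (hd' : d' ∈ M.dotted) (hx : x = d'.1 ∨ x = d'.2) :
    ¬(d.1 < x ∧ x < d.2) := by
  rintro ⟨h1, h2⟩
  obtain ⟨q, hq, hxq, -⟩ := hM.exists_undotted_nested hd h1 h2
  have hne : d' ≠ q := by rintro rfl; exact (mem_sdiff.1 hq).2 hd'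
  have := M.endpoints_distinct d' (M.dotted_subset hd') q (M.undotted_subset hq) hne
  omega

lemma dotted_disjoint (hd : d ∈ M.dotted) (hd' : d' ∈ M.dotted) (hne : d ≠ d') :
    d'.2 < d.1 ∨ d.2 < d'.1 := by
  have := hM.notMem_Ioo_of_dotted (M.dotted_subset hd) hd' (.inl rfl)
  have := hM.notMem_Ioo_of_dotted (M.dotted_subset hd) hd' (.inr rfl)
  have := hM.notMem_Ioo_of_dotted (M.dotted_subset hd') hd (.inl rfl)
  have := M.endpoints_distinct d (M.dotted_subset hd) d' (M.dotted_subset hd') hne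
  have := M.fst_lt_snd_s13 (M.dotted_subset hd)
  have := M.fst_lt_snd_s13 (M.dotted_subset hd')
  omega

lemma ray_lt_dotted (hr : M.IsRay x) (hd : d ∈ M.dotted) : x < d.1 := by
  have hd' := M.dotted_subset hd
  have hends := hr.2.2
  have hinside : ¬(d.1 < x ∧ x < d.2) := fun ⟨h1, h2⟩ ↦ by
    obtain ⟨q, hq, hxq⟩ := M.no_ray_under d hd' x h1 h2
    have := hends q hq
    omega
  have := hends d hd'
  have := hM.2 x hr d hd
  omega

lemma filter_notMem_closers_eq (hp : p ∈ M.undotted) (hx : p.1 ≤ x) :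
    {z ∈ Ico x (p.2 + 1) | z ∉ M.closers} =
      {q ∈ M.undotted | x ≤ q.1 ∧ q.2 ≤ p.2}.image Prod.fst := by
  have hp2 : p.2 ∈ M.closers := M.mem_closers.2 ⟨p, hp, rfl⟩
  ext z
  simp only [mem_filter, mem_Ico, mem_image]
  constructor
  · rintro ⟨⟨hxz, hz⟩, hzB⟩
    have hzp : z ≠ p.2 := by rintro rfl; exact hzB hp2
    rcases (hx.trans hxz).eq_or_lt with rfl | hpz
    · exact ⟨p, ⟨hp, hxz, le_rfl⟩, rfl⟩
    obtain ⟨q, hq, rfl | rfl, -, hqp⟩ :=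
      hM.exists_undotted_nested (M.undotted_subset hp) hpz (by omega)
    · exact ⟨q, ⟨hq, hxz, hqp.le⟩, rfl⟩
    · exact absurd (M.mem_closers.2 ⟨q, hq, rfl⟩) hzB
  · rintro ⟨q, ⟨hq, hxq, hqp⟩, rfl⟩
    have := M.fst_lt_snd_s13 (M.undotted_subset hq)
    exact ⟨⟨hxq, by omega⟩, M.fst_notMem_closers (M.undotted_subset hq)⟩

/-- In a standard matching an undotted arc encloses only undotted arcs, so its closers balance its
openers, and outnumber them on each proper final segment of the arc. -/
lemma opener_closers (hp : p ∈ M.undotted) : opener M.closers p.2 = p.1 := by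
  have hp' := M.undotted_subset hp
  have hlt := M.fst_lt_snd_s13 hp'
  set S : ℕ → Finset (ℕ × ℕ) := fun x ↦ {q ∈ M.undotted | x ≤ q.1 ∧ q.2 ≤ p.2}
  have hS : ∀ x, S x ⊆ M.arcs := fun x ↦ (filter_subset _ _).trans M.undotted_subset
  have hopen : ∀ x, p.1 ≤ x → #{z ∈ Ico x (p.2 + 1) | z ∉ M.closers} = #(S x) := fun x hx ↦ by
    rw [hM.filter_notMem_closers_eq hp hx, M.card_image_fst (hS x)]
  refine Nat.findGreatest_eq_iff.2 ⟨hlt.le, fun _ ↦ ?_, fun x hpx hxp ↦ ?_⟩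
  · have h := walkHeight_add_card_filter (B := M.closers) (show p.1 ≤ p.2 + 1 by omega)
    have := card_le_card (filter_mem_closers_subset hp)
    rw [M.card_image_snd (hS _), ← hopen p.1 le_rfl] at this
    omega
  · have h := walkHeight_add_card_filter (B := M.closers) (show x ≤ p.2 + 1 by omega)
    have hsub : insert p.2 ((S x).image Prod.snd) ⊆ {z ∈ Ico x (p.2 + 1) | z ∈ M.closers} := by
      rw [insert_subset_iff]
      refine ⟨mem_filter.2 ⟨mem_Ico.2 ⟨hxp, by omega⟩, M.mem_closers.2 ⟨p, hp, rfl⟩⟩, ?_⟩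
      simp only [subset_iff, mem_image, mem_filter, mem_Ico, S]
      rintro _ ⟨q, ⟨hq, hxq, hqp⟩, rfl⟩
      have := M.fst_lt_snd_s13 (M.undotted_subset hq)
      exact ⟨⟨by omega, by omega⟩, M.mem_closers.2 ⟨q, hq, rfl⟩⟩
    have hnotin : p.2 ∉ (S x).image Prod.snd := by
      simp only [mem_image, mem_filter, not_exists, not_and, S]
      rintro q ⟨hq, hxq, -⟩ hqp
      rw [M.snd_injOn (M.undotted_subset hq) hp' hqp] at hxq
      omega
    have := card_le_card hsub
    rw [card_insert_of_notMem hnotin, M.card_image_snd (hS x), ← hopen x hpx.le] at this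
    omega

end IsStandard

end DottedNCM

/-! ## From ballot sets to standard dotted matchings -/

namespace BallotSet

variable {n m k : ℕ} (G : BallotSet n m) {p q : ℕ × ℕ} {x y : ℕ}

def undottedArcs : Finset (ℕ × ℕ) := G.carrier.image fun b ↦ (opener G.carrier b, b)

def openers : Finset ℕ := G.carrier.image (opener G.carrier)

/-- The vertices carrying the rays and the dotted arcs. -/
def free : Finset ℕ := Icc 1 n \ (G.carrier ∪ G.openers)

/-- The dotted arcs join the free vertices of ranks `n - 2k + 2j` and `n - 2k + 2j + 1`; the
`n - 2k` free vertices of smaller rank carry the rays. -/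
noncomputable def dottedArcs (k : ℕ) : Finset (ℕ × ℕ) :=
  (range (k - m)).image fun j ↦
    (Nat.nth (· ∈ G.free) (n - 2 * k + 2 * j), Nat.nth (· ∈ G.free) (n - 2 * k + 2 * j + 1))

lemma card_openers : #G.openers = m := by
  rw [openers, card_image_of_injOn G.isBallot.opener_injOn, G.card_eq]

lemma card_undottedArcs : #G.undottedArcs = m := by
  rw [undottedArcs, card_image_of_injective _ fun b b' h ↦ (Prod.ext_iff.1 h).2, G.card_eq]

lemma card_free : #G.free = n - 2 * m := by
  have hdisj : Disjoint G.carrier G.openers := by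
    simp only [disjoint_right, openers, mem_image]
    rintro _ ⟨b, hb, rfl⟩
    exact G.isBallot.opener_notMem hb
  have hsub : G.openers ⊆ Icc 1 n := by
    simp only [subset_iff, openers, mem_image, mem_Icc]
    rintro _ ⟨b, hb, rfl⟩
    have := G.isBallot.one_le_opener hb
    have := G.isBallot.opener_lt hb
    have := mem_Icc.1 (G.subset_Icc hb)
    omega
  rw [free, card_sdiff_of_subset (union_subset G.subset_Icc hsub), card_union_of_disjoint hdisj,
    G.card_eq, G.card_openers, Nat.card_Icc]
  omega

variable {G}

lemma mem_undottedArcs : p ∈ G.undottedArcs ↔ ∃ b ∈ G.carrier, (opener G.carrier b, b) = p :=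
  mem_image

lemma mk_mem_undottedArcs {b : ℕ} (hb : b ∈ G.carrier) :
    (opener G.carrier b, b) ∈ G.undottedArcs :=
  mem_undottedArcs.2 ⟨b, hb, rfl⟩

lemma mem_openers : x ∈ G.openers ↔ ∃ b ∈ G.carrier, opener G.carrier b = x := mem_image

lemma mem_free : x ∈ G.free ↔ (1 ≤ x ∧ x ≤ n) ∧ x ∉ G.carrier ∧ x ∉ G.openers := by
  simp [free, not_or]

lemma undottedArcs_range (hp : p ∈ G.undottedArcs) : 1 ≤ p.1 ∧ p.1 < p.2 ∧ p.2 ≤ n := by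
  obtain ⟨b, hb, rfl⟩ := mem_undottedArcs.1 hp
  exact ⟨G.isBallot.one_le_opener hb, G.isBallot.opener_lt hb, (mem_Icc.1 (G.subset_Icc hb)).2⟩

lemma undottedArcs_endpoints_distinct (hp : p ∈ G.undottedArcs) (hq : q ∈ G.undottedArcs)
    (hpq : p ≠ q) : p.1 ≠ q.1 ∧ p.1 ≠ q.2 ∧ p.2 ≠ q.1 ∧ p.2 ≠ q.2 := by
  obtain ⟨b, hb, rfl⟩ := mem_undottedArcs.1 hp
  obtain ⟨b', hb', rfl⟩ := mem_undottedArcs.1 hq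
  have hbb' : b ≠ b' := by rintro rfl; exact hpq rfl
  exact ⟨fun h ↦ hbb' (G.isBallot.opener_injOn hb hb' h),
    fun (h : opener G.carrier b = b') ↦ G.isBallot.opener_notMem hb (h ▸ hb'),
    fun (h : b = opener G.carrier b') ↦ G.isBallot.opener_notMem hb' (h ▸ hb), hbb'⟩

lemma notMem_free_of_mem_undottedArcs (hp : p ∈ G.undottedArcs) (hx : x = p.1 ∨ x = p.2) :
    x ∉ G.free := by
  obtain ⟨b, hb, rfl⟩ := mem_undottedArcs.1 hp
  rw [mem_free]
  rcases hx with rfl | rfl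
  · exact fun h ↦ h.2.2 (mem_openers.2 ⟨_, hb, rfl⟩)
  · exact fun h ↦ h.2.1 hb

lemma exists_mem_undottedArcs_of_notMem_free (h1 : 1 ≤ x) (hn : x ≤ n) (hx : x ∉ G.free) :
    ∃ q ∈ G.undottedArcs, x = q.1 ∨ x = q.2 := by
  simp only [mem_free, h1, hn, true_and, not_and_or, not_not] at hx
  rcases hx with hx | hx
  · exact ⟨_, mk_mem_undottedArcs hx, Or.inr rfl⟩
  · obtain ⟨b, hb, rfl⟩ := mem_openers.1 hx
    exact ⟨_, mk_mem_undottedArcs hb, Or.inl rfl⟩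

lemma notMem_free_of_mem_Ioo (hp : p ∈ G.undottedArcs) (h1 : p.1 < x) (h2 : x < p.2) :
    x ∉ G.free := by
  obtain ⟨b, hb, rfl⟩ := mem_undottedArcs.1 hp
  by_cases hx : x ∈ G.carrier
  · exact fun h ↦ (mem_free.1 h).2.1 hx
  · obtain ⟨b', hb', rfl⟩ := G.isBallot.exists_opener_eq hx h1 h2
    exact fun h ↦ (mem_free.1 h).2.2 (mem_openers.2 ⟨b', hb', rfl⟩)

variable (hk : 2 * k ≤ n) (hm : m ≤ k)
include hk hm

lemma mem_dottedArcs : p ∈ G.dottedArcs k ↔ p.1 ∈ G.free ∧ p.2 ∈ G.free ∧ ∃ j < k - m,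
    Nat.count (· ∈ G.free) p.1 = n - 2 * k + 2 * j ∧
      Nat.count (· ∈ G.free) p.2 = n - 2 * k + 2 * j + 1 := by
  have hcard := G.card_free
  simp only [dottedArcs, mem_image, mem_range]
  constructor
  · rintro ⟨j, hj, rfl⟩
    exact ⟨Nat.nth_mem_finset (by omega), Nat.nth_mem_finset (by omega), j, hj,
      Nat.count_nth_finset (by omega), Nat.count_nth_finset (by omega)⟩
  · rintro ⟨h1, h2, j, hj, hr1, hr2⟩
    refine ⟨j, hj, Prod.ext ?_ ?_⟩
    · rw [← hr1, Nat.nth_count h1]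
    · rw [← hr2, Nat.nth_count h2]

lemma card_dottedArcs : #(G.dottedArcs k) = k - m := by
  have hcard := G.card_free
  rw [dottedArcs, card_image_of_injOn, card_range]
  intro j hj j' hj' h
  have := congrArg (Nat.count (· ∈ G.free) ·.1) h
  simp only [coe_range, Set.mem_Iio] at hj hj' this
  rw [Nat.count_nth_finset (by omega), Nat.count_nth_finset (by omega)] at this
  omega

lemma mem_free_of_mem_dottedArcs (hp : p ∈ G.dottedArcs k) (hx : x = p.1 ∨ x = p.2) :
    x ∈ G.free := by
  obtain ⟨h1, h2, -⟩ := (mem_dottedArcs hk hm).1 hp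
  rcases hx with rfl | rfl <;> assumption

lemma dottedArcs_range (hp : p ∈ G.dottedArcs k) : 1 ≤ p.1 ∧ p.1 < p.2 ∧ p.2 ≤ n := by
  obtain ⟨h1, h2, j, -, hr1, hr2⟩ := (mem_dottedArcs hk hm).1 hp
  exact ⟨(mem_free.1 h1).1.1, Nat.lt_of_count_lt_count (p := (· ∈ G.free)) (by omega),
    (mem_free.1 h2).1.2⟩

lemma notMem_free_of_mem_Ioo_dottedArcs (hp : p ∈ G.dottedArcs k) (h1 : p.1 < x)
    (h2 : x < p.2) : x ∉ G.free := fun hx ↦ by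
  obtain ⟨hp1, -, j, -, hr1, hr2⟩ := (mem_dottedArcs hk hm).1 hp
  have := (Nat.count_mem_lt_count_mem_iff hp1).2 h1
  have := (Nat.count_mem_lt_count_mem_iff hx).2 h2
  omega

lemma dottedArcs_disjoint (hp : p ∈ G.dottedArcs k) (hq : q ∈ G.dottedArcs k) (hpq : p ≠ q) :
    p.2 < q.1 ∨ q.2 < p.1 := by
  obtain ⟨hp1, hp2, j, -, hp1r, hp2r⟩ := (mem_dottedArcs hk hm).1 hp
  obtain ⟨hq1, hq2, j', -, hq1r, hq2r⟩ := (mem_dottedArcs hk hm).1 hq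
  rcases lt_trichotomy j j' with h | rfl | h
  · exact .inl (Nat.lt_of_count_lt_count (p := (· ∈ G.free)) (by omega))
  · exact absurd (Prod.ext (Nat.eq_of_count_mem_eq hp1 hq1 (by omega))
      (Nat.eq_of_count_mem_eq hp2 hq2 (by omega))) hpq
  · exact .inr (Nat.lt_of_count_lt_count (p := (· ∈ G.free)) (by omega))

lemma le_count_fst_of_mem_dottedArcs (hp : p ∈ G.dottedArcs k) :
    n - 2 * k ≤ Nat.count (· ∈ G.free) p.1 := by
  obtain ⟨-, -, j, -, h1, -⟩ := (mem_dottedArcs hk hm).1 hp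
  omega

lemma exists_mem_dottedArcs_of_le_count (hx : x ∈ G.free)
    (hr : n - 2 * k ≤ Nat.count (· ∈ G.free) x) : ∃ p ∈ G.dottedArcs k, x = p.1 ∨ x = p.2 := by
  have hcard := G.card_free
  have hlt : Nat.count (· ∈ G.free) x < #G.free := Nat.count_lt_card_finset hx
  set j := (Nat.count (· ∈ G.free) x - (n - 2 * k)) / 2
  refine ⟨(Nat.nth (· ∈ G.free) (n - 2 * k + 2 * j), Nat.nth (· ∈ G.free) (n - 2 * k + 2 * j + 1)),
    mem_image_of_mem _ (mem_range.2 (by omega)), ?_⟩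
  rw [← Nat.nth_count (p := (· ∈ G.free)) hx]
  rcases Nat.even_or_odd (Nat.count (· ∈ G.free) x - (n - 2 * k)) with ⟨c, hc⟩ | ⟨c, hc⟩
  · exact .inl (congrArg _ (by omega))
  · exact .inr (congrArg _ (by omega))

lemma endpoint_ne_endpoint (hp : p ∈ G.undottedArcs) (hq : q ∈ G.dottedArcs k)
    (hx : x = p.1 ∨ x = p.2) (hy : y = q.1 ∨ y = q.2) : x ≠ y := by
  rintro rfl
  exact notMem_free_of_mem_undottedArcs hp hx (mem_free_of_mem_dottedArcs hk hm hq hy)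

lemma disjoint_undottedArcs_dottedArcs : Disjoint G.undottedArcs (G.dottedArcs k) :=
  disjoint_left.2 fun _ hp hq ↦ endpoint_ne_endpoint hk hm hp hq (.inl rfl) (.inl rfl) rfl

lemma arcs_range (hp : p ∈ G.undottedArcs ∪ G.dottedArcs k) : 1 ≤ p.1 ∧ p.1 < p.2 ∧ p.2 ≤ n :=
  (mem_union.1 hp).elim undottedArcs_range (dottedArcs_range hk hm)

lemma arcs_endpoints_distinct (hp : p ∈ G.undottedArcs ∪ G.dottedArcs k)
    (hq : q ∈ G.undottedArcs ∪ G.dottedArcs k) (hpq : p ≠ q) :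
    p.1 ≠ q.1 ∧ p.1 ≠ q.2 ∧ p.2 ≠ q.1 ∧ p.2 ≠ q.2 := by
  rcases mem_union.1 hp with hp | hp <;> rcases mem_union.1 hq with hq | hq
  · exact undottedArcs_endpoints_distinct hp hq hpq
  · have hne {x y} := endpoint_ne_endpoint (x := x) (y := y) hk hm hp hq
    exact ⟨hne (.inl rfl) (.inl rfl), hne (.inl rfl) (.inr rfl), hne (.inr rfl) (.inl rfl),
      hne (.inr rfl) (.inr rfl)⟩
  · have hne {x y} := fun hx hy ↦ (endpoint_ne_endpoint (x := x) (y := y) hk hm hq hp hy hx).symm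
    exact ⟨hne (.inl rfl) (.inl rfl), hne (.inl rfl) (.inr rfl), hne (.inr rfl) (.inl rfl),
      hne (.inr rfl) (.inr rfl)⟩
  · have := dottedArcs_disjoint hk hm hp hq hpq
    have := dottedArcs_range hk hm hp
    have := dottedArcs_range hk hm hq
    omega

lemma arcs_noncross (hp : p ∈ G.undottedArcs ∪ G.dottedArcs k)
    (hq : q ∈ G.undottedArcs ∪ G.dottedArcs k) : ¬(p.1 < q.1 ∧ q.1 < p.2 ∧ p.2 < q.2) := by
  rintro ⟨h1, h2, h3⟩
  rcases mem_union.1 hp with hp | hp <;> rcases mem_union.1 hq with hq | hq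
  · obtain ⟨b, hb, rfl⟩ := mem_undottedArcs.1 hp
    obtain ⟨b', hb', rfl⟩ := mem_undottedArcs.1 hq
    have := G.isBallot.opener_lt_opener hb hb' h3 h2
    omega
  · exact notMem_free_of_mem_Ioo hp h1 h2 (mem_free_of_mem_dottedArcs hk hm hq (.inl rfl))
  · exact notMem_free_of_mem_Ioo hq h2 h3 (mem_free_of_mem_dottedArcs hk hm hp (.inr rfl))
  · have hpq : p ≠ q := by rintro rfl; exact h1.false
    have := dottedArcs_disjoint hk hm hp hq hpq
    have := dottedArcs_range hk hm hq
    omega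

lemma arcs_no_ray_under (hp : p ∈ G.undottedArcs ∪ G.dottedArcs k) (h1 : p.1 < x)
    (h2 : x < p.2) : ∃ q ∈ G.undottedArcs ∪ G.dottedArcs k, x = q.1 ∨ x = q.2 := by
  have hx : x ∉ G.free := by
    rcases mem_union.1 hp with hp | hp
    · exact notMem_free_of_mem_Ioo hp h1 h2
    · exact notMem_free_of_mem_Ioo_dottedArcs hk hm hp h1 h2
  have := arcs_range hk hm hp
  obtain ⟨q, hq, hxq⟩ := exists_mem_undottedArcs_of_notMem_free (by omega) (by omega) hx
  exact ⟨q, mem_union_left _ hq, hxq⟩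

variable (G)

noncomputable def toDottedNCM : DottedNCM n k where
  arcs := G.undottedArcs ∪ G.dottedArcs k
  dotted := G.dottedArcs k
  dotted_subset := subset_union_right
  card_arcs := by
    rw [card_union_of_disjoint (disjoint_undottedArcs_dottedArcs hk hm), card_undottedArcs,
      card_dottedArcs hk hm]
    omega
  mem_range _ := arcs_range hk hm
  endpoints_distinct _ hp _ hq := arcs_endpoints_distinct hk hm hp hq
  noncross _ hp _ hq := arcs_noncross hk hm hp hq
  no_ray_under _ hp _ := arcs_no_ray_under hk hm hp

lemma undotted_toDottedNCM : (G.toDottedNCM hk hm).undotted = G.undottedArcs :=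
  (union_sdiff_right _ _).trans
    (sdiff_eq_self_of_disjoint (disjoint_undottedArcs_dottedArcs hk hm))

lemma closers_toDottedNCM : (G.toDottedNCM hk hm).closers = G.carrier := by
  ext b
  rw [DottedNCM.mem_closers, undotted_toDottedNCM]
  constructor
  · rintro ⟨q, hq, rfl⟩
    obtain ⟨b, hb, rfl⟩ := mem_undottedArcs.1 hq
    exact hb
  · exact fun hb ↦ ⟨_, mk_mem_undottedArcs hb, rfl⟩

lemma isStandard_toDottedNCM : (G.toDottedNCM hk hm).IsStandard := by
  have hD {d x} (hd : d ∈ G.dottedArcs k) := mem_free_of_mem_dottedArcs (x := x) hk hm hd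
  refine ⟨fun d hd q hq ⟨h1, h2⟩ ↦ ?_, fun r hr d hd hlt ↦ ?_⟩
  · have hlt := dottedArcs_range hk hm hd
    rcases mem_union.1 hq with hq | hq
    · exact notMem_free_of_mem_Ioo hq h1 (by omega) (hD hd (.inl rfl))
    · have hne : d ≠ q := by rintro rfl; exact h1.false
      have := dottedArcs_disjoint hk hm hd hq hne
      omega
  · obtain ⟨h1, hn, hends⟩ := hr
    have hfree : r ∈ G.free := by
      by_contra hr
      obtain ⟨q, hq, hrq⟩ := exists_mem_undottedArcs_of_notMem_free h1 hn hr
      have := hends q (mem_union_left _ hq)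
      omega
    have hcount : Nat.count (· ∈ G.free) r < n - 2 * k := by
      by_contra! hcount
      obtain ⟨q, hq, hrq⟩ := exists_mem_dottedArcs_of_le_count hk hm hfree hcount
      have := hends q (mem_union_right _ hq)
      omega
    have := le_count_fst_of_mem_dottedArcs hk hm hd
    have := (Nat.count_mem_lt_count_mem_iff (hD hd (.inl rfl))).2 (dottedArcs_range hk hm hd).2.1
    have := (Nat.count_mem_lt_count_mem_iff (hD hd (.inr rfl))).2 hlt
    omega

end BallotSet

/-! ## Recovering a standard dotted matching from its ballot set -/

namespace DottedNCM.IsStandard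

variable {n k m : ℕ} {M : DottedNCM n k} {d : ℕ × ℕ} {x : ℕ}
variable (hM : M.IsStandard) (h : #M.undotted = m)
include hM

lemma undottedArcs_toBallotSet : (M.toBallotSet h).undottedArcs = M.undotted := by
  ext p
  rw [BallotSet.mem_undottedArcs]
  constructor
  · rintro ⟨b, hb, rfl⟩
    obtain ⟨q, hq, rfl⟩ := M.mem_closers.1 hb
    rwa [show (M.toBallotSet h).carrier = M.closers from rfl, hM.opener_closers hq]
  · exact fun hp ↦ ⟨p.2, M.mem_closers.2 ⟨p, hp, rfl⟩, Prod.ext (hM.opener_closers hp) rfl⟩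

lemma mem_free_toBallotSet :
    x ∈ (M.toBallotSet h).free ↔ M.IsRay x ∨ ∃ d ∈ M.dotted, x = d.1 ∨ x = d.2 := by
  have hU := hM.undottedArcs_toBallotSet h
  constructor
  · intro hx
    by_cases hend : ∃ q ∈ M.arcs, x = q.1 ∨ x = q.2
    · obtain ⟨q, hq, hxq⟩ := hend
      by_cases hqd : q ∈ M.dotted
      · exact .inr ⟨q, hqd, hxq⟩
      · exact absurd hx (BallotSet.notMem_free_of_mem_undottedArcs
          (hU ▸ mem_sdiff.2 ⟨hq, hqd⟩) hxq)
    · push Not at hend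
      have := (BallotSet.mem_free.1 hx).1
      exact .inl ⟨this.1, this.2, fun q hq ↦ (hend q hq).imp Ne.symm Ne.symm⟩
  · intro hx
    have hrange : 1 ≤ x ∧ x ≤ n := by
      rcases hx with ⟨h1, hn, -⟩ | ⟨d, hd, hxd⟩
      · exact ⟨h1, hn⟩
      · have := M.mem_range d (M.dotted_subset hd)
        omega
    by_contra hfree
    obtain ⟨q, hq, hxq⟩ :=
      BallotSet.exists_mem_undottedArcs_of_notMem_free hrange.1 hrange.2 hfree
    rw [hU] at hq
    rcases hx with ⟨-, -, hends⟩ | ⟨d, hd, hxd⟩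
    · have := hends q (M.undotted_subset hq)
      omega
    · have hne : d ≠ q := by rintro rfl; exact (mem_sdiff.1 hq).2 hd
      have := M.endpoints_distinct d (M.dotted_subset hd) q (M.undotted_subset hq) hne
      omega

/-- The rays come first, and dotted arcs do not interleave. -/
lemma filter_free_toBallotSet_le (hd : d ∈ M.dotted) :
    {y ∈ (M.toBallotSet h).free | d.1 ≤ y} =
      {d' ∈ M.dotted | d.1 ≤ d'.1}.image Prod.fst ∪
        {d' ∈ M.dotted | d.1 ≤ d'.1}.image Prod.snd := by
  ext y
  simp only [mem_filter, hM.mem_free_toBallotSet h, mem_union, mem_image]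
  constructor
  · rintro ⟨hr | ⟨d', hd', rfl | rfl⟩, hy⟩
    · exact absurd (hM.ray_lt_dotted hr hd) (by omega)
    all_goals
      have hdd' : d.1 ≤ d'.1 := by
        by_cases hne : d = d'
        · rw [hne]
        · have := hM.dotted_disjoint hd hd' hne
          have := M.fst_lt_snd_s13 (M.dotted_subset hd)
          have := M.fst_lt_snd_s13 (M.dotted_subset hd')
          omega
    · exact .inl ⟨d', ⟨hd', hdd'⟩, rfl⟩
    · exact .inr ⟨d', ⟨hd', hdd'⟩, rfl⟩
  · rintro (⟨d', ⟨hd', hdd'⟩, rfl⟩ | ⟨d', ⟨hd', hdd'⟩, rfl⟩)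
    · exact ⟨.inr ⟨d', hd', .inl rfl⟩, hdd'⟩
    · have := M.fst_lt_snd_s13 (M.dotted_subset hd')
      exact ⟨.inr ⟨d', hd', .inr rfl⟩, by omega⟩

lemma count_free_toBallotSet_fst_add (hd : d ∈ M.dotted) :
    Nat.count (· ∈ (M.toBallotSet h).free) d.1 + 2 * #{d' ∈ M.dotted | d.1 ≤ d'.1} =
      n - 2 * m := by
  set R := {d' ∈ M.dotted | d.1 ≤ d'.1}
  have hR : R ⊆ M.arcs := (filter_subset _ _).trans M.dotted_subset
  have hdisj : Disjoint (R.image Prod.fst) (R.image Prod.snd) := by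
    simp only [disjoint_left, mem_image]
    rintro _ ⟨p, hp, rfl⟩ ⟨q, hq, hqp⟩
    exact M.fst_ne_snd (hR hp) (hR hq) hqp.symm
  have := card_filter_add_card_filter_not (s := (M.toBallotSet h).free) (· < d.1)
  simp only [not_lt] at this
  rw [hM.filter_free_toBallotSet_le h hd, card_union_of_disjoint hdisj, M.card_image_fst hR,
    M.card_image_snd hR, BallotSet.card_free] at this
  rw [Nat.count_mem_eq_card_filter_lt]
  omega

lemma count_free_toBallotSet_snd (hd : d ∈ M.dotted) :
    Nat.count (· ∈ (M.toBallotSet h).free) d.2 =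
      Nat.count (· ∈ (M.toBallotSet h).free) d.1 + 1 := by
  refine Nat.count_eq_count_add_one ((hM.mem_free_toBallotSet h).2 (.inr ⟨d, hd, .inl rfl⟩))
    (M.fst_lt_snd_s13 (M.dotted_subset hd)) fun z h1 h2 hz ↦ ?_
  rcases (hM.mem_free_toBallotSet h).1 hz with ⟨-, -, hends⟩ | ⟨d', hd', hzd'⟩
  · obtain ⟨q, hq, hzq⟩ := M.no_ray_under d (M.dotted_subset hd) z h1 h2
    have := hends q hq
    omega
  · exact hM.notMem_Ioo_of_dotted (M.dotted_subset hd) hd' hzd' ⟨h1, h2⟩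

lemma dottedArcs_toBallotSet (hk : 2 * k ≤ n) (hm : m ≤ k) :
    (M.toBallotSet h).dottedArcs k = M.dotted := by
  refine (eq_of_subset_of_card_le (fun d hd ↦ ?_) ?_).symm
  · have hfst := hM.count_free_toBallotSet_fst_add h hd
    have hR : 1 ≤ #{d' ∈ M.dotted | d.1 ≤ d'.1} := card_pos.2 ⟨d, mem_filter.2 ⟨hd, le_rfl⟩⟩
    have hR' : #{d' ∈ M.dotted | d.1 ≤ d'.1} ≤ k - m := M.card_dotted h ▸ card_filter_le _ _
    refine (BallotSet.mem_dottedArcs hk hm).2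
      ⟨(hM.mem_free_toBallotSet h).2 (.inr ⟨d, hd, .inl rfl⟩),
      (hM.mem_free_toBallotSet h).2 (.inr ⟨d, hd, .inr rfl⟩),
      k - m - #{d' ∈ M.dotted | d.1 ≤ d'.1}, by omega, by omega, ?_⟩
    rw [hM.count_free_toBallotSet_snd h hd]
    omega
  · rw [BallotSet.card_dottedArcs hk hm, M.card_dotted h]

lemma toDottedNCM_toBallotSet (hk : 2 * k ≤ n) (hm : m ≤ k) :
    (M.toBallotSet h).toDottedNCM hk hm = M := by
  refine DottedNCM.ext ?_ (hM.dottedArcs_toBallotSet h hk hm)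
  change (M.toBallotSet h).undottedArcs ∪ (M.toBallotSet h).dottedArcs k = M.arcs
  rw [hM.undottedArcs_toBallotSet h, hM.dottedArcs_toBallotSet h hk hm]
  exact sdiff_union_of_subset M.dotted_subset

end DottedNCM.IsStandard

noncomputable def standardEquivBallotSet {n k m : ℕ} (hk : 2 * k ≤ n) (hm : m ≤ k) :
    {M : DottedNCM n k // M.IsStandard ∧ #(M.arcs \ M.dotted) = m} ≃ BallotSet n m where
  toFun M := M.1.toBallotSet M.2.2
  invFun G := ⟨G.toDottedNCM hk hm, G.isStandard_toDottedNCM hk hm, by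
    rw [← DottedNCM.undotted, G.undotted_toDottedNCM hk hm, G.card_undottedArcs]⟩
  left_inv M := Subtype.ext (M.2.1.toDottedNCM_toBallotSet M.2.2 hk hm)
  right_inv G := BallotSet.ext (G.closers_toDottedNCM hk hm)

/-- The standard dotted noncrossing matchings of type `(n-k,k)` with `m` undotted arcs are
in bijection with standard Young tableaux of shape `(n-m,m)`, by sending `M` to the tableau
whose bottom row consists of the right endpoints of the undotted arcs of `M`. -/
theorem standard_dotted_matchings_biject_SYT (n k m : ℕ) (hk : 2 * k ≤ n) (hm : m ≤ k) :
    ∃ Φ : {M : DottedNCM n k // M.IsStandard ∧ (M.arcs \ M.dotted).card = m} →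
        TwoRowSYT n m,
      Function.Bijective Φ ∧
      ∀ M, ∀ v : ℕ, (∃ i, (Φ M).bot i = v) ↔ ∃ q ∈ M.1.arcs \ M.1.dotted, q.2 = v := by
  let Φ := (standardEquivBallotSet hk hm).trans (ballotSetEquivTwoRowSYT (by omega))
  exact ⟨Φ, Φ.bijective, fun M _ ↦
    (M.1.toBallotSet M.2.2).exists_bot_eq_iff.trans M.1.mem_closers⟩
end

section
/- Let a be the perfect noncrossing matching on n points (n even) with arcs (1,2),(3,4),…,(n−1,n), and b the matching with arcs (2,3),(4,5),…,(n−2,n−1),(1,n). Then there is a sequence of n/2 − 1 moves, each of the form → (replacing two unnested arcs by two nested arcs on the same four vertices), transforming a into b; moreover n/2 − 1 is the minimal number of moves needed. -/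
/-!
For a perfect matching `c` let `σ_c` be the involution exchanging the endpoints of each arc. The
orbits of `σ_a σ_c` are the classes of the relation "follow an arc of `c`, then an arc of `a`",
two for each circle of `a w(c)`. A move multiplies `σ_c` by two transpositions, so it changes the
number of orbits by at most two. There are `2m` orbits for `c = a` and only two (the odd and the
even vertices) for `c = b`, so at least `m - 1` moves are needed; the moves replacing
`(1, 2t + 2), (2t + 3, 2t + 4)` by `(1, 2t + 4), (2t + 2, 2t + 3)` for `t < m - 1` achieve this.
-/
open Finset Relation

section QuotCard

theorem card_quot_of_forall_eq {α : Type*} {r : α → α → Prop}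
    (h : ∀ x y, r x y → x = y) :
    Nat.card (Quot r) = Nat.card α := by
  refine (Nat.card_eq_of_bijective (Quot.mk r) ⟨fun x y hxy => ?_, Quot.mk_surjective⟩).symm
  exact (Equivalence.eqvGen_iff eq_equivalence).1 (EqvGen.mono h x y (Quot.eqvGen_exact hxy))

variable {α : Type*} [Finite α]

theorem card_quot_le_card_quot_of_le_eqvGen {r s : α → α → Prop}
    (h : ∀ x y, s x y → EqvGen r x y) : Nat.card (Quot r) ≤ Nat.card (Quot s) :=
  Nat.card_le_card_of_surjective
    (Quot.lift (Quot.mk r) fun x y hxy => Quot.eqvGen_sound (h x y hxy))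
    (Quot.ind fun x => ⟨Quot.mk s x, rfl⟩)

theorem card_quot_le_card_quot_adjoin_add_one (r : α → α → Prop) (x y : α) :
    Nat.card (Quot r) ≤ Nat.card (Quot fun u v => r u v ∨ u = x ∧ v = y) + 1 := by
  classical
  let s u v := r u v ∨ u = x ∧ v = y
  -- merging the class of `x` into that of `y` is constant on the classes of `s`
  let merge (c : Quot r) : Quot r := if c = Quot.mk r x then Quot.mk r y else c
  let merge' : Quot s → Quot r := Quot.lift (fun u => merge (Quot.mk r u)) <| by
    rintro u v (huv | ⟨rfl, rfl⟩)
    · simp only [Quot.sound huv]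
    · by_cases hvu : Quot.mk r v = Quot.mk r u <;> simp [merge, hvu]
  let π : Quot r → Quot s := Quot.map id fun _ _ huv => Or.inl huv
  have hmerge : ∀ c, merge' (π c) = merge c := Quot.ind fun _ => rfl
  let F (c : Quot r) : Option (Quot s) := if c = Quot.mk r x then none else some (π c)
  have hF : Function.Injective F := by
    intro c₁ c₂ h
    by_cases h₁ : c₁ = Quot.mk r x <;> by_cases h₂ : c₂ = Quot.mk r x <;>
      simp only [F, h₁, h₂, if_true, if_false, reduceCtorEq, Option.some_inj] at h
    · rw [h₁, h₂]
    · have h' := congrArg merge' h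
      rw [hmerge, hmerge] at h'
      simpa [merge, h₁, h₂] using h'
  calc Nat.card (Quot r) ≤ Nat.card (Option (Quot s)) := Nat.card_le_card_of_injective F hF
    _ = Nat.card (Quot s) + 1 := Finite.card_option

theorem card_quot_le_add_two_of_le_eqvGen {r s : α → α → Prop} {x₁ y₁ x₂ y₂ : α}
    (h : ∀ u v, s u v →
      EqvGen (fun u v => (r u v ∨ u = x₁ ∧ v = y₁) ∨ u = x₂ ∧ v = y₂) u v) :
    Nat.card (Quot r) ≤ Nat.card (Quot s) + 2 := by
  have h₁ := card_quot_le_card_quot_adjoin_add_one r x₁ y₁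
  have h₂ :=
    card_quot_le_card_quot_adjoin_add_one (fun u v => r u v ∨ u = x₁ ∧ v = y₁) x₂ y₂
  have h₃ := card_quot_le_card_quot_of_le_eqvGen h
  omega

end QuotCard

theorem le_add_mul_of_forall_le_succ_add {C : ℕ} :
    ∀ {d : ℕ} (u : Fin (d + 1) → ℕ), (∀ i : Fin d, u i.castSucc ≤ u i.succ + C) →
      u 0 ≤ u (Fin.last d) + d * C
  | 0, _, _ => by simp
  | d + 1, u, h => by
    have ih := le_add_mul_of_forall_le_succ_add (fun i => u i.castSucc) (fun i => h i.castSucc)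
    have hlast := h (Fin.last d)
    simp only [Fin.castSucc_zero, Fin.succ_last, Nat.succ_eq_add_one] at ih hlast
    rw [add_one_mul]
    omega

attribute [ext] NCMatching

namespace NCMatching

variable {n k : ℕ}

def Adj (c : NCMatching n k) (x y : ℕ) : Prop :=
  (x, y) ∈ c.arcs ∨ (y, x) ∈ c.arcs

theorem Adj.symm {c : NCMatching n k} {x y : ℕ} (h : c.Adj x y) : c.Adj y x :=
  Or.symm h

theorem Adj.unique {c : NCMatching n k} {x y z : ℕ} (hx : c.Adj z x) (hy : c.Adj z y) :
    x = y := by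
  by_contra hxy
  rcases hx with hx | hx <;> rcases hy with hy | hy <;>
  · have := c.endpoints_distinct _ hx _ hy (by simp [Prod.ext_iff]; omega)
    simp at this

theorem exists_arc_of_mem_Icc (c : NCMatching (2 * k) k) {x : ℕ}
    (hx : x ∈ Icc 1 (2 * k)) : ∃ p ∈ c.arcs, x = p.1 ∨ x = p.2 := by
  classical
  set E := c.arcs.biUnion fun p => {p.1, p.2}
  have hE : E ⊆ Icc 1 (2 * k) := by
    intro z hz
    obtain ⟨p, hp, hz⟩ := mem_biUnion.1 hz
    have := c.mem_range p hp
    rw [mem_Icc]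
    rcases mem_insert.1 hz with rfl | hz
    · omega
    · rw [mem_singleton.1 hz]; omega
  have hcard : E.card = 2 * k := by
    rw [card_biUnion]
    · rw [sum_congr rfl fun p hp => card_pair (c.mem_range p hp).2.1.ne, sum_const,
        c.card_arcs, smul_eq_mul, mul_comm]
    · intro p hp q hq hpq
      have := c.endpoints_distinct p hp q hq hpq
      simp only [Function.onFun, disjoint_insert_left, disjoint_insert_right,
        disjoint_singleton, mem_insert, mem_singleton]
      tauto
  have hEq : E = Icc 1 (2 * k) := eq_of_subset_of_card_le hE (by simp [hcard])
  rw [← hEq] at hx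
  simpa [E, eq_comm] using hx

theorem not_isRay (c : NCMatching (2 * k) k) (i : ℕ) : ¬ c.IsRay i := by
  rintro ⟨hi₁, hi₂, hray⟩
  obtain ⟨p, hp, hip | hip⟩ := c.exists_arc_of_mem_Icc (mem_Icc.2 ⟨hi₁, hi₂⟩)
  · exact (hray p hp).1 hip.symm
  · exact (hray p hp).2 hip.symm

def Zigzag (a c : NCMatching n k) (x y : ℕ) : Prop :=
  ∃ z, c.Adj x z ∧ a.Adj z y

noncomputable def orbitCount (a c : NCMatching n k) : ℕ :=
  Nat.card (Quot fun x y : Icc 1 n => Zigzag a c x y)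

theorem orbitCount_self (a : NCMatching n k) : orbitCount a a = n := by
  rw [orbitCount, card_quot_of_forall_eq, Nat.card_eq_fintype_card, Fintype.card_coe,
    Nat.card_Icc, Nat.add_sub_cancel]
  rintro x y ⟨z, hxz, hzy⟩
  exact Subtype.ext (hxz.symm.unique hzy)

/-- Exchanging the arcs `{i, j}, {l, w}` of `c` for `{i, w}, {j, l}`: a zigzag of `c'` starting
at `i, w, j, l` ends where a zigzag of `c` starting at `l, j, w, i` does. -/
theorem orbitCount_le_add_two {a c c' : NCMatching n k} {i j l w : Icc 1 n}
    (hij : c.Adj i j) (hlw : c.Adj l w)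
    (hc' : ∀ x z, c'.Adj x z → c.Adj x z ∨
      (x = i ∧ z = w ∨ x = w ∧ z = i) ∨ (x = j ∧ z = l ∨ x = l ∧ z = j)) :
    orbitCount a c ≤ orbitCount a c' + 2 := by
  set R : Icc 1 n → Icc 1 n → Prop := fun u v =>
    (Zigzag a c u v ∨ u = i ∧ v = l) ∨ u = j ∧ v = w
  refine card_quot_le_add_two_of_le_eqvGen (r := fun x y : Icc 1 n => Zigzag a c x y) (x₁ := i)
    (y₁ := l) (x₂ := j) (y₂ := w) ?_
  rintro x y ⟨z, hxz, hzy⟩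
  have zig (u : Icc 1 n) (huz : c.Adj u z) : EqvGen R u y :=
    EqvGen.rel _ _ (Or.inl (Or.inl ⟨z, huz, hzy⟩))
  have hil : EqvGen R i l := EqvGen.rel _ _ (Or.inl (Or.inr ⟨rfl, rfl⟩))
  have hjw : EqvGen R j w := EqvGen.rel _ _ (Or.inr ⟨rfl, rfl⟩)
  rcases hc' x z hxz with h | (⟨hx, rfl⟩ | ⟨hx, rfl⟩) | (⟨hx, rfl⟩ | ⟨hx, rfl⟩)
  · exact zig x h
  · obtain rfl := Subtype.ext hx
    exact hil.trans _ _ _ (zig l hlw)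
  · obtain rfl := Subtype.ext hx
    exact hjw.symm.trans _ _ _ (zig j hij.symm)
  · obtain rfl := Subtype.ext hx
    exact hjw.trans _ _ _ (zig w hlw.symm)
  · obtain rfl := Subtype.ext hx
    exact hil.symm.trans _ _ _ (zig i hij)

theorem orbitCount_le_of_move {a c c' : NCMatching (2 * k) k} (h : Move c c') :
    orbitCount a c ≤ orbitCount a c' + 2 ∧ orbitCount a c' ≤ orbitCount a c + 2 := by
  obtain ⟨i, j, l, w, -, -, -, hij, hlw, hc'⟩ | ⟨i, -, -, -, -, hi, -⟩ := h
  swap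
  · exact absurd hi (c.not_isRay i)
  obtain ⟨hi, hij', hj⟩ := c.mem_range _ hij
  obtain ⟨hl, hlw', hw⟩ := c.mem_range _ hlw
  lift i to Icc 1 (2 * k) using (by simp; omega)
  lift j to Icc 1 (2 * k) using (by simp; omega)
  lift l to Icc 1 (2 * k) using (by simp; omega)
  lift w to Icc 1 (2 * k) using (by simp; omega)
  constructor
  · refine orbitCount_le_add_two (Or.inl hij) (Or.inl hlw) fun x z hxz => ?_
    simp only [Adj, hc', mem_insert, mem_erase, Prod.mk.injEq] at hxz
    rcases hxz with (h | h | ⟨-, -, h⟩) | (h | h | ⟨-, -, h⟩)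
    · exact Or.inr (Or.inl (Or.inl h))
    · exact Or.inr (Or.inr (Or.inl h))
    · exact Or.inl (Or.inl h)
    · exact Or.inr (Or.inl (Or.inr h.symm))
    · exact Or.inr (Or.inr (Or.inr h.symm))
    · exact Or.inl (Or.inr h)
  · refine orbitCount_le_add_two (i := i) (j := w) (l := l) (w := j)
      (Or.inl (by simp [hc'])) (Or.inr (by simp [hc'])) fun x z hxz => ?_
    by_cases hold : (x = i ∧ z = j ∨ x = j ∧ z = i) ∨ (x = w ∧ z = l ∨ x = l ∧ z = w)
    · exact Or.inr hold
    refine Or.inl ?_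
    simp only [Adj, hc', mem_insert, mem_erase, Prod.mk.injEq, ne_eq]
    rcases hxz with h | h
    · exact Or.inl (Or.inr (Or.inr ⟨fun h' => hold (Or.inr (Or.inr h')),
        fun h' => hold (Or.inl (Or.inl h')), h⟩))
    · exact Or.inr (Or.inr (Or.inr ⟨fun h' => hold (Or.inr (Or.inl h'.symm)),
        fun h' => hold (Or.inl (Or.inr h'.symm)), h⟩))

theorem orbitCount_le_two {m : ℕ} (hm : 1 ≤ m) {a b : NCMatching (2 * m) m}
    (ha : a.arcs = (range m).image fun i => (2 * i + 1, 2 * i + 2))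
    (hb : b.arcs = insert (1, 2 * m) ((range (m - 1)).image fun i => (2 * i + 2, 2 * i + 3))) :
    orbitCount a b ≤ 2 := by
  set R : Icc 1 (2 * m) → Icc 1 (2 * m) → Prop := fun x y => Zigzag a b x y
  have hA (t : ℕ) (ht : t < m) : a.Adj (2 * t + 1) (2 * t + 2) :=
    Or.inl (ha ▸ mem_image_of_mem _ (Finset.mem_range.2 ht))
  have hB (t : ℕ) (ht : t < m - 1) : b.Adj (2 * t + 2) (2 * t + 3) :=
    Or.inl (hb ▸ mem_insert_of_mem (mem_image_of_mem _ (Finset.mem_range.2 ht)))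
  have odd (t : ℕ) (ht : t < m) :
      Quot.mk R ⟨2 * t + 1, by simp; omega⟩ = Quot.mk R ⟨1, by simp; omega⟩ := by
    induction t with
    | zero => rfl
    | succ t ih =>
      rw [← ih (by omega)]
      exact Quot.sound ⟨2 * t + 2, (hB t (by omega)).symm, (hA t (by omega)).symm⟩
  have even (t : ℕ) (ht : t < m) :
      Quot.mk R ⟨2 * t + 2, by simp; omega⟩ = Quot.mk R ⟨2, by simp; omega⟩ := by
    induction t with
    | zero => rfl
    | succ t ih =>
      rw [← ih (by omega)]
      refine (Quot.sound ⟨2 * t + 3, hB t (by omega), ?_⟩).symm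
      simpa [mul_add, add_assoc] using hA (t + 1) ht
  refine (Nat.card_le_card_of_surjective
    (fun e : Bool =>
      if e then Quot.mk R ⟨1, by simp; omega⟩ else Quot.mk R ⟨2, by simp; omega⟩)
    ?_).trans (by simp)
  rintro ⟨⟨x, hx⟩⟩
  obtain ⟨t, rfl | rfl⟩ : ∃ t, x = 2 * t + 1 ∨ x = 2 * t + 2 :=
    ⟨(x - 1) / 2, by simp at hx; omega⟩
  · exact ⟨true, (odd t (by simp at hx; omega)).symm⟩
  · exact ⟨false, (even t (by simp at hx; omega)).symm⟩

end NCMatching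

/-- The `s`-th arc after `t` moves: the outer arc `(1, 2t + 2)` over `(2, 3), …, (2t, 2t + 1)`,
followed by the untouched arcs `(2s + 1, 2s + 2)`. -/
def stairArc (t s : ℕ) : ℕ × ℕ :=
  if s = 0 then (1, 2 * t + 2) else if s ≤ t then (2 * s, 2 * s + 1) else (2 * s + 1, 2 * s + 2)

theorem stairArc_injective (t : ℕ) : Function.Injective (stairArc t) := by
  intro s s' h
  simp only [stairArc] at h
  split_ifs at h <;> simp only [Prod.mk.injEq] at h <;> omega

theorem stairArc_succ {t s : ℕ} (hs₀ : s ≠ 0) (hs : s ≠ t + 1) :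
    stairArc (t + 1) s = stairArc t s := by
  simp only [stairArc, if_neg hs₀]
  split_ifs <;> first | rfl | omega

def stairMatching (m t : ℕ) (ht : t ≤ m - 1) : NCMatching (2 * m) m where
  arcs := (range m).image (stairArc t)
  card_arcs := by rw [card_image_of_injective _ (stairArc_injective t), card_range]
  mem_range := by
    simp only [mem_image, Finset.mem_range, forall_exists_index, and_imp]
    rintro _ s hs rfl
    unfold stairArc
    split_ifs <;> omega
  endpoints_distinct := by
    simp only [mem_image, Finset.mem_range, forall_exists_index, and_imp]
    rintro _ s hs rfl _ s' hs' rfl hne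
    have : s ≠ s' := fun h => hne (h ▸ rfl)
    unfold stairArc
    split_ifs <;> omega
  noncross := by
    simp only [mem_image, Finset.mem_range, forall_exists_index, and_imp]
    rintro _ s hs rfl _ s' hs' rfl
    unfold stairArc
    split_ifs <;> omega
  no_ray_under := by
    simp only [mem_image, Finset.mem_range, forall_exists_index, and_imp]
    rintro _ s hs rfl r h₁ h₂
    refine ⟨stairArc t (r / 2), ⟨r / 2, ?_, rfl⟩, ?_⟩ <;>
      unfold stairArc at * <;> split_ifs at * <;> omega

theorem stairMatching_zero {m : ℕ} {a : NCMatching (2 * m) m}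
    (ha : a.arcs = (range m).image fun i => (2 * i + 1, 2 * i + 2)) :
    stairMatching m 0 (Nat.zero_le _) = a := by
  ext1
  rw [ha]
  refine image_congr fun s _ => ?_
  simp only [stairArc]
  split_ifs <;> simp only [Prod.mk.injEq] <;> omega

theorem stairMatching_last {m : ℕ} (hm : 1 ≤ m) {b : NCMatching (2 * m) m}
    (hb : b.arcs = insert (1, 2 * m) ((range (m - 1)).image fun i => (2 * i + 2, 2 * i + 3))) :
    stairMatching m (m - 1) le_rfl = b := by
  ext1
  rw [hb]
  obtain ⟨m, rfl⟩ : ∃ m', m = m' + 1 := ⟨m - 1, by omega⟩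
  show (range (m + 1)).image (stairArc (m + 1 - 1)) = _
  rw [Nat.add_sub_cancel, range_add_one', image_insert, map_eq_image, image_image]
  congr 1
  refine image_congr fun s hs => ?_
  show stairArc m (s + 1) = (2 * s + 2, 2 * s + 3)
  rw [stairArc, if_neg s.succ_ne_zero, if_pos (by simpa using hs)]
  ring_nf

theorem move_stairMatching {m t : ℕ} (ht : t < m - 1) :
    Move (stairMatching m t ht.le) (stairMatching m (t + 1) ht) := by
  refine Or.inl ⟨1, 2 * t + 2, 2 * t + 3, 2 * t + 4, by omega, by omega, by omega,
    mem_image.2 ⟨0, by simp; omega, by simp [stairArc]⟩,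
    mem_image.2 ⟨t + 1, by simp; omega, by simp [stairArc]; omega⟩, ?_⟩
  ext p
  simp only [stairMatching, mem_insert, mem_erase, mem_image, Finset.mem_range]
  constructor
  · rintro ⟨s, hs, rfl⟩
    rcases eq_or_ne s 0 with rfl | hs₀
    · exact Or.inl (by simp [stairArc]; omega)
    rcases eq_or_ne s (t + 1) with rfl | hst
    · exact Or.inr (Or.inl (by simp [stairArc]; omega))
    rw [stairArc_succ hs₀ hst]
    refine Or.inr (Or.inr ⟨?_, ?_, s, hs, rfl⟩) <;>
      simp only [ne_eq, stairArc, if_neg hs₀] <;> split_ifs <;>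
      simp only [Prod.mk.injEq] <;> omega
  · rintro (rfl | rfl | ⟨h₁, h₂, s, hs, rfl⟩)
    · exact ⟨0, by omega, by simp [stairArc]; omega⟩
    · exact ⟨t + 1, by omega, by simp [stairArc]; omega⟩
    · refine ⟨s, hs, stairArc_succ (fun hs₀ => h₂ ?_) (fun hst => h₁ ?_)⟩
      · simp [hs₀, stairArc]
      · simp [hst, stairArc]; omega

/-- Let `a` be the perfect matching with arcs `(1,2),(3,4),…,(2m-1,2m)` and `b` the one
with arcs `(2,3),(4,5),…,(2m-2,2m-1),(1,2m)`.  There is a sequence of `m - 1` forward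
moves `→` taking `a` to `b`, and no shorter move sequence exists. -/
theorem unnested_to_rainbow (m : ℕ) (hm : 1 ≤ m) (a b : NCMatching (2 * m) m)
    (ha : a.arcs = (Finset.range m).image (fun i => (2 * i + 1, 2 * i + 2)))
    (hb : b.arcs = insert (1, 2 * m)
      ((Finset.range (m - 1)).image (fun i => (2 * i + 2, 2 * i + 3)))) :
    (∃ f : Fin ((m - 1) + 1) → NCMatching (2 * m) m,
      f 0 = a ∧ f (Fin.last (m - 1)) = b ∧
      ∀ i : Fin (m - 1), Move (f i.castSucc) (f i.succ)) ∧
    (∀ d : ℕ, ∀ g : Fin (d + 1) → NCMatching (2 * m) m,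
      g 0 = a → g (Fin.last d) = b → IsMoveSeq g → m - 1 ≤ d) := by
  refine ⟨⟨fun t => stairMatching m t (Nat.lt_succ_iff.1 t.isLt), stairMatching_zero ha,
    stairMatching_last hm hb, fun i => move_stairMatching i.isLt⟩, ?_⟩
  intro d g hg₀ hg hmoves
  have hstep (i : Fin d) : a.orbitCount (g i.castSucc) ≤ a.orbitCount (g i.succ) + 2 := by
    rcases hmoves i with h | h
    · exact (NCMatching.orbitCount_le_of_move h).1
    · exact (NCMatching.orbitCount_le_of_move h).2
  have hcount := le_add_mul_of_forall_le_succ_add (fun i => a.orbitCount (g i)) hstep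
  simp only [hg₀, hg, NCMatching.orbitCount_self] at hcount
  have := NCMatching.orbitCount_le_two hm ha hb
  omega
end
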